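/- arXiv:1404.7033 — 6 statements merged into one kernel-verified Lean document; each statement's English description precedes it below -/
import Mathlib

section
/- Let M = (M_k) be a log-convex weight sequence and 1 ≤ p < ∞. Let g : ℝⁿ → ℝⁿ be a smooth diffeomorphism such that inf_{x∈ℝⁿ} |det Dg(x)| > 0 and such that there exist C_g, ρ_g > 0 with ‖g^{(k)}(x)‖ ≤ C_g·ρ_g^k·k!·M_k for all x ∈ ℝⁿ and all k ≥ 1. Let f : ℝⁿ → ℝⁿ be smooth such that there exist C_f, ρ_f > 0 with ‖∂^α f_i‖_{L^p(ℝⁿ)} ≤ C_f·ρ_f^{|α|}·|α|!·M_{|α|} for every multi-index α ∈ ℕⁿ and i = 1,…,n. Then there exist C, ρ > 0 such that ‖∂^α((f∘g)_i)‖_{L^p(ℝⁿ)} ≤ C·ρ^{|α|}·|α|!·M_{|α|} for every multi-index α and i = 1,…,n. -/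
open MeasureTheory

/-- Iterated partial derivative along a list of coordinate directions. -/
noncomputable def pderivList {n : ℕ} :
    List (Fin n) → (EuclideanSpace ℝ (Fin n) → ℝ) → EuclideanSpace ℝ (Fin n) → ℝ
  | [], f => f
  | i :: t, f => pderivList t (fun x => fderiv ℝ f x (EuclideanSpace.single i 1))

/-- The partial derivative `∂^α f` associated with a multi-index `α`. -/
noncomputable def pderivMulti {n : ℕ} (α : Fin n → ℕ) :
    (EuclideanSpace ℝ (Fin n) → ℝ) → EuclideanSpace ℝ (Fin n) → ℝ :=
  pderivList ((List.finRange n).flatMap fun i => List.replicate (α i) i)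

/-- The size `|α|` of a multi-index. -/
def msize {d : ℕ} (α : Fin d → ℕ) : ℕ := ∑ i, α i

open ContDiff

namespace SDC
variable {n : ℕ}

abbrev V (n : ℕ) := EuclideanSpace ℝ (Fin n)

noncomputable def pd (i : Fin n) (f : V n → ℝ) : V n → ℝ :=
  fun x => fderiv ℝ f x (EuclideanSpace.single i 1)

lemma pderivList_nil (f : V n → ℝ) : pderivList [] f = f := rfl
lemma pderivList_cons (i : Fin n) (t : List (Fin n)) (f : V n → ℝ) :
    pderivList (i::t) f = pderivList t (pd i f) := rfl

lemma pd_contDiff {f : V n → ℝ} (hf : ContDiff ℝ ∞ f) (i : Fin n) : ContDiff ℝ ∞ (pd i f) := by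
  exact (hf.fderiv_right (by simp)).clm_apply contDiff_const

lemma pderivList_contDiff {f : V n → ℝ} (hf : ContDiff ℝ ∞ f) (L : List (Fin n)) :
    ContDiff ℝ ∞ (pderivList L f) := by
  induction L generalizing f with
  | nil => exact hf
  | cons i t ih => exact ih (pd_contDiff hf i)

lemma pderivList_append (L L' : List (Fin n)) (f : V n → ℝ) :
    pderivList (L ++ L') f = pderivList L' (pderivList L f) := by
  induction L generalizing f with
  | nil => rfl
  | cons i t ih => simp [pderivList_cons, ih]

lemma pd_add {f g : V n → ℝ} (hf : ContDiff ℝ ∞ f) (hg : ContDiff ℝ ∞ g) (i : Fin n) :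
    pd i (fun x => f x + g x) = fun x => pd i f x + pd i g x := by
  funext x
  simp only [pd]
  rw [fderiv_fun_add (hf.differentiable (by simp)).differentiableAt
      (hg.differentiable (by simp)).differentiableAt]
  rfl

lemma pd_mul {f g : V n → ℝ} (hf : ContDiff ℝ ∞ f) (hg : ContDiff ℝ ∞ g) (i : Fin n) :
    pd i (fun x => f x * g x) = fun x => f x * pd i g x + g x * pd i f x := by
  funext x
  simp only [pd]
  rw [fderiv_fun_mul (hf.differentiable (by simp)).differentiableAt
      (hg.differentiable (by simp)).differentiableAt]
  simp [mul_comm]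

end SDC

namespace SDC2
open SDC
variable {n : ℕ}

lemma contDiff_listSum (l : List (V n → ℝ)) (hl : ∀ φ ∈ l, ContDiff ℝ ∞ φ) :
    ContDiff ℝ ∞ (fun x => (l.map (fun φ => φ x)).sum) := by
  induction l with
  | nil => simpa using contDiff_const
  | cons a t ih =>
      simp only [List.map_cons, List.sum_cons]
      exact (hl a (by simp)).add (ih (fun φ hφ => hl φ (by simp [hφ])))

lemma pd_listSum (l : List (V n → ℝ)) (hl : ∀ φ ∈ l, ContDiff ℝ ∞ φ) (i : Fin n) :
    pd i (fun x => (l.map (fun φ => φ x)).sum) = fun x => (l.map (fun φ => pd i φ x)).sum := by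
  induction l with
  | nil => funext x; simp [pd]
  | cons a t ih =>
      simp only [List.map_cons, List.sum_cons]
      rw [pd_add (hl a (by simp)) (contDiff_listSum t (fun φ hφ => hl φ (by simp [hφ]))) i, ih
        (fun φ hφ => hl φ (by simp [hφ]))]

lemma pderivList_listSum (L : List (Fin n)) (l : List (V n → ℝ))
    (hl : ∀ φ ∈ l, ContDiff ℝ ∞ φ) :
    pderivList L (fun x => (l.map (fun φ => φ x)).sum)
      = fun x => (l.map (fun φ => pderivList L φ x)).sum := by
  induction L generalizing l with
  | nil => rfl
  | cons i t ih =>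
      rw [pderivList_cons, pd_listSum l hl i]
      have h2 := ih (l.map (pd i)) (by
        intro φ hφ; obtain ⟨ψ, hψ, rfl⟩ := List.mem_map.1 hφ; exact pd_contDiff (hl ψ hψ) i)
      simp only [List.map_map, Function.comp_def] at h2
      exact h2

lemma euclidean_decomp (v : V n) : v = ∑ k, (v k) • (EuclideanSpace.single k (1:ℝ)) := by
  ext j
  simp [Pi.single_apply]

lemma pd_comp (φ : V n → ℝ) (hφ : ContDiff ℝ ∞ φ) (g : V n → V n) (hg : ContDiff ℝ ∞ g)
    (j : Fin n) :
    pd j (fun x => φ (g x))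
      = fun x => ((List.finRange n).map
          (fun k => pd k φ (g x) * pd j (fun y => g y k) x)).sum := by
  funext x
  have hgd : DifferentiableAt ℝ g x := (hg.differentiable (by simp)).differentiableAt
  have hφd : DifferentiableAt ℝ φ (g x) := (hφ.differentiable (by simp)).differentiableAt
  have hcomp : pd j (fun x => φ (g x)) x
      = fderiv ℝ φ (g x) (fderiv ℝ g x (EuclideanSpace.single j 1)) := by
    simp only [pd]
    rw [show (fun x => φ (g x)) = φ ∘ g from rfl, fderiv_comp x hφd hgd]
    rfl
  rw [hcomp]
  set v := fderiv ℝ g x (EuclideanSpace.single j 1) with hv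
  have hvk : ∀ k, v k = pd j (fun y => g y k) x := by
    intro k
    have : (fun y => g y k) = (fun w : V n => (EuclideanSpace.proj k : V n →L[ℝ] ℝ) w) ∘ g := rfl
    simp only [pd, this]
    rw [fderiv_comp x (EuclideanSpace.proj k : V n →L[ℝ] ℝ).differentiableAt hgd,
      ContinuousLinearMap.fderiv]
    rfl
  calc fderiv ℝ φ (g x) v = fderiv ℝ φ (g x) (∑ k, (v k) • (EuclideanSpace.single k (1:ℝ))) := by
        rw [← euclidean_decomp]
    _ = ∑ k, (v k) * fderiv ℝ φ (g x) (EuclideanSpace.single k (1:ℝ)) := by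
        rw [map_sum]; simp [smul_eq_mul]
    _ = ∑ k, pd k φ (g x) * pd j (fun y => g y k) x := by
        refine Finset.sum_congr rfl fun k _ => ?_
        rw [hvk k, mul_comm]
        rfl
    _ = ((List.finRange n).map (fun k => pd k φ (g x) * pd j (fun y => g y k) x)).sum := by
        rw [Fin.sum_univ_def]

end SDC2

namespace SDC3
open SDC SDC2
variable {n : ℕ}

lemma norm_iteratedFDeriv_pd_le {f : V n → ℝ} (hf : ContDiff ℝ ∞ f) (i : Fin n) (m : ℕ) (x : V n) :
    ‖iteratedFDeriv ℝ m (pd i f) x‖ ≤ ‖iteratedFDeriv ℝ (m+1) f x‖ := by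
  have hA : ‖(ContinuousLinearMap.apply ℝ ℝ (EuclideanSpace.single i (1:ℝ)) :
      (V n →L[ℝ] ℝ) →L[ℝ] ℝ)‖ ≤ 1 := by
    refine ContinuousLinearMap.opNorm_le_bound _ zero_le_one fun L => ?_
    have : ‖L (EuclideanSpace.single i (1:ℝ))‖ ≤ ‖L‖ * ‖EuclideanSpace.single i (1:ℝ)‖ :=
      L.le_opNorm _
    simpa [EuclideanSpace.norm_single] using this
  have hd : ContDiff ℝ (∞ : WithTop ℕ∞) (fderiv ℝ f) := hf.fderiv_right (by simp)
  have heq : pd i f = (ContinuousLinearMap.apply ℝ ℝ (EuclideanSpace.single i (1:ℝ))) ∘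
      (fderiv ℝ f) := rfl
  rw [heq, ContinuousLinearMap.iteratedFDeriv_comp_left _ hd.contDiffAt (by exact_mod_cast (le_top : (m:ℕ∞) ≤ ⊤))]
  calc ‖ContinuousLinearMap.compContinuousMultilinearMap _ (iteratedFDeriv ℝ m (fderiv ℝ f) x)‖
      ≤ ‖(ContinuousLinearMap.apply ℝ ℝ (EuclideanSpace.single i (1:ℝ)) :
          (V n →L[ℝ] ℝ) →L[ℝ] ℝ)‖ * ‖iteratedFDeriv ℝ m (fderiv ℝ f) x‖ :=
        ContinuousLinearMap.norm_compContinuousMultilinearMap_le _ _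
    _ ≤ 1 * ‖iteratedFDeriv ℝ m (fderiv ℝ f) x‖ := by
        exact mul_le_mul_of_nonneg_right hA (norm_nonneg _)
    _ = ‖iteratedFDeriv ℝ (m+1) f x‖ := by rw [one_mul, norm_iteratedFDeriv_fderiv]

lemma norm_pderivList_le {f : V n → ℝ} (hf : ContDiff ℝ ∞ f) (L : List (Fin n)) (x : V n) :
    |pderivList L f x| ≤ ‖iteratedFDeriv ℝ L.length f x‖ := by
  induction L generalizing f with
  | nil => simp [pderivList, norm_iteratedFDeriv_zero, Real.norm_eq_abs]
  | cons i t ih =>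
      calc |pderivList (i::t) f x| = |pderivList t (pd i f) x| := rfl
        _ ≤ ‖iteratedFDeriv ℝ t.length (pd i f) x‖ := ih (pd_contDiff hf i)
        _ ≤ ‖iteratedFDeriv ℝ (t.length + 1) f x‖ := norm_iteratedFDeriv_pd_le hf i t.length x
        _ = ‖iteratedFDeriv ℝ (i::t).length f x‖ := rfl

lemma pd_comm {f : V n → ℝ} (hf : ContDiff ℝ ∞ f) (a b : Fin n) :
    pd a (pd b f) = pd b (pd a f) := by
  have hd : ContDiff ℝ (∞ : WithTop ℕ∞) (fderiv ℝ f) := hf.fderiv_right (by simp)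
  have key : ∀ (u v : Fin n) (x : V n),
      pd u (pd v f) x = fderiv ℝ (fderiv ℝ f) x (EuclideanSpace.single u 1)
        (EuclideanSpace.single v 1) := by
    intro u v x
    have heq : pd v f = (ContinuousLinearMap.apply ℝ ℝ (EuclideanSpace.single v (1:ℝ))) ∘
        (fderiv ℝ f) := rfl
    simp only [pd, heq]
    rw [fderiv_comp x (ContinuousLinearMap.apply ℝ ℝ
        (EuclideanSpace.single v (1:ℝ))).differentiableAt
      (hd.differentiable (by simp)).differentiableAt, ContinuousLinearMap.fderiv]
    rfl
  funext x
  rw [key a b x, key b a x]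
  exact (hf.contDiffAt.isSymmSndFDerivAt (by simp; exact WithTop.coe_le_coe.2 le_top)).eq _ _

lemma pderivList_perm {L L' : List (Fin n)} (h : L.Perm L') :
    ∀ (f : V n → ℝ), ContDiff ℝ ∞ f → pderivList L f = pderivList L' f := by
  induction h with
  | nil => intro f _; rfl
  | cons x h ih =>
      intro f hf
      rw [pderivList_cons, pderivList_cons, ih (pd x f) (pd_contDiff hf x)]
  | swap x y l =>
      intro f hf
      rw [pderivList_cons, pderivList_cons, pderivList_cons, pderivList_cons,
        pd_comm hf y x]
  | trans h1 h2 ih1 ih2 =>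
      intro f hf
      rw [ih1 f hf, ih2 f hf]

def canon (α : Fin n → ℕ) : List (Fin n) :=
  (List.finRange n).flatMap fun i => List.replicate (α i) i

lemma pderivMulti_eq_canon (α : Fin n → ℕ) (f : V n → ℝ) :
    pderivMulti α f = pderivList (canon α) f := rfl

lemma canon_length (α : Fin n → ℕ) : (canon α).length = msize α := by
  simp [canon, List.length_flatMap, msize, Fin.sum_univ_def, List.map_map, Function.comp_def]

lemma canon_count (α : Fin n → ℕ) (j : Fin n) : (canon α).count j = α j := by
  classical
  rw [canon, List.count_flatMap]
  rw [show (List.count j ∘ fun i => List.replicate (α i) i)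
      = (fun i => if j = i then α i else 0) by
    funext i
    by_cases h : j = i
    · subst h; simp [List.count_replicate]
    · simp [List.count_replicate, h, Ne.symm h]]
  rw [← Fin.sum_univ_def]
  simp

lemma perm_canon_count (B : List (Fin n)) : B.Perm (canon (fun j => B.count j)) := by
  classical
  rw [List.perm_iff_count]
  intro a
  rw [canon_count]

lemma count_sum_length (B : List (Fin n)) : msize (fun j => B.count j) = B.length := by
  have h := (perm_canon_count B).length_eq
  rw [← canon_length (fun j => B.count j)]
  exact h.symm

end SDC3

namespace SDC4

variable {M : ℕ → ℝ} (hMpos : ∀ k, 0 < M k) (hM0 : M 0 = 1) (hM01 : 1 ≤ M 1)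
  (hlc : ∀ k : ℕ, 1 ≤ k → (M k) ^ 2 ≤ M (k - 1) * M (k + 1))

include hMpos hlc in
lemma ratio_mono (k d : ℕ) (hk : 1 ≤ k) : M (k+1) * M (k+d) ≤ M k * M (k+d+1) := by
  induction d with
  | zero => ring_nf; exact le_refl _
  | succ d ih =>
      have H := hlc (k+d+1) (by omega)
      have H' : M (k+d+1) ^ 2 ≤ M (k+d) * M (k+d+2) := by
        have : k + d + 1 - 1 = k + d := by omega
        rw [this] at H
        convert H using 3 <;> omega
      have hpos := hMpos (k+d)
      have h1 : M (k+1) * M (k+d+1) * M (k+d) ≤ M k * M (k+d+2) * M (k+d) := by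
        calc M (k+1) * M (k+d+1) * M (k+d) = (M (k+1) * M (k+d)) * M (k+d+1) := by ring
          _ ≤ (M k * M (k+d+1)) * M (k+d+1) := by
              exact mul_le_mul_of_nonneg_right ih (le_of_lt (hMpos _))
          _ = M k * (M (k+d+1))^2 := by ring
          _ ≤ M k * (M (k+d) * M (k+d+2)) := by
              exact mul_le_mul_of_nonneg_left H' (le_of_lt (hMpos k))
          _ = M k * M (k+d+2) * M (k+d) := by ring
      exact le_of_mul_le_mul_right h1 hpos

include hMpos hM01 hlc in
lemma step_lemma (j k : ℕ) (hj : 1 ≤ j) : M j * M (k+1) ≤ M 1 * M (j+k) := by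
  induction k with
  | zero => simpa [mul_comm] using le_refl (M j * M 1)
  | succ k ih =>
      obtain ⟨d, rfl⟩ : ∃ d, j = d + 1 := ⟨j - 1, by omega⟩
      have hr : M (k+2) * M (k+1+d) ≤ M (k+1) * M (k+1+d+1) := ratio_mono hMpos hlc (k+1) d (by omega)
      have h1 : M (d+1) * M (k+1) * M (k+2) ≤ M 1 * M (d+1+k) * M (k+2) :=
        mul_le_mul_of_nonneg_right ih (le_of_lt (hMpos _))
      have h2 : M 1 * M (d+1+k) * M (k+2) ≤ M 1 * M (k+1) * M (d+1+(k+1)) := by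
        have : M (d+1+k) * M (k+2) ≤ M (k+1) * M (d+1+(k+1)) := by
          have e1 : k+1+d = d+1+k := by omega
          rw [e1] at hr
          have e2 : d+1+k+1 = d+1+(k+1) := by omega
          rw [e2] at hr
          linarith [hr]
        calc M 1 * M (d+1+k) * M (k+2) = M 1 * (M (d+1+k) * M (k+2)) := by ring
          _ ≤ M 1 * (M (k+1) * M (d+1+(k+1))) := by
              exact mul_le_mul_of_nonneg_left this (le_of_lt (lt_of_lt_of_le one_pos hM01))
          _ = M 1 * M (k+1) * M (d+1+(k+1)) := by ring
      have h3 : M (d+1) * M (k+2) * M (k+1) ≤ M 1 * M (d+1+(k+1)) * M (k+1) := by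
        calc M (d+1) * M (k+2) * M (k+1) = M (d+1) * M (k+1) * M (k+2) := by ring
          _ ≤ M 1 * M (k+1) * M (d+1+(k+1)) := le_trans h1 h2
          _ = M 1 * M (d+1+(k+1)) * M (k+1) := by ring
      exact le_of_mul_le_mul_right h3 (hMpos (k+1))

lemma length_le_sum (ks : List ℕ) (h : ∀ k ∈ ks, 1 ≤ k) : ks.length ≤ ks.sum := by
  induction ks with
  | nil => simp
  | cons a t ih =>
      simp only [List.length_cons, List.sum_cons]
      have := h a (by simp)
      have := ih (fun k hk => h k (by simp [hk]))
      omega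

include hMpos in
lemma prod_M_pos (ks : List ℕ) : 0 < (ks.map M).prod := by
  refine List.prod_pos fun a ha => ?_
  obtain ⟨k, _, rfl⟩ := List.mem_map.1 ha
  exact hMpos k

include hMpos hM01 hlc in
lemma fold_lemma (ks : List ℕ) (h : ∀ k ∈ ks, 1 ≤ k) :
    ∀ j, 1 ≤ j → M j * (ks.map M).prod ≤ M 1 ^ ks.length * M (j + ks.sum - ks.length) := by
  induction ks with
  | nil => intro j hj; simp
  | cons k t ih =>
      intro j hj
      have hk : 1 ≤ k := h k (by simp)
      have ht : ∀ k ∈ t, 1 ≤ k := fun k hk => h k (by simp [hk])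
      have hts : t.length ≤ t.sum := length_le_sum t ht
      obtain ⟨k', rfl⟩ : ∃ k', k = k' + 1 := ⟨k - 1, by omega⟩
      have hstep : M j * M (k'+1) ≤ M 1 * M (j+k') := step_lemma hMpos hM01 hlc j k' hj
      have hIH := ih ht (j + k') (by omega)
      calc M j * ((((k'+1) :: t)).map M).prod = (M j * M (k'+1)) * (t.map M).prod := by
            simp [List.map_cons, List.prod_cons]; ring
        _ ≤ (M 1 * M (j+k')) * (t.map M).prod :=
            mul_le_mul_of_nonneg_right hstep (le_of_lt (prod_M_pos hMpos t))
        _ = M 1 * (M (j+k') * (t.map M).prod) := by ring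
        _ ≤ M 1 * (M 1 ^ t.length * M (j + k' + t.sum - t.length)) := by
            exact mul_le_mul_of_nonneg_left hIH (le_of_lt (lt_of_lt_of_le one_pos hM01))
        _ = M 1 ^ ((k'+1)::t).length * M (j + k' + t.sum - t.length) := by
            simp [List.length_cons, pow_succ]; ring
        _ = M 1 ^ ((k'+1)::t).length * M (j + (((k'+1)::t)).sum - ((k'+1)::t).length) := by
            congr 2
            simp [List.sum_cons, List.length_cons]
            omega

include hMpos hM0 hM01 hlc in
lemma lemmaA (ks : List ℕ) (h : ∀ k ∈ ks, 1 ≤ k) :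
    M ks.length * (ks.map M).prod ≤ M 1 ^ ks.length * M ks.sum := by
  rcases ks with _ | ⟨a, t⟩
  · simp [hM0]
  · have := fold_lemma hMpos hM01 hlc (a :: t) h ((a::t).length) (by simp)
    have he : (a::t).length + (a::t).sum - (a::t).length = (a::t).sum := by omega
    rwa [he] at this

end SDC4

namespace SDC5

/-- `FacR c q ℓ = c^ℓ * (q+1)(q+2)⋯(q+ℓ)`. -/
noncomputable def FacR (c : ℝ) : ℕ → ℕ → ℝ
  | _, 0 => 1
  | q, ℓ+1 => (c * (q+1)) * FacR c (q+1) ℓ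

lemma FacR_mul_factorial (c : ℝ) (ℓ : ℕ) : ∀ q : ℕ,
    FacR c q ℓ * (Nat.factorial q : ℝ) = c ^ ℓ * (Nat.factorial (q + ℓ) : ℝ) := by
  induction ℓ with
  | zero => intro q; simp [FacR]
  | succ ℓ ih =>
      intro q
      have h := ih (q+1)
      calc FacR c q (ℓ+1) * (Nat.factorial q : ℝ)
          = c * ((q:ℝ)+1) * (FacR c (q+1) ℓ * (Nat.factorial q : ℝ)) := by
            rw [FacR]; ring
        _ = c * (FacR c (q+1) ℓ * (Nat.factorial (q+1) : ℝ)) := by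
            rw [Nat.factorial_succ]; push_cast; ring
        _ = c * (c ^ ℓ * (Nat.factorial (q + 1 + ℓ) : ℝ)) := by rw [h]
        _ = c ^ (ℓ+1) * (Nat.factorial (q + (ℓ+1)) : ℝ) := by
            rw [show q + 1 + ℓ = q + (ℓ + 1) by omega]; ring

lemma FacR_zero_left (c : ℝ) (m : ℕ) : FacR c 0 m = c ^ m * (Nat.factorial m : ℝ) := by
  have := FacR_mul_factorial c m 0
  simpa using this

lemma FacR_nonneg {c : ℝ} (hc : 0 ≤ c) (q ℓ : ℕ) : 0 ≤ FacR c q ℓ := by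
  induction ℓ generalizing q with
  | zero => simp [FacR]
  | succ ℓ ih => exact mul_nonneg (by positivity) (ih (q+1))

end SDC5

namespace SDC6
open SDC SDC2 SDC3
variable {n : ℕ}

lemma abs_coord_le_norm (x : V n) (k : Fin n) : |x k| ≤ ‖x‖ := by
  rw [EuclideanSpace.norm_eq]
  rw [show |x k| = Real.sqrt ((x k)^2) by rw [Real.sqrt_sq_eq_abs]]
  apply Real.sqrt_le_sqrt
  calc (x k)^2 = ‖x k‖^2 := by rw [Real.norm_eq_abs, sq_abs]
    _ ≤ ∑ i, ‖x i‖^2 := Finset.single_le_sum (f := fun i => ‖x i‖^2)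
        (fun i _ => sq_nonneg _) (Finset.mem_univ k)

lemma norm_proj_le_one (k : Fin n) : ‖(EuclideanSpace.proj k : V n →L[ℝ] ℝ)‖ ≤ 1 := by
  refine ContinuousLinearMap.opNorm_le_bound _ zero_le_one fun x => ?_
  rw [one_mul]
  simpa [Real.norm_eq_abs] using abs_coord_le_norm x k

lemma coord_contDiff {g : V n → V n} (hg : ContDiff ℝ ∞ g) (k : Fin n) :
    ContDiff ℝ ∞ (fun x => g x k) := by
  exact ((EuclideanSpace.proj k : V n →L[ℝ] ℝ).contDiff).comp hg

lemma gfactor_bound {g : V n → V n} (hg : ContDiff ℝ ∞ g) {M : ℕ → ℝ} {Cg ρg : ℝ}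
    (hgM : ∀ (m : ℕ), 1 ≤ m → ∀ x, ‖iteratedFDeriv ℝ m g x‖ ≤ Cg * ρg ^ m * (Nat.factorial m : ℝ) * M m)
    (K : List (Fin n)) (hK : 1 ≤ K.length) (k : Fin n) (x : V n) :
    |pderivList K (fun y => g y k) x| ≤ Cg * ρg ^ K.length * (Nat.factorial K.length : ℝ) * M K.length := by
  have h1 : |pderivList K (fun y => g y k) x| ≤ ‖iteratedFDeriv ℝ K.length (fun y => g y k) x‖ :=
    norm_pderivList_le (coord_contDiff hg k) K x
  have heq : (fun y => g y k) = (fun w : V n => (EuclideanSpace.proj k : V n →L[ℝ] ℝ) w) ∘ g := rfl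
  have h2 : ‖iteratedFDeriv ℝ K.length (fun y => g y k) x‖ ≤ ‖iteratedFDeriv ℝ K.length g x‖ := by
    rw [heq, ContinuousLinearMap.iteratedFDeriv_comp_left _ hg.contDiffAt
      (by exact_mod_cast (le_top : (K.length : ℕ∞) ≤ ⊤))]
    calc ‖ContinuousLinearMap.compContinuousMultilinearMap _ (iteratedFDeriv ℝ K.length g x)‖
        ≤ ‖(EuclideanSpace.proj k : V n →L[ℝ] ℝ)‖ * ‖iteratedFDeriv ℝ K.length g x‖ :=
          ContinuousLinearMap.norm_compContinuousMultilinearMap_le _ _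
      _ ≤ 1 * ‖iteratedFDeriv ℝ K.length g x‖ :=
          mul_le_mul_of_nonneg_right (norm_proj_le_one k) (norm_nonneg _)
      _ = ‖iteratedFDeriv ℝ K.length g x‖ := one_mul _
  exact le_trans h1 (le_trans h2 (hgM K.length hK x))

end SDC6

namespace SDC7
open SDC SDC2 SDC3 MeasureTheory ENNReal
variable {n : ℕ}

lemma lintegral_comp_le {g : V n → V n} (hg : ContDiff ℝ ∞ g)
    (hinj : Function.Injective g) (hsurj : Function.Surjective g)
    {ε : ℝ} (hε : 0 < ε) (hdet : ∀ x, ε ≤ |(fderiv ℝ g x).det|) (h : V n → ℝ≥0∞) :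
    ∫⁻ x, h (g x) ≤ (ENNReal.ofReal ε)⁻¹ * ∫⁻ y, h y := by
  have hfd : ∀ x ∈ (Set.univ : Set (V n)), HasFDerivWithinAt g (fderiv ℝ g x) Set.univ x :=
    fun x _ => ((hg.differentiable (by simp)).differentiableAt.hasFDerivAt).hasFDerivWithinAt
  have hcv := lintegral_image_eq_lintegral_abs_det_fderiv_mul (μ := volume)
    (MeasurableSet.univ) hfd (hinj.injOn) h
  rw [Set.image_univ, hsurj.range_eq] at hcv
  have h1 : ENNReal.ofReal ε * ∫⁻ x, h (g x) ≤ ∫⁻ y, h y := by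
    rw [show (∫⁻ y, h y) = ∫⁻ y in Set.univ, h y by simp, hcv, Measure.restrict_univ,
      ← lintegral_const_mul' _ _ (by simp)]
    exact lintegral_mono fun x => mul_le_mul_left (ENNReal.ofReal_le_ofReal (hdet x)) _
  calc ∫⁻ x, h (g x) = (ENNReal.ofReal ε)⁻¹ * (ENNReal.ofReal ε * ∫⁻ x, h (g x)) := by
        rw [← mul_assoc, ENNReal.inv_mul_cancel (by simp [hε]) (by simp), one_mul]
    _ ≤ (ENNReal.ofReal ε)⁻¹ * ∫⁻ y, h y := mul_le_mul_right h1 _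

lemma eLpNorm_comp_le {g : V n → V n} (hg : ContDiff ℝ ∞ g)
    (hinj : Function.Injective g) (hsurj : Function.Surjective g)
    {ε : ℝ} (hε : 0 < ε) (hdet : ∀ x, ε ≤ |(fderiv ℝ g x).det|)
    (φ : V n → ℝ) {p : ℝ} (hp : 1 ≤ p) :
    eLpNorm (fun x => φ (g x)) (ENNReal.ofReal p) volume ≤
      ((ENNReal.ofReal ε)⁻¹) ^ (1/p) * eLpNorm φ (ENNReal.ofReal p) volume := by
  have hp0 : 0 < p := lt_of_lt_of_le one_pos hp
  have hq0 : ENNReal.ofReal p ≠ 0 := by simp [hp0]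
  have hqt : ENNReal.ofReal p ≠ ⊤ := by simp
  rw [eLpNorm_eq_lintegral_rpow_enorm_toReal hq0 hqt, eLpNorm_eq_lintegral_rpow_enorm_toReal hq0 hqt]
  rw [ENNReal.toReal_ofReal (le_of_lt hp0)]
  have key := lintegral_comp_le hg hinj hsurj hε hdet (fun y => (‖φ y‖₊ : ℝ≥0∞) ^ p)
  calc (∫⁻ x, (‖φ (g x)‖₊ : ℝ≥0∞) ^ p) ^ (1/p)
      ≤ ((ENNReal.ofReal ε)⁻¹ * ∫⁻ y, (‖φ y‖₊ : ℝ≥0∞) ^ p) ^ (1/p) := by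
        exact ENNReal.rpow_le_rpow key (by positivity)
    _ = ((ENNReal.ofReal ε)⁻¹) ^ (1/p) * (∫⁻ y, (‖φ y‖₊ : ℝ≥0∞) ^ p) ^ (1/p) := by
        rw [ENNReal.mul_rpow_of_nonneg _ _ (by positivity)]

lemma eLpNorm_mul_bound_le {u v : V n → ℝ} {c : ℝ} (hc : 0 ≤ c)
    (h : ∀ x, |u x| ≤ c * |v x|) (q : ℝ≥0∞) :
    eLpNorm u q volume ≤ ENNReal.ofReal c * eLpNorm v q volume := by
  have h1 : eLpNorm u q volume ≤ eLpNorm (c • v) q volume := by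
    refine eLpNorm_mono fun x => ?_
    simp only [Pi.smul_apply, smul_eq_mul, Real.norm_eq_abs, abs_mul, abs_of_nonneg hc]
    exact h x
  calc eLpNorm u q volume ≤ eLpNorm (c • v) q volume := h1
    _ = ‖c‖₊ • eLpNorm v q volume := eLpNorm_const_smul c v q volume
    _ = ENNReal.ofReal c * eLpNorm v q volume := by
        rw [ENNReal.smul_def, smul_eq_mul]
        congr 1
        exact Real.enorm_eq_ofReal hc

lemma continuous_listSum (l : List (V n → ℝ)) (hl : ∀ φ ∈ l, Continuous φ) :
    Continuous (fun x => (l.map (fun φ => φ x)).sum) := by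
  induction l with
  | nil => simpa using continuous_const
  | cons a t ih =>
      simp only [List.map_cons, List.sum_cons]
      exact (hl a (by simp)).add (ih (fun φ hφ => hl φ (by simp [hφ])))

lemma eLpNorm_listSum_le (l : List (V n → ℝ)) (hl : ∀ φ ∈ l, Continuous φ)
    {q : ℝ≥0∞} (hq : 1 ≤ q) :
    eLpNorm (fun x => (l.map (fun φ => φ x)).sum) q volume ≤
      (l.map (fun φ => eLpNorm φ q volume)).sum := by
  induction l with
  | nil => simp
  | cons a t ih =>
      simp only [List.map_cons, List.sum_cons]
      have hcont : Continuous (fun x => (t.map (fun φ => φ x)).sum) :=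
        continuous_listSum t (fun φ hφ => hl φ (by simp [hφ]))
      calc eLpNorm (fun x => a x + (t.map (fun φ => φ x)).sum) q volume
          ≤ eLpNorm a q volume + eLpNorm (fun x => (t.map (fun φ => φ x)).sum) q volume :=
            eLpNorm_add_le ((hl a (by simp)).aestronglyMeasurable)
              (hcont.aestronglyMeasurable) hq
        _ ≤ eLpNorm a q volume + (t.map (fun φ => eLpNorm φ q volume)).sum := by
            exact add_le_add_right (ih (fun φ hφ => hl φ (by simp [hφ]))) _

end SDC7


namespace SDC8
open SDC SDC2 SDC3 SDC6
variable {n : ℕ}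

abbrev Term (n : ℕ) := List (Fin n) × List (List (Fin n) × Fin n)

noncomputable def fac (g : V n → V n) (Kk : List (Fin n) × Fin n) : V n → ℝ :=
  pderivList Kk.1 (fun y => g y Kk.2)

noncomputable def prodfn (g : V n → V n) (fs : List (List (Fin n) × Fin n)) : V n → ℝ :=
  fun x => (fs.map (fun Kk => fac g Kk x)).prod

noncomputable def tval (f g : V n → V n) (i : Fin n) (T : Term n) : V n → ℝ :=
  fun x => pderivList T.1 (fun y => f y i) (g x) * prodfn g T.2 x

variable {f g : V n → V n}

lemma fac_contDiff (hg : ContDiff ℝ ∞ g) (Kk : List (Fin n) × Fin n) :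
    ContDiff ℝ ∞ (fac g Kk) :=
  pderivList_contDiff (coord_contDiff hg Kk.2) Kk.1

lemma prodfn_contDiff (hg : ContDiff ℝ ∞ g) (fs : List (List (Fin n) × Fin n)) :
    ContDiff ℝ ∞ (prodfn g fs) := by
  induction fs with
  | nil => exact contDiff_const
  | cons a t ih =>
      have : prodfn g (a :: t) = fun x => fac g a x * prodfn g t x := by
        funext x; simp [prodfn]
      rw [this]
      exact (fac_contDiff hg a).mul ih

lemma tval_contDiff (hf : ContDiff ℝ ∞ f) (hg : ContDiff ℝ ∞ g) (i : Fin n) (T : Term n) :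
    ContDiff ℝ ∞ (tval f g i T) :=
  ((pderivList_contDiff (coord_contDiff hf i) T.1).comp hg).mul (prodfn_contDiff hg T.2)

/-- all one-factor "bumps" of a factor list by direction `j`. -/
def bumps (j : Fin n) : List (List (Fin n) × Fin n) → List (List (List (Fin n) × Fin n))
  | [] => []
  | (K, k) :: t => ((K ++ [j], k) :: t) :: (bumps j t).map (fun t' => (K, k) :: t')

/-- the children of a term under differentiation in direction `j`. -/
def children (j : Fin n) (T : Term n) : List (Term n) :=
  ((bumps j T.2).map (fun fs' => (T.1, fs'))) ++
    ((List.finRange n).map (fun k => (T.1 ++ [k], T.2 ++ [([j], k)])))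

lemma fac_append (K : List (Fin n)) (j : Fin n) (k : Fin n) :
    fac g (K ++ [j], k) = pd j (fac g (K, k)) := by
  show pderivList (K ++ [j]) _ = _
  rw [pderivList_append]
  rfl

lemma pd_prodfn (hg : ContDiff ℝ ∞ g) (j : Fin n) (fs : List (List (Fin n) × Fin n)) :
    pd j (prodfn g fs) = fun x => ((bumps j fs).map (fun fs' => prodfn g fs' x)).sum := by
  induction fs with
  | nil =>
      have e : prodfn g ([] : List (List (Fin n) × Fin n)) = fun _ : V n => (1:ℝ) := rfl
      funext x
      simp [bumps, pd, e, fderiv_const]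
  | cons Kk t ih =>
      obtain ⟨K, k⟩ := Kk
      have hsplit : prodfn g ((K,k) :: t) = fun x => fac g (K,k) x * prodfn g t x := by
        funext x; simp [prodfn]
      rw [hsplit, pd_mul (fac_contDiff hg (K,k)) (prodfn_contDiff hg t) j, ih]
      funext x
      simp only [bumps, List.map_cons, List.sum_cons, List.map_map]
      have h1 : prodfn g ((K ++ [j], k) :: t) x = prodfn g t x * pd j (fac g (K,k)) x := by
        simp [prodfn, fac_append, mul_comm]
      have h2 : ((bumps j t).map ((fun fs' => prodfn g fs' x) ∘ (fun t' => (K, k) :: t'))).sum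
          = fac g (K,k) x * ((bumps j t).map (fun fs' => prodfn g fs' x)).sum := by
        have hfn : ((fun fs' => prodfn g fs' x) ∘ (fun t' : List (List (Fin n) × Fin n) => (K, k) :: t'))
            = fun t' => fac g (K,k) x * prodfn g t' x := by
          funext t'; simp [prodfn, Function.comp]
        rw [hfn, List.sum_map_mul_left]
      rw [h1, h2]
      ring

lemma pd_tval (hf : ContDiff ℝ ∞ f) (hg : ContDiff ℝ ∞ g) (i : Fin n) (j : Fin n) (T : Term n) :
    pd j (tval f g i T) = fun x => ((children j T).map (fun T' => tval f g i T' x)).sum := by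
  obtain ⟨B, fs⟩ := T
  set φ := pderivList B (fun y => f y i) with hφdef
  have hφ : ContDiff ℝ ∞ φ := pderivList_contDiff (coord_contDiff hf i) B
  have hA : ContDiff ℝ ∞ (fun x => φ (g x)) := hφ.comp hg
  have hB : ContDiff ℝ ∞ (prodfn g fs) := prodfn_contDiff hg fs
  have hsplit : tval f g i (B, fs) = fun x => φ (g x) * prodfn g fs x := rfl
  rw [hsplit, pd_mul hA hB j, pd_prodfn hg j fs, pd_comp φ hφ g hg j]
  funext x
  simp only [children, List.map_append, List.sum_append, List.map_map]
  have h1 : ((bumps j fs).map ((fun T' => tval f g i T' x) ∘ (fun fs' => (B, fs')))).sum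
      = φ (g x) * ((bumps j fs).map (fun fs' => prodfn g fs' x)).sum := by
    have hfn : ((fun T' => tval f g i T' x) ∘ (fun fs' : List (List (Fin n) × Fin n) => (B, fs')))
        = fun fs' => φ (g x) * prodfn g fs' x := by
      funext fs'; simp [tval, Function.comp, hφdef]
    rw [hfn, List.sum_map_mul_left]
  have h2 : ((List.finRange n).map ((fun T' => tval f g i T' x) ∘
        (fun k => (B ++ [k], fs ++ [([j], k)])))).sum
      = prodfn g fs x * ((List.finRange n).map
          (fun k => pd k φ (g x) * pd j (fun y => g y k) x)).sum := by
    have hfn : ((fun T' => tval f g i T' x) ∘ (fun k : Fin n => (B ++ [k], fs ++ [([j], k)])))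
        = fun k => prodfn g fs x * (pd k φ (g x) * pd j (fun y => g y k) x) := by
      funext k
      have e1 : pderivList (B ++ [k]) (fun y => f y i) = pd k φ := by
        rw [pderivList_append]; rfl
      have e2 : prodfn g (fs ++ [([j], k)]) x = prodfn g fs x * pd j (fun y => g y k) x := by
        simp only [prodfn, List.map_append, List.prod_append, List.map_cons, List.map_nil,
          List.prod_cons, List.prod_nil, mul_one]
        rfl
      simp only [tval, Function.comp, e1, e2]
      ring
    rw [hfn, List.sum_map_mul_left]
  rw [h1, h2]

end SDC8

namespace SDC9
open SDC SDC2 SDC3 SDC6 SDC8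
variable {n : ℕ}

def ordsum (fs : List (List (Fin n) × Fin n)) : ℕ := (fs.map (fun Kk => Kk.1.length)).sum

noncomputable def pf (fs : List (List (Fin n) × Fin n)) : ℝ :=
  (fs.map (fun Kk => (Nat.factorial Kk.1.length : ℝ))).prod

noncomputable def wt (s : ℝ) (T : Term n) : ℝ :=
  s ^ T.1.length * (Nat.factorial T.1.length : ℝ) * pf T.2

lemma pf_pos (fs : List (List (Fin n) × Fin n)) : 0 < pf fs := by
  refine List.prod_pos fun a ha => ?_
  obtain ⟨Kk, _, rfl⟩ := List.mem_map.1 ha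
  positivity

lemma wt_pos {s : ℝ} (hs : 0 < s) (T : Term n) : 0 < wt s T := by
  have := pf_pos T.2
  unfold wt
  positivity

lemma bumps_ordsum (j : Fin n) (fs : List (List (Fin n) × Fin n)) :
    ∀ fs' ∈ bumps j fs, ordsum fs' = ordsum fs + 1 ∧ fs'.length = fs.length ∧
      ((∀ Kk ∈ fs, 1 ≤ Kk.1.length) → ∀ Kk ∈ fs', 1 ≤ Kk.1.length) := by
  induction fs with
  | nil => intro fs' h; simp [bumps] at h
  | cons Kk t ih =>
      obtain ⟨K, k⟩ := Kk
      intro fs' h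
      simp only [bumps, List.mem_cons, List.mem_map] at h
      rcases h with rfl | ⟨t', ht', rfl⟩
      · refine ⟨by simp [ordsum]; omega, by simp, ?_⟩
        intro hne Kk hKk
        rcases List.mem_cons.1 hKk with rfl | hKk
        · simp
        · exact hne Kk (by simp [hKk])
      · obtain ⟨h1, h2, h3⟩ := ih t' ht'
        refine ⟨by simp [ordsum] at h1 ⊢; omega, by simp [h2], ?_⟩
        intro hne Qq hQq
        rcases List.mem_cons.1 hQq with rfl | hQq
        · exact hne (K, k) (by simp)
        · exact h3 (fun Kk' hKk' => hne Kk' (by simp [hKk'])) Qq hQq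

lemma bumps_pf_sum (j : Fin n) (fs : List (List (Fin n) × Fin n)) :
    ((bumps j fs).map pf).sum = pf fs * ((ordsum fs + fs.length : ℕ) : ℝ) := by
  induction fs with
  | nil => simp [bumps, pf, ordsum]
  | cons Kk t ih =>
      obtain ⟨K, k⟩ := Kk
      simp only [bumps, List.map_cons, List.sum_cons, List.map_map]
      have h1 : pf (((K ++ [j], k)) :: t) = ((K.length + 1 : ℕ) : ℝ) * pf ((K,k) :: t) := by
        simp [pf, Nat.factorial_succ]
        push_cast
        ring
      have hfn : (pf ∘ (fun t' : List (List (Fin n) × Fin n) => (K, k) :: t'))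
          = fun t' => (Nat.factorial K.length : ℝ) * pf t' := by
        funext t'; simp [pf, Function.comp]
      rw [h1, hfn, List.sum_map_mul_left, ih]
      have : pf ((K,k) :: t) = (Nat.factorial K.length : ℝ) * pf t := by simp [pf]
      rw [this]
      have : ordsum ((K,k) :: t) = K.length + ordsum t := by simp [ordsum]
      rw [this]
      simp only [List.length_cons]
      push_cast
      ring

lemma children_invariants (j : Fin n) (T : Term n) :
    ∀ T' ∈ children j T,
      T'.1.length ≤ T.1.length + 1 ∧ ordsum T'.2 = ordsum T.2 + 1 ∧
      ((∀ Kk ∈ T.2, 1 ≤ Kk.1.length) → ∀ Kk ∈ T'.2, 1 ≤ Kk.1.length) ∧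
      T'.1.length + T.2.length = T'.2.length + T.1.length := by
  intro T' hT'
  simp only [children, List.mem_append, List.mem_map, List.mem_finRange] at hT'
  rcases hT' with ⟨fs', hfs', rfl⟩ | ⟨k, _, rfl⟩
  · obtain ⟨h1, h2, h3⟩ := bumps_ordsum j T.2 fs' hfs'
    exact ⟨by simp, by simp [h1], h3, by simp [h2, Nat.add_comm]⟩
  · refine ⟨by simp, ?_, ?_, by simp; omega⟩
    · simp [ordsum]
    · intro hne Kk hKk
      rcases List.mem_append.1 hKk with hKk | hKk
      · exact hne Kk hKk
      · simp at hKk; simp [hKk]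

lemma sum_map_const_real {α : Type*} (l : List α) (c : ℝ) :
    (l.map (fun _ => c)).sum = (l.length : ℝ) * c := by
  induction l with
  | nil => simp
  | cons a t ih => simp [ih]; ring

lemma fs_length_le_ordsum (fs : List (List (Fin n) × Fin n))
    (hne : ∀ Kk ∈ fs, 1 ≤ Kk.1.length) : fs.length ≤ ordsum fs := by
  have := SDC4.length_le_sum (fs.map (fun Kk => Kk.1.length)) (by
    intro k hk; obtain ⟨Kk, hKk, rfl⟩ := List.mem_map.1 hk; exact hne Kk hKk)
  simpa [ordsum] using this

lemma children_wt (j : Fin n) {s : ℝ} (hs : 1 ≤ s) (T : Term n) (m₀ : ℕ)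
    (hb : T.1.length ≤ m₀) (hord : ordsum T.2 = m₀) (hne : ∀ Kk ∈ T.2, 1 ≤ Kk.1.length) :
    ((children j T).map (wt s)).sum ≤ (((n:ℝ)*s+2) * ((m₀:ℝ)+1)) * wt s T := by
  obtain ⟨B, fs⟩ := T
  simp only [children, List.map_append, List.sum_append, List.map_map]
  have hspos : (0:ℝ) < s := lt_of_lt_of_le one_pos hs
  have hpf := pf_pos fs
  have hbump : ((bumps j fs).map (wt s ∘ (fun fs' => (B, fs')))).sum
      = wt s (B, fs) * ((ordsum fs + fs.length : ℕ) : ℝ) := by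
    have hfn : (wt s ∘ (fun fs' : List (List (Fin n) × Fin n) => (B, fs')))
        = fun fs' => (s ^ B.length * (Nat.factorial B.length : ℝ)) * pf fs' := by
      funext fs'; simp [wt, Function.comp]
    rw [hfn, List.sum_map_mul_left, bumps_pf_sum]
    simp [wt]
    ring
  have htype1 : ((List.finRange n).map (wt s ∘ (fun k => (B ++ [k], fs ++ [([j], k)])))).sum
      = (n:ℝ) * (wt s (B, fs) * (s * ((B.length : ℝ) + 1))) := by
    have hfn : (wt s ∘ (fun k : Fin n => (B ++ [k], fs ++ [([j], k)])))
        = fun _ => wt s (B, fs) * (s * ((B.length : ℝ) + 1)) := by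
      funext k
      simp only [wt, Function.comp, List.length_append, List.length_cons, List.length_nil]
      have hpf2 : pf (fs ++ [([j], k)]) = pf fs := by
        simp [pf, List.map_append, List.prod_append]
      rw [hpf2]
      simp [pow_succ, Nat.factorial_succ]
      push_cast
      ring
    rw [hfn, sum_map_const_real]
    simp
  rw [hbump, htype1]
  have hr : fs.length ≤ m₀ := le_trans (fs_length_le_ordsum fs hne) (le_of_eq hord)
  have hwt := wt_pos hspos (B, fs)
  have hn0 : (0:ℝ) ≤ (n:ℝ) := Nat.cast_nonneg n
  have hkey : ((ordsum fs + fs.length : ℕ) : ℝ) + (n:ℝ) * (s * ((B.length : ℝ) + 1))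
      ≤ ((n:ℝ)*s+2) * ((m₀:ℝ)+1) := by
    have h1 : ((ordsum fs + fs.length : ℕ) : ℝ) ≤ 2 * ((m₀:ℝ)+1) := by
      push_cast
      have : (ordsum fs : ℝ) = (m₀ : ℝ) := by exact_mod_cast congrArg Nat.cast hord
      rw [this]
      have : (fs.length : ℝ) ≤ (m₀ : ℝ) := by exact_mod_cast hr
      linarith
    have h2 : (n:ℝ) * (s * ((B.length : ℝ) + 1)) ≤ (n:ℝ) * s * ((m₀:ℝ)+1) := by
      have hb' : ((B.length : ℝ) + 1) ≤ ((m₀:ℝ)+1) := by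
        have : (B.length : ℝ) ≤ (m₀ : ℝ) := by exact_mod_cast hb
        linarith
      calc (n:ℝ) * (s * ((B.length : ℝ) + 1)) = (n:ℝ) * s * ((B.length : ℝ) + 1) := by ring
        _ ≤ (n:ℝ) * s * ((m₀:ℝ)+1) := by
            exact mul_le_mul_of_nonneg_left hb' (by positivity)
    nlinarith
  calc wt s (B, fs) * ((ordsum fs + fs.length : ℕ) : ℝ)
        + (n:ℝ) * (wt s (B, fs) * (s * ((B.length : ℝ) + 1)))
      = wt s (B, fs) * (((ordsum fs + fs.length : ℕ) : ℝ) + (n:ℝ) * (s * ((B.length : ℝ) + 1))) := by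
        ring
    _ ≤ wt s (B, fs) * (((n:ℝ)*s+2) * ((m₀:ℝ)+1)) := by
        exact mul_le_mul_of_nonneg_left hkey (le_of_lt hwt)
    _ = (((n:ℝ)*s+2) * ((m₀:ℝ)+1)) * wt s (B, fs) := by ring

end SDC9

namespace SDC10
open SDC SDC2 SDC3 SDC5 SDC6 SDC8 SDC9
variable {n : ℕ} {f g : V n → V n}

lemma key (hf : ContDiff ℝ ∞ f) (hg : ContDiff ℝ ∞ g) (i : Fin n) {s : ℝ} (hs : 1 ≤ s)
    (L : List (Fin n)) :
    ∀ (T : Term n) (m₀ : ℕ), T.1.length ≤ m₀ → ordsum T.2 = m₀ →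
      (∀ Kk ∈ T.2, 1 ≤ Kk.1.length) →
    ∃ terms : List (Term n),
      (pderivList L (tval f g i T) = fun x => (terms.map (fun T' => tval f g i T' x)).sum) ∧
      (∀ T' ∈ terms,
        T'.1.length ≤ m₀ + L.length ∧ ordsum T'.2 = m₀ + L.length ∧
        (∀ Kk ∈ T'.2, 1 ≤ Kk.1.length) ∧
        T'.1.length + T.2.length = T'.2.length + T.1.length) ∧
      ((terms.map (wt s)).sum ≤ wt s T * FacR ((n:ℝ)*s+2) m₀ L.length) := by
  have hspos : (0:ℝ) < s := lt_of_lt_of_le one_pos hs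
  have hcpos : (0:ℝ) ≤ (n:ℝ)*s+2 := by positivity
  induction L with
  | nil =>
      intro T m₀ hb hord hne
      refine ⟨[T], ?_, ?_, ?_⟩
      · funext x; simp [pderivList]
      · intro T' hT'
        simp only [List.mem_singleton] at hT'
        subst hT'
        exact ⟨by simpa using hb, by simpa using hord, hne, by omega⟩
      · simp [FacR, le_of_eq]
  | cons j t ih =>
      intro T m₀ hb hord hne
      -- inner recursion over a list of children
      have hrec : ∀ cs : List (Term n),
          (∀ c ∈ cs, c.1.length ≤ m₀+1 ∧ ordsum c.2 = m₀+1 ∧ (∀ Kk ∈ c.2, 1 ≤ Kk.1.length)) →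
          ∃ terms : List (Term n),
            ((fun x => (cs.map (fun c => pderivList t (tval f g i c) x)).sum)
              = fun x => (terms.map (fun T' => tval f g i T' x)).sum) ∧
            (∀ T' ∈ terms,
              T'.1.length ≤ (m₀+1) + t.length ∧ ordsum T'.2 = (m₀+1) + t.length ∧
              (∀ Kk ∈ T'.2, 1 ≤ Kk.1.length) ∧
              ∃ c ∈ cs, T'.1.length + c.2.length = T'.2.length + c.1.length) ∧
            ((terms.map (wt s)).sum ≤ ((cs.map (wt s)).sum) * FacR ((n:ℝ)*s+2) (m₀+1) t.length) := by
        intro cs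
        induction cs with
        | nil =>
            intro _
            exact ⟨[], by funext x; simp, by simp, by simp⟩
        | cons c cs' ihc =>
            intro hcs
            obtain ⟨hc1, hc2, hc3⟩ := hcs c (by simp)
            obtain ⟨termsc, heqc, hinvc, hwtc⟩ := ih c (m₀+1) hc1 hc2 hc3
            obtain ⟨terms', heq', hinv', hwt'⟩ := ihc (fun c' hc' => hcs c' (by simp [hc']))
            refine ⟨termsc ++ terms', ?_, ?_, ?_⟩
            · funext x
              simp only [List.map_cons, List.sum_cons, List.map_append, List.sum_append]
              rw [congrFun heqc x, congrFun heq' x]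
            · intro T' hT'
              rcases List.mem_append.1 hT' with hT' | hT'
              · obtain ⟨a1, a2, a3, a4⟩ := hinvc T' hT'
                exact ⟨a1, a2, a3, c, by simp, a4⟩
              · obtain ⟨a1, a2, a3, c', hc', a4⟩ := hinv' T' hT'
                exact ⟨a1, a2, a3, c', by simp [hc'], a4⟩
            · simp only [List.map_append, List.sum_append, List.map_cons, List.sum_cons]
              have hFnn : 0 ≤ FacR ((n:ℝ)*s+2) (m₀+1) t.length := FacR_nonneg hcpos _ _
              calc (termsc.map (wt s)).sum + (terms'.map (wt s)).sum
                  ≤ wt s c * FacR ((n:ℝ)*s+2) (m₀+1) t.length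
                    + ((cs'.map (wt s)).sum) * FacR ((n:ℝ)*s+2) (m₀+1) t.length :=
                    add_le_add hwtc hwt'
                _ = (wt s c + (cs'.map (wt s)).sum) * FacR ((n:ℝ)*s+2) (m₀+1) t.length := by
                    ring
      -- step
      have hstep : pderivList (j :: t) (tval f g i T)
          = fun x => ((children j T).map (fun c => pderivList t (tval f g i c) x)).sum := by
        rw [pderivList_cons, pd_tval hf hg i j T]
        have hl : ∀ φ ∈ (children j T).map (tval f g i), ContDiff ℝ ∞ φ := by
          intro φ hφ
          obtain ⟨c, _, rfl⟩ := List.mem_map.1 hφ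
          exact tval_contDiff hf hg i c
        have := pderivList_listSum t ((children j T).map (tval f g i)) hl
        simp only [List.map_map, Function.comp_def] at this
        exact this
      have hchildinv : ∀ c ∈ children j T,
          c.1.length ≤ m₀+1 ∧ ordsum c.2 = m₀+1 ∧ (∀ Kk ∈ c.2, 1 ≤ Kk.1.length) := by
        intro c hc
        obtain ⟨h1, h2, h3, _⟩ := children_invariants j T c hc
        exact ⟨le_trans h1 (by omega), by omega, h3 hne⟩
      obtain ⟨terms, heq, hinv, hwt⟩ := hrec (children j T) hchildinv
      refine ⟨terms, ?_, ?_, ?_⟩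
      · rw [hstep]; exact heq
      · intro T' hT'
        obtain ⟨a1, a2, a3, c, hc, a4⟩ := hinv T' hT'
        obtain ⟨_, _, _, h4⟩ := children_invariants j T c hc
        refine ⟨by simpa [Nat.add_assoc, Nat.add_comm, Nat.add_left_comm] using a1, ?_, a3, ?_⟩
        · rw [a2]; simp; omega
        · omega
      · calc (terms.map (wt s)).sum
            ≤ (((children j T).map (wt s)).sum) * FacR ((n:ℝ)*s+2) (m₀+1) t.length := hwt
          _ ≤ ((((n:ℝ)*s+2) * ((m₀:ℝ)+1)) * wt s T) * FacR ((n:ℝ)*s+2) (m₀+1) t.length := by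
              exact mul_le_mul_of_nonneg_right (children_wt j hs T m₀ hb hord hne)
                (FacR_nonneg hcpos _ _)
          _ = wt s T * FacR ((n:ℝ)*s+2) m₀ (j :: t).length := by
              rw [show (j :: t).length = t.length + 1 from rfl, FacR]
              push_cast
              ring

end SDC10

namespace SDC11
open SDC SDC2 SDC3 SDC5 SDC6 SDC7 SDC8 SDC9 SDC10 MeasureTheory ENNReal
variable {n : ℕ} {f g : V n → V n}

lemma prodfn_abs_bound (hg : ContDiff ℝ ∞ g) {M : ℕ → ℝ} {Cg ρg : ℝ}
    (hCg : 0 < Cg) (hρg : 0 < ρg) (hM : ∀ k, 0 < M k)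
    (hgM : ∀ (m : ℕ), 1 ≤ m → ∀ x, ‖iteratedFDeriv ℝ m g x‖ ≤ Cg * ρg ^ m * (Nat.factorial m : ℝ) * M m)
    (fs : List (List (Fin n) × Fin n)) (hne : ∀ Kk ∈ fs, 1 ≤ Kk.1.length) (x : V n) :
    |prodfn g fs x| ≤
      (fs.map (fun Kk => Cg * ρg ^ Kk.1.length * (Nat.factorial Kk.1.length : ℝ) * M Kk.1.length)).prod := by
  induction fs with
  | nil => simp [prodfn]
  | cons a t ih =>
      have hsplit : prodfn g (a :: t) x = fac g a x * prodfn g t x := by simp [prodfn]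
      rw [hsplit, List.map_cons, List.prod_cons, abs_mul]
      have h1 : |fac g a x| ≤ Cg * ρg ^ a.1.length * (Nat.factorial a.1.length : ℝ) * M a.1.length := by
        obtain ⟨K, k⟩ := a
        exact gfactor_bound hg hgM K (hne (K, k) (by simp)) k x
      have h2 := ih (fun Kk hKk => hne Kk (by simp [hKk]))
      have hb1 : (0:ℝ) ≤ Cg * ρg ^ a.1.length * (Nat.factorial a.1.length : ℝ) * M a.1.length := by
        have := hM a.1.length; positivity
      exact mul_le_mul h1 h2 (abs_nonneg _) hb1

lemma prod_bndf_eq {M : ℕ → ℝ} (Cg ρg : ℝ) (fs : List (List (Fin n) × Fin n)) :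
    (fs.map (fun Kk => Cg * ρg ^ Kk.1.length * (Nat.factorial Kk.1.length : ℝ) * M Kk.1.length)).prod
      = Cg ^ fs.length * ρg ^ (ordsum fs) * pf fs * (fs.map (fun Kk => M Kk.1.length)).prod := by
  induction fs with
  | nil => simp [ordsum, pf]
  | cons a t ih =>
      simp only [List.map_cons, List.prod_cons, ih, List.length_cons]
      have h1 : ordsum (a :: t) = a.1.length + ordsum t := by simp [ordsum]
      have h2 : pf (a :: t) = (Nat.factorial a.1.length : ℝ) * pf t := by simp [pf]
      rw [h1, h2, pow_succ, pow_add]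
      ring

lemma ofReal_listSum {α : Type*} (l : List α) (h : α → ℝ) (hh : ∀ a ∈ l, 0 ≤ h a) :
    (l.map (fun a => ENNReal.ofReal (h a))).sum = ENNReal.ofReal ((l.map h).sum) := by
  induction l with
  | nil => simp
  | cons a t ih =>
      simp only [List.map_cons, List.sum_cons]
      rw [ih (fun a ha => hh a (by simp [ha])),
        ← ENNReal.ofReal_add (hh a (by simp)) (List.sum_nonneg (by
          intro y hy; obtain ⟨b, hb, rfl⟩ := List.mem_map.1 hy; exact hh b (by simp [hb])))]

end SDC11


open SDC SDC2 SDC3 SDC5 SDC6 SDC7 SDC8 SDC9 SDC10 SDC11 MeasureTheory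

/-- Sobolev–Denjoy–Carleman estimates are stable under composition with a
smooth diffeomorphism `g` having `inf |det Dg| > 0` and global `M`-estimates of order `≥ 1`,
where `M` is a log-convex weight sequence. -/
theorem statement_7 (M : ℕ → ℝ) (hMpos : ∀ k, 0 < M k) (hM0 : M 0 = 1) (hM01 : 1 ≤ M 1)
    (hlc : ∀ k : ℕ, 1 ≤ k → (M k) ^ 2 ≤ M (k - 1) * M (k + 1))
    (n : ℕ) (hn : 1 ≤ n) (p : ℝ) (hp : 1 ≤ p)
    (g ginv : EuclideanSpace ℝ (Fin n) → EuclideanSpace ℝ (Fin n))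
    (hg : ContDiff ℝ (⊤ : ℕ∞) g) (hginv : ContDiff ℝ (⊤ : ℕ∞) ginv)
    (hleft : Function.LeftInverse ginv g) (hright : Function.RightInverse ginv g)
    (hdet : ∃ ε : ℝ, 0 < ε ∧ ∀ x, ε ≤ |(fderiv ℝ g x).det|)
    (hgM : ∃ Cg ρg : ℝ, 0 < Cg ∧ 0 < ρg ∧ ∀ (k : ℕ), 1 ≤ k → ∀ x,
      ‖iteratedFDeriv ℝ k g x‖ ≤ Cg * ρg ^ k * (Nat.factorial k : ℝ) * M k)
    (f : EuclideanSpace ℝ (Fin n) → EuclideanSpace ℝ (Fin n))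
    (hf : ContDiff ℝ (⊤ : ℕ∞) f)
    (hfM : ∃ Cf ρf : ℝ, 0 < Cf ∧ 0 < ρf ∧ ∀ (α : Fin n → ℕ) (i : Fin n),
      eLpNorm (pderivMulti α fun x => f x i) (ENNReal.ofReal p) volume ≤
        ENNReal.ofReal (Cf * ρf ^ msize α * (Nat.factorial (msize α) : ℝ) * M (msize α))) :
    ∃ C ρ : ℝ, 0 < C ∧ 0 < ρ ∧ ∀ (α : Fin n → ℕ) (i : Fin n),
      eLpNorm (pderivMulti α fun x => f (g x) i) (ENNReal.ofReal p) volume ≤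
        ENNReal.ofReal (C * ρ ^ msize α * (Nat.factorial (msize α) : ℝ) * M (msize α)) := by
  obtain ⟨ε, hε, hdet'⟩ := hdet
  obtain ⟨Cg, ρg, hCg, hρg, hgM'⟩ := hgM
  obtain ⟨Cf, ρf, hCf, hρf, hfM'⟩ := hfM
  have hf' : ContDiff ℝ (⊤:ℕ∞) f := hf.of_le (by simp)
  have hg' : ContDiff ℝ (⊤:ℕ∞) g := hg.of_le (by simp)
  have hinj : Function.Injective g := hleft.injective
  have hsurj : Function.Surjective g := hright.surjective
  set s : ℝ := max 1 (Cg * ρf * M 1) with hsdef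
  have hs : 1 ≤ s := le_max_left _ _
  have hspos : (0:ℝ) < s := lt_of_lt_of_le one_pos hs
  have hM1pos := hMpos 1
  have hp0 : 0 < p := lt_of_lt_of_le one_pos hp
  set ce : ℝ := ε⁻¹ ^ (1/p) with hcedef
  have hce : 0 < ce := by positivity
  refine ⟨ce * Cf, ρg * ((n:ℝ)*s + 2), by positivity, by positivity, ?_⟩
  intro α i
  set m := msize α with hm
  set q := ENNReal.ofReal p with hq
  have hq1 : 1 ≤ q := by
    rw [hq]
    exact ENNReal.one_le_ofReal.2 hp
  have hlen : (canon α).length = m := canon_length α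
  set T₀ : Term n := (([] : List (Fin n)), ([] : List (List (Fin n) × Fin n))) with hT₀
  have hbase : pderivMulti α (fun x => f (g x) i) = pderivList (canon α) (tval f g i T₀) := by
    rw [pderivMulti_eq_canon]
    have he : (fun x => f (g x) i) = tval f g i T₀ := by
      funext x
      simp [tval, prodfn, pderivList, hT₀]
    rw [he]
  obtain ⟨terms, heq, hinv, hwt⟩ := key hf' hg' i hs (canon α) T₀ 0
    (by simp [hT₀]) (by simp [hT₀, ordsum]) (by simp [hT₀])
  set A : ℝ := ce * Cf * ρg ^ m * M m with hA
  have hMm := hMpos m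
  have hAnn : 0 ≤ A := by positivity
  -- per-term bound
  have hterm : ∀ T' ∈ terms, eLpNorm (tval f g i T') q volume ≤ ENNReal.ofReal (A * wt s T') := by
    intro T' hT'
    obtain ⟨a1, a2, a3, a4⟩ := hinv T' hT'
    have hbfs : T'.2.length = T'.1.length := by
      simpa [hT₀] using a4.symm
    have hord : ordsum T'.2 = m := by simpa [hT₀, hlen] using a2
    set b := T'.1.length with hb
    set φ := pderivList T'.1 (fun y => f y i) with hφ
    set cT' : ℝ := (T'.2.map (fun Kk =>
      Cg * ρg ^ Kk.1.length * (Nat.factorial Kk.1.length : ℝ) * M Kk.1.length)).prod with hcT'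
    have hcT'nn : 0 ≤ cT' := by
      refine List.prod_nonneg fun y hy => ?_
      obtain ⟨Kk, _, rfl⟩ := List.mem_map.1 hy
      have := hMpos Kk.1.length
      positivity
    have hptw : ∀ x, |tval f g i T' x| ≤ cT' * |φ (g x)| := by
      intro x
      have : tval f g i T' x = φ (g x) * prodfn g T'.2 x := rfl
      rw [this, abs_mul, mul_comm]
      exact mul_le_mul_of_nonneg_right
        (prodfn_abs_bound hg' hCg hρg hMpos hgM' T'.2 a3 x) (abs_nonneg _)
    have h3 : eLpNorm (tval f g i T') q volume ≤
        ENNReal.ofReal cT' * eLpNorm (fun x => φ (g x)) q volume :=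
      eLpNorm_mul_bound_le hcT'nn hptw q
    have h4 : eLpNorm (fun x => φ (g x)) q volume ≤
        ENNReal.ofReal ce * eLpNorm φ q volume := by
      have := eLpNorm_comp_le hg' hinj hsurj hε hdet' φ hp
      have hch : ((ENNReal.ofReal ε)⁻¹) ^ (1/p) = ENNReal.ofReal ce := by
        rw [← ENNReal.ofReal_inv_of_pos hε, ← ENNReal.ofReal_rpow_of_pos (by positivity)]
      rw [hq]
      rw [hch] at this
      exact this
    have h6 : eLpNorm φ q volume ≤
        ENNReal.ofReal (Cf * ρf ^ b * (Nat.factorial b : ℝ) * M b) := by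
      have hperm : φ = pderivMulti (fun j => T'.1.count j) (fun y => f y i) := by
        rw [hφ, pderivMulti_eq_canon]
        exact pderivList_perm (perm_canon_count T'.1) (fun y => f y i) (coord_contDiff hf' i)
      have hmsz : msize (fun j => T'.1.count j) = b := count_sum_length T'.1
      rw [hperm, hq]
      have := hfM' (fun j => T'.1.count j) i
      rwa [hmsz] at this
    -- real-number inequality
    have hreal : cT' * (ce * (Cf * ρf ^ b * (Nat.factorial b : ℝ) * M b)) ≤ A * wt s T' := by
      have hexp : cT' = Cg ^ b * ρg ^ m * pf T'.2 *
          (T'.2.map (fun Kk => M Kk.1.length)).prod := by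
        rw [hcT', prod_bndf_eq, hbfs, hord]
      set pMp : ℝ := (T'.2.map (fun Kk => M Kk.1.length)).prod with hpMp
      have hA2 : M b * pMp ≤ M 1 ^ b * M m := by
        have hks : ∀ k ∈ T'.2.map (fun Kk => Kk.1.length), 1 ≤ k := by
          intro k hk
          obtain ⟨Kk, hKk, rfl⟩ := List.mem_map.1 hk
          exact a3 Kk hKk
        have := SDC4.lemmaA hMpos hM0 hM01 hlc (T'.2.map (fun Kk => Kk.1.length)) hks
        rw [List.length_map, List.map_map] at this
        rw [show ((T'.2.map (fun Kk => Kk.1.length)).sum) = m from hord] at this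
        rw [hbfs] at this
        convert this using 3 <;> simp [Function.comp, hpMp]
      have hpfpos := pf_pos T'.2
      have hfb : (0:ℝ) < (Nat.factorial b : ℝ) := by positivity
      have hpMnn : 0 ≤ pMp := by
        refine List.prod_nonneg fun y hy => ?_
        obtain ⟨Kk, _, rfl⟩ := List.mem_map.1 hy
        exact le_of_lt (hMpos _)
      have hsb : (Cg * ρf * M 1) ^ b ≤ s ^ b :=
        pow_le_pow_left₀ (by positivity) (le_max_right _ _) b
      have hwteq : wt s T' = s ^ b * (Nat.factorial b : ℝ) * pf T'.2 := rfl
      calc cT' * (ce * (Cf * ρf ^ b * (Nat.factorial b : ℝ) * M b))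
          = (ce * Cf * ρg ^ m * ((Nat.factorial b : ℝ) * pf T'.2)) *
              ((Cg * ρf) ^ b * (M b * pMp)) := by
            rw [hexp, mul_pow]
            ring
        _ ≤ (ce * Cf * ρg ^ m * ((Nat.factorial b : ℝ) * pf T'.2)) *
              ((Cg * ρf) ^ b * (M 1 ^ b * M m)) := by
            refine mul_le_mul_of_nonneg_left ?_ (by positivity)
            exact mul_le_mul_of_nonneg_left hA2 (by positivity)
        _ = (ce * Cf * ρg ^ m * M m * ((Nat.factorial b : ℝ) * pf T'.2)) *
              (Cg * ρf * M 1) ^ b := by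
            rw [mul_pow, mul_pow]
            ring
        _ ≤ (ce * Cf * ρg ^ m * M m * ((Nat.factorial b : ℝ) * pf T'.2)) * s ^ b := by
            refine mul_le_mul_of_nonneg_left hsb (by positivity)
        _ = A * wt s T' := by
            rw [hA, hwteq]
            ring
    calc eLpNorm (tval f g i T') q volume
        ≤ ENNReal.ofReal cT' * eLpNorm (fun x => φ (g x)) q volume := h3
      _ ≤ ENNReal.ofReal cT' * (ENNReal.ofReal ce * eLpNorm φ q volume) :=
          mul_le_mul_right h4 _
      _ ≤ ENNReal.ofReal cT' * (ENNReal.ofReal ce *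
            ENNReal.ofReal (Cf * ρf ^ b * (Nat.factorial b : ℝ) * M b)) :=
          mul_le_mul_right (mul_le_mul_right h6 _) _
      _ = ENNReal.ofReal (cT' * (ce * (Cf * ρf ^ b * (Nat.factorial b : ℝ) * M b))) := by
          rw [← ENNReal.ofReal_mul (le_of_lt hce), ← ENNReal.ofReal_mul hcT'nn]
      _ ≤ ENNReal.ofReal (A * wt s T') := ENNReal.ofReal_le_ofReal hreal
  -- combine
  have hwt0 : wt s T₀ = 1 := by simp [wt, pf, hT₀]
  have hFr : FacR ((n:ℝ)*s+2) 0 m = ((n:ℝ)*s+2) ^ m * (Nat.factorial m : ℝ) :=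
    FacR_zero_left _ m
  have hwtnn : ∀ T' ∈ terms, 0 ≤ wt s T' := fun T' _ => le_of_lt (wt_pos hspos T')
  calc eLpNorm (pderivMulti α fun x => f (g x) i) q volume
      = eLpNorm (fun x => (terms.map (fun T' => tval f g i T' x)).sum) q volume := by
        rw [hbase, heq]
    _ ≤ (terms.map (fun T' => eLpNorm (tval f g i T') q volume)).sum := by
        have hcont : ∀ φ ∈ terms.map (tval f g i), Continuous φ := by
          intro φ hφ
          obtain ⟨T', _, rfl⟩ := List.mem_map.1 hφ
          exact (tval_contDiff hf' hg' i T').continuous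
        have := eLpNorm_listSum_le (terms.map (tval f g i)) hcont hq1
        simp only [List.map_map, Function.comp_def] at this
        exact this
    _ ≤ (terms.map (fun T' => ENNReal.ofReal (A * wt s T'))).sum := by
        exact List.sum_le_sum hterm
    _ = ENNReal.ofReal ((terms.map (fun T' => A * wt s T')).sum) :=
        ofReal_listSum terms _ (fun T' hT' => mul_nonneg hAnn (hwtnn T' hT'))
    _ ≤ ENNReal.ofReal ((ce * Cf) * (ρg * ((n:ℝ)*s + 2)) ^ m * (Nat.factorial m : ℝ) * M m) := by
        refine ENNReal.ofReal_le_ofReal ?_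
        have h1 : (terms.map (fun T' => A * wt s T')).sum = A * (terms.map (wt s)).sum :=
          List.sum_map_mul_left _ _ _
        rw [h1]
        have h2 : (terms.map (wt s)).sum ≤ ((n:ℝ)*s+2) ^ m * (Nat.factorial m : ℝ) := by
          have := hwt
          rw [hwt0, one_mul, hlen, hFr] at this
          exact this
        calc A * (terms.map (wt s)).sum ≤ A * (((n:ℝ)*s+2) ^ m * (Nat.factorial m : ℝ)) :=
              mul_le_mul_of_nonneg_left h2 hAnn
          _ = (ce * Cf) * (ρg * ((n:ℝ)*s + 2)) ^ m * (Nat.factorial m : ℝ) * M m := by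
              rw [hA, mul_pow]
              ring
end

section
/- Let M = (M_k) be a log-convex weight sequence and L = (L_k) a sequence of reals with L_k ≥ 1 for all k. Let g : ℝⁿ → ℝⁿ be a smooth diffeomorphism such that g(x) − x → 0 as |x| → ∞ and such that there exist C_g, ρ_g > 0 with ‖g^{(k)}(x)‖ ≤ C_g·ρ_g^k·k!·M_k for all x ∈ ℝⁿ and all k ≥ 1. Let f : ℝⁿ → ℝⁿ be smooth such that there exist C_f, ρ_f > 0 with (1+|x|)^q·|∂^α f_i(x)| ≤ C_f·ρ_f^{q+|α|}·q!·|α|!·L_q·M_{|α|} for all x ∈ ℝⁿ, all q ∈ ℕ, all multi-indices α ∈ ℕⁿ, and i = 1,…,n. Then there exist C, ρ > 0 such that (1+|x|)^q·|∂^α((f∘g)_i)(x)| ≤ C·ρ^{q+|α|}·q!·|α|!·L_q·M_{|α|} for all x, q, α, i. -/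
open Filter

namespace S9

noncomputable def Dv {n : ℕ} (v : EuclideanSpace ℝ (Fin n))
    (h : EuclideanSpace ℝ (Fin n) → ℝ) : EuclideanSpace ℝ (Fin n) → ℝ :=
  fun x => fderiv ℝ h x v

lemma Dv_smooth {n : ℕ} (v : EuclideanSpace ℝ (Fin n)) {h : EuclideanSpace ℝ (Fin n) → ℝ}
    (hh : ContDiff ℝ ((⊤ : ℕ∞) : WithTop ℕ∞) h) : ContDiff ℝ ((⊤ : ℕ∞) : WithTop ℕ∞) (Dv v h) := by
  exact (hh.fderiv_right le_rfl).clm_apply contDiff_const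

lemma Dv_swap {n : ℕ} (u v : EuclideanSpace ℝ (Fin n)) {h : EuclideanSpace ℝ (Fin n) → ℝ}
    (hh : ContDiff ℝ ((⊤ : ℕ∞) : WithTop ℕ∞) h) : Dv u (Dv v h) = Dv v (Dv u h) := by
  funext z
  have hsymm : ∀ a b, fderiv ℝ (fderiv ℝ h) z a b = fderiv ℝ (fderiv ℝ h) z b a := by
    intro a b
    exact (hh.contDiffAt.isSymmSndFDerivAt (by rw [minSmoothness_of_isRCLikeNormedField]; exact WithTop.coe_le_coe.mpr (le_top : (2:ℕ∞) ≤ ⊤))).eq a b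
  have key : ∀ a w : EuclideanSpace ℝ (Fin n), Dv a (Dv w h) z = fderiv ℝ (fderiv ℝ h) z a w := by
    intro a w
    have hd : DifferentiableAt ℝ (fderiv ℝ h) z :=
      ((hh.fderiv_right (m := ((⊤ : ℕ∞) : WithTop ℕ∞)) le_rfl).differentiable (by simp)).differentiableAt
    have : Dv w h = (ContinuousLinearMap.apply ℝ ℝ w) ∘ (fderiv ℝ h) := rfl
    have hfd : fderiv ℝ (Dv w h) z =
        (ContinuousLinearMap.apply ℝ ℝ w).comp (fderiv ℝ (fderiv ℝ h) z) := by
      rw [this]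
      exact (((ContinuousLinearMap.apply ℝ ℝ w).hasFDerivAt).comp z hd.hasFDerivAt).fderiv
    show fderiv ℝ (Dv w h) z a = _
    rw [hfd]; rfl
  rw [key u v, key v u, hsymm]

lemma iteratedFDeriv_snoc {n : ℕ} {h : EuclideanSpace ℝ (Fin n) → ℝ}
    (hh : ContDiff ℝ ((⊤ : ℕ∞) : WithTop ℕ∞) h) (k : ℕ) (x : EuclideanSpace ℝ (Fin n))
    (w : Fin k → EuclideanSpace ℝ (Fin n)) (v : EuclideanSpace ℝ (Fin n)) :
    iteratedFDeriv ℝ (k+1) h x (Fin.snoc w v) = iteratedFDeriv ℝ k (Dv v h) x w := by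
  rw [iteratedFDeriv_succ_apply_right]
  have hder : ContDiff ℝ ((⊤ : ℕ∞) : WithTop ℕ∞) (fderiv ℝ h) := hh.fderiv_right le_rfl
  have : iteratedFDeriv ℝ k (Dv v h) x =
      (ContinuousLinearMap.apply ℝ ℝ v).compContinuousMultilinearMap
        (iteratedFDeriv ℝ k (fderiv ℝ h) x) := by
    have : Dv v h = (ContinuousLinearMap.apply ℝ ℝ v) ∘ (fderiv ℝ h) := rfl
    rw [this]
    exact (ContinuousLinearMap.apply ℝ ℝ v).iteratedFDeriv_comp_left hder.contDiffAt (by exact WithTop.coe_le_coe.mpr le_top)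
  rw [this]
  simp [Fin.init_snoc, Fin.snoc_last]

lemma pderivList_eq {n : ℕ} (l : List (Fin n)) {h : EuclideanSpace ℝ (Fin n) → ℝ}
    (hh : ContDiff ℝ ((⊤ : ℕ∞) : WithTop ℕ∞) h) (x : EuclideanSpace ℝ (Fin n)) :
    pderivList l h x =
      iteratedFDeriv ℝ l.length h x (fun j => EuclideanSpace.single (l.get j.rev) 1) := by
  induction l generalizing h with
  | nil => simp [pderivList]
  | cons i t ih =>
    show pderivList t (Dv (EuclideanSpace.single i 1) h) x = _
    rw [ih (Dv_smooth _ hh)]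
    rw [← iteratedFDeriv_snoc hh t.length x (fun j => EuclideanSpace.single (t.get j.rev) 1)
      (EuclideanSpace.single i 1)]
    show _ = iteratedFDeriv ℝ (t.length + 1) h x
      (fun j : Fin (t.length + 1) => EuclideanSpace.single ((i :: t).get j.rev) 1)
    congr 1
    funext j
    refine Fin.lastCases ?_ (fun j' => ?_) j
    · simp [Fin.snoc_last, Fin.rev_last]
    · rw [Fin.snoc_castSucc, Fin.rev_castSucc]
      rfl

end S9

namespace S9
lemma pderivList_perm {n : ℕ} {l₁ l₂ : List (Fin n)} (hp : l₁.Perm l₂) :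
    ∀ h : EuclideanSpace ℝ (Fin n) → ℝ, ContDiff ℝ ((⊤ : ℕ∞) : WithTop ℕ∞) h →
      pderivList l₁ h = pderivList l₂ h := by
  induction hp with
  | nil => intro h _; rfl
  | cons a p ih =>
    intro h hh
    show pderivList _ _ = pderivList _ _
    exact ih _ (Dv_smooth _ hh)
  | swap a b l =>
    intro h hh
    show pderivList l (Dv (EuclideanSpace.single a 1) (Dv (EuclideanSpace.single b 1) h)) =
      pderivList l (Dv (EuclideanSpace.single b 1) (Dv (EuclideanSpace.single a 1) h))
    rw [Dv_swap _ _ hh]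
  | trans p q ih1 ih2 =>
    intro h hh
    rw [ih1 _ hh, ih2 _ hh]
end S9
section C
variable {n : ℕ}

lemma pderivList_ofFn (k : ℕ) (ι : Fin k → Fin n) {h : EuclideanSpace ℝ (Fin n) → ℝ}
    (hh : ContDiff ℝ ((⊤ : ℕ∞) : WithTop ℕ∞) h) (x : EuclideanSpace ℝ (Fin n)) :
    iteratedFDeriv ℝ k h x (fun j => EuclideanSpace.single (ι j) 1) =
      pderivList (List.ofFn fun j => ι j.rev) h x := by
  induction k generalizing h with
  | zero => simp [List.ofFn_zero, pderivList]
  | succ k ih =>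
    have hsnoc : (fun j : Fin (k+1) => EuclideanSpace.single (ι j) (1:ℝ)) =
        Fin.snoc (fun j : Fin k => EuclideanSpace.single (ι j.castSucc) (1:ℝ))
          (EuclideanSpace.single (ι (Fin.last k)) (1:ℝ)) := by
      funext j
      refine Fin.lastCases ?_ (fun j' => ?_) j
      · rw [Fin.snoc_last]
      · rw [Fin.snoc_castSucc]
    rw [hsnoc, S9.iteratedFDeriv_snoc hh k x _ _,
      ih (fun a => ι a.castSucc) (S9.Dv_smooth _ hh)]
    have hlist : (List.ofFn fun j : Fin (k+1) => ι j.rev) =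
        ι (Fin.last k) :: List.ofFn (fun j : Fin k => ι j.rev.castSucc) := by
      rw [List.ofFn_succ]
      congr 1
      exact congrArg List.ofFn (funext fun j => by rw [Fin.rev_succ])
    rw [hlist]
    rfl

lemma count_flat (α : Fin n → ℕ) (i : Fin n) :
    ((List.finRange n).flatMap fun i' => List.replicate (α i') i').count i = α i := by
  rw [List.count_flatMap]
  rw [← Fin.sum_univ_def (fun i' => (List.count i ∘ fun i' => List.replicate (α i') i') i')]
  simp only [Function.comp_apply, List.count_replicate]
  simp [Finset.sum_ite_eq' Finset.univ i α]

lemma sum_count (l : List (Fin n)) : ∑ i, l.count i = l.length := by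
  induction l with
  | nil => simp
  | cons a t ih =>
    simp only [List.count_cons, List.length_cons]
    rw [Finset.sum_add_distrib, ih]
    simp [Finset.sum_ite_eq' Finset.univ a (fun _ => 1)]

lemma len_flat (α : Fin n → ℕ) :
    ((List.finRange n).flatMap fun i' => List.replicate (α i') i').length = msize α := by
  rw [← sum_count]
  unfold msize
  exact Finset.sum_congr rfl fun i _ => count_flat α i

lemma abs_pderivMulti_le (α : Fin n → ℕ) {h : EuclideanSpace ℝ (Fin n) → ℝ}
    (hh : ContDiff ℝ ((⊤ : ℕ∞) : WithTop ℕ∞) h) (x : EuclideanSpace ℝ (Fin n)) :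
    |pderivMulti α h x| ≤ ‖iteratedFDeriv ℝ (msize α) h x‖ := by
  have : pderivMulti α h x = pderivList ((List.finRange n).flatMap fun i => List.replicate (α i) i) h x := rfl
  rw [this, S9.pderivList_eq _ hh x]
  set l := (List.finRange n).flatMap fun i => List.replicate (α i) i
  calc |iteratedFDeriv ℝ l.length h x (fun j => EuclideanSpace.single (l.get j.rev) 1)|
      ≤ ‖iteratedFDeriv ℝ l.length h x‖ * ∏ j : Fin l.length, ‖EuclideanSpace.single (l.get j.rev) (1:ℝ)‖ := by
        rw [← Real.norm_eq_abs]
        exact (iteratedFDeriv ℝ l.length h x).le_opNorm _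
    _ = ‖iteratedFDeriv ℝ l.length h x‖ := by
        simp [EuclideanSpace.norm_single]
    _ = ‖iteratedFDeriv ℝ (msize α) h x‖ := by rw [len_flat]

lemma pderivList_eq_pderivMulti (k : ℕ) (ι : Fin k → Fin n)
    {h : EuclideanSpace ℝ (Fin n) → ℝ} (hh : ContDiff ℝ ((⊤ : ℕ∞) : WithTop ℕ∞) h)
    (x : EuclideanSpace ℝ (Fin n)) :
    ∃ α : Fin n → ℕ, msize α = k ∧
      iteratedFDeriv ℝ k h x (fun j => EuclideanSpace.single (ι j) 1) = pderivMulti α h x := by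
  set l := List.ofFn fun j : Fin k => ι j.rev with hl
  refine ⟨fun i => l.count i, ?_, ?_⟩
  · rw [msize, sum_count, hl, List.length_ofFn]
  · rw [pderivList_ofFn k ι hh x, ← hl]
    have hperm : ((List.finRange n).flatMap fun i' => List.replicate (l.count i') i').Perm l := by
      rw [List.perm_iff_count]
      intro a
      exact count_flat _ a
    show pderivList l h x =
      pderivList ((List.finRange n).flatMap fun i' => List.replicate (l.count i') i') h x
    exact congrFun (S9.pderivList_perm hperm.symm h hh) x

lemma norm_iteratedFDeriv_le_of_pderiv (j : ℕ) {h : EuclideanSpace ℝ (Fin n) → ℝ}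
    (hh : ContDiff ℝ ((⊤ : ℕ∞) : WithTop ℕ∞) h) (x : EuclideanSpace ℝ (Fin n)) {B : ℝ}
    (hB0 : 0 ≤ B) (hB : ∀ α : Fin n → ℕ, msize α = j → |pderivMulti α h x| ≤ B) :
    ‖iteratedFDeriv ℝ j h x‖ ≤ (n:ℝ)^j * B := by
  classical
  set m := iteratedFDeriv ℝ j h x
  refine ContinuousMultilinearMap.opNorm_le_bound (mul_nonneg (by positivity) hB0) fun v => ?_
  have hv : v = fun a => ∑ i, v a i • EuclideanSpace.single i (1:ℝ) := by
    funext a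
    have := (EuclideanSpace.basisFun (Fin n) ℝ).sum_repr (v a)
    simp only [EuclideanSpace.basisFun_repr, EuclideanSpace.basisFun_apply] at this
    exact this.symm
  have hexp : m v = ∑ r : Fin j → Fin n, (∏ a, v a (r a)) • m (fun a => EuclideanSpace.single (r a) 1) := by
    conv_lhs => rw [hv]
    rw [m.map_sum]
    refine Finset.sum_congr rfl fun r _ => ?_
    exact m.toMultilinearMap.map_smul_univ (fun a => v a (r a)) (fun a => EuclideanSpace.single (r a) 1)
  have hterm : ∀ r : Fin j → Fin n, ‖m (fun a => EuclideanSpace.single (r a) 1)‖ ≤ B := by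
    intro r
    obtain ⟨α, hα, heq⟩ := pderivList_eq_pderivMulti j r hh x
    rw [show m (fun a => EuclideanSpace.single (r a) 1) = pderivMulti α h x from heq,
      Real.norm_eq_abs]
    exact hB α hα
  have hcoord : ∀ a (i : Fin n), |v a i| ≤ ‖v a‖ := by
    intro a i
    have := abs_real_inner_le_norm (EuclideanSpace.single i (1:ℝ)) (v a)
    simpa [EuclideanSpace.inner_single_left, EuclideanSpace.norm_single] using this
  calc ‖m v‖ ≤ ∑ r : Fin j → Fin n, (∏ a, |v a (r a)|) * B := by
        rw [hexp]
        refine (norm_sum_le _ _).trans (Finset.sum_le_sum fun r _ => ?_)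
        rw [norm_smul, Real.norm_eq_abs, Finset.abs_prod]
        exact mul_le_mul_of_nonneg_left (hterm r) (by positivity)
    _ = (∏ a : Fin j, ∑ i : Fin n, |v a i|) * B := by
        rw [← Finset.sum_mul]
        congr 1
        rw [Finset.prod_univ_sum]
        simp
    _ ≤ (∏ a : Fin j, ((n:ℝ) * ‖v a‖)) * B := by
        refine mul_le_mul_of_nonneg_right (Finset.prod_le_prod (fun a _ => by positivity) fun a _ => ?_) hB0
        calc ∑ i : Fin n, |v a i| ≤ ∑ _i : Fin n, ‖v a‖ := Finset.sum_le_sum fun i _ => hcoord a i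
          _ = (n:ℝ) * ‖v a‖ := by simp [mul_comm]
    _ = (n:ℝ)^j * B * ∏ a, ‖v a‖ := by
        rw [Finset.prod_mul_distrib, Finset.prod_const, Finset.card_univ, Fintype.card_fin]
        ring

end C

namespace S9

lemma norm_compAlong {E F G : Type*} [NormedAddCommGroup E] [NormedSpace ℝ E]
    [NormedAddCommGroup F] [NormedSpace ℝ F] [NormedAddCommGroup G] [NormedSpace ℝ G]
    {k : ℕ} (q : FormalMultilinearSeries ℝ F G) (p : FormalMultilinearSeries ℝ E F)
    (c : OrderedFinpartition k) :
    ‖q.compAlongOrderedFinpartition p c‖ ≤ ‖q c.length‖ * ∏ m, ‖p (c.partSize m)‖ := by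
  apply ContinuousMultilinearMap.opNorm_le_bound (by positivity) (fun v => ?_)
  change ‖(q c.length) (c.applyOrderedFinpartition (fun m => p (c.partSize m)) v)‖ ≤ _
  apply ((q c.length).le_opNorm _).trans
  rw [mul_assoc, ← c.prod_sigma_eq_prod, ← Finset.prod_mul_distrib]
  gcongr with m _
  exact ((p (c.partSize m)).le_opNorm _)

lemma iteratedFDeriv_comp_eq_sum {E : Type*} [NormedAddCommGroup E] [NormedSpace ℝ E]
    {h : E → ℝ} {g : E → E} (hh : ContDiff ℝ ((⊤ : ℕ∞) : WithTop ℕ∞) h)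
    (hg : ContDiff ℝ ((⊤ : ℕ∞) : WithTop ℕ∞) g) (k : ℕ) (x : E) :
    iteratedFDeriv ℝ k (h ∘ g) x =
      ∑ c : OrderedFinpartition k,
        (ftaylorSeries ℝ h (g x)).compAlongOrderedFinpartition (ftaylorSeries ℝ g x) c := by
  have Hh : HasFTaylorSeriesUpTo ((⊤ : ℕ∞) : WithTop ℕ∞) h (ftaylorSeries ℝ h) :=
    contDiff_iff_ftaylorSeries.mp hh
  have Hg : HasFTaylorSeriesUpTo ((⊤ : ℕ∞) : WithTop ℕ∞) g (ftaylorSeries ℝ g) :=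
    contDiff_iff_ftaylorSeries.mp hg
  have Hcomp := (Hh.hasFTaylorSeriesUpToOn Set.univ).comp
    (Hg.hasFTaylorSeriesUpToOn Set.univ) (Set.mapsTo_univ _ _)
  have H2 := hasFTaylorSeriesUpToOn_univ_iff.mp Hcomp
  have := H2.eq_iteratedFDeriv (m := k) (WithTop.coe_le_coe.mpr le_top) x
  rw [← this]
  rfl

lemma sum_partSize {k : ℕ} (c : OrderedFinpartition k) : ∑ m, c.partSize m = k := by
  have := Fintype.card_congr c.equivSigma
  simpa [Fintype.card_sigma] using this

lemma comb_bound (A : ℝ) (hA : 1 ≤ A) : ∀ k : ℕ,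
    ∑ c : OrderedFinpartition k,
        A ^ c.length * (c.length.factorial : ℝ) * ∏ m, ((c.partSize m).factorial : ℝ) ≤
      (A + 2) ^ k * (k.factorial : ℝ) := by
  have hA0 : (0:ℝ) ≤ A := le_trans zero_le_one hA
  intro k
  induction k with
  | zero =>
    rw [Fintype.sum_unique]
    set c : OrderedFinpartition 0 := default
    have h0 : c.length = 0 := Nat.le_zero.mp c.length_le
    haveI : IsEmpty (Fin c.length) := by rw [h0]; infer_instance
    rw [Finset.univ_eq_empty, Finset.prod_empty, h0]
    simp
  | succ k ih =>
    have key : ∀ c : OrderedFinpartition k,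
        ∑ o : Option (Fin c.length),
          A ^ (c.extend o).length * ((c.extend o).length.factorial : ℝ) *
            ∏ m, (((c.extend o).partSize m).factorial : ℝ) ≤
        (A + 2) * (k + 1) *
          (A ^ c.length * (c.length.factorial : ℝ) * ∏ m, ((c.partSize m).factorial : ℝ)) := by
      intro c
      rw [Fintype.sum_option]
      have hleft : A ^ (c.extend none).length * ((c.extend none).length.factorial : ℝ) *
          ∏ m, (((c.extend none).partSize m).factorial : ℝ) =
          A * (c.length + 1) *
            (A ^ c.length * (c.length.factorial : ℝ) * ∏ m, ((c.partSize m).factorial : ℝ)) := by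
        show A ^ (c.length + 1) * ((c.length + 1).factorial : ℝ) *
          ∏ m : Fin (c.length + 1), (((Fin.cons 1 c.partSize : Fin (c.length+1) → ℕ) m).factorial : ℝ) = _
        rw [Fin.prod_univ_succ]
        simp only [Fin.cons_zero, Fin.cons_succ, Nat.factorial_one, Nat.factorial_zero,
          Nat.cast_one, one_mul, pow_succ, Nat.factorial_succ, Nat.cast_mul, Nat.cast_add]
        ring
      have hmid : ∀ i : Fin c.length,
          A ^ (c.extend (some i)).length * ((c.extend (some i)).length.factorial : ℝ) *
            ∏ m, (((c.extend (some i)).partSize m).factorial : ℝ) =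
          ((c.partSize i : ℝ) + 1) *
            (A ^ c.length * (c.length.factorial : ℝ) * ∏ m, ((c.partSize m).factorial : ℝ)) := by
        intro i
        show A ^ c.length * (c.length.factorial : ℝ) *
          ∏ m, (((Function.update c.partSize i (c.partSize i + 1)) m).factorial : ℝ) = _
        have hprod : ∏ m, (((Function.update c.partSize i (c.partSize i + 1)) m).factorial : ℝ) =
            ((c.partSize i + 1).factorial : ℝ) *
              ∏ m ∈ Finset.univ.erase i, ((c.partSize m).factorial : ℝ) := by
          rw [← Finset.mul_prod_erase Finset.univ _ (Finset.mem_univ i)]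
          congr 1
          · rw [Function.update_self]
          · exact Finset.prod_congr rfl fun m hm => by
              rw [Function.update_of_ne (Finset.ne_of_mem_erase hm)]
        have hprod2 : ∏ m, ((c.partSize m).factorial : ℝ) =
            ((c.partSize i).factorial : ℝ) * ∏ m ∈ Finset.univ.erase i, ((c.partSize m).factorial : ℝ) := by
          rw [← Finset.mul_prod_erase Finset.univ _ (Finset.mem_univ i)]
        rw [hprod, hprod2, Nat.factorial_succ]
        push_cast
        ring
      rw [hleft]
      have : ∑ i : Fin c.length,
          A ^ (c.extend (some i)).length * ((c.extend (some i)).length.factorial : ℝ) *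
            ∏ m, (((c.extend (some i)).partSize m).factorial : ℝ) =
          ((k : ℝ) + c.length) *
            (A ^ c.length * (c.length.factorial : ℝ) * ∏ m, ((c.partSize m).factorial : ℝ)) := by
        rw [Finset.sum_congr rfl fun i _ => hmid i, ← Finset.sum_mul]
        congr 1
        have : ∑ i : Fin c.length, ((c.partSize i : ℝ) + 1) = (k : ℝ) + c.length := by
          rw [Finset.sum_add_distrib]
          have := sum_partSize c
          push_cast [← this]
          simp [Finset.card_univ]
        rw [this]
      rw [this]
      rw [← add_mul]
      have hw : (0:ℝ) ≤ A ^ c.length * (c.length.factorial : ℝ) * ∏ m, ((c.partSize m).factorial : ℝ) := by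
        positivity
      apply mul_le_mul_of_nonneg_right _ hw
      have hj : (c.length : ℝ) ≤ k := by exact_mod_cast c.length_le
      nlinarith [hA0, hj, (c.length.cast_nonneg : (0:ℝ) ≤ c.length), (k.cast_nonneg : (0:ℝ) ≤ k)]
    calc ∑ c' : OrderedFinpartition (k+1),
          A ^ c'.length * (c'.length.factorial : ℝ) * ∏ m, ((c'.partSize m).factorial : ℝ)
        = ∑ p : (c : OrderedFinpartition k) × Option (Fin c.length),
            A ^ (p.1.extend p.2).length * ((p.1.extend p.2).length.factorial : ℝ) *
              ∏ m, (((p.1.extend p.2).partSize m).factorial : ℝ) :=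
          (Fintype.sum_equiv (OrderedFinpartition.extendEquiv k) _ _ (fun p => rfl)).symm
      _ = ∑ c : OrderedFinpartition k, ∑ o : Option (Fin c.length),
            A ^ (c.extend o).length * ((c.extend o).length.factorial : ℝ) *
              ∏ m, (((c.extend o).partSize m).factorial : ℝ) := by
          rw [← Finset.univ_sigma_univ, Finset.sum_sigma]
      _ ≤ ∑ c : OrderedFinpartition k, (A + 2) * (k + 1) *
            (A ^ c.length * (c.length.factorial : ℝ) * ∏ m, ((c.partSize m).factorial : ℝ)) :=
          Finset.sum_le_sum fun c _ => key c
      _ = (A + 2) * (k + 1) * ∑ c : OrderedFinpartition k,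
            A ^ c.length * (c.length.factorial : ℝ) * ∏ m, ((c.partSize m).factorial : ℝ) := by
          rw [Finset.mul_sum]
      _ ≤ (A + 2) * (k + 1) * ((A + 2) ^ k * (k.factorial : ℝ)) := by
          apply mul_le_mul_of_nonneg_left ih (by positivity)
      _ = (A + 2) ^ (k+1) * ((k+1).factorial : ℝ) := by
          rw [Nat.factorial_succ]
          push_cast
          ring

end S9


namespace S9M
variable {M : ℕ → ℝ} (hMpos : ∀ k, 0 < M k) (hM0 : M 0 = 1) (hM01 : 1 ≤ M 1)
  (hlc : ∀ k : ℕ, 1 ≤ k → (M k) ^ 2 ≤ M (k - 1) * M (k + 1))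

include hMpos hlc in
lemma Mratio : ∀ a c : ℕ, a ≤ c → M (a+1) * M c ≤ M a * M (c+1) := by
  intro a c hac
  induction c, hac using Nat.le_induction with
  | base => rw [mul_comm]
  | succ c hac ih =>
    have h2 : M (c+1) ^ 2 ≤ M c * M (c+2) := by
      have := hlc (c+1) (by omega)
      simpa using this
    have p1 := hMpos c
    have p2 := hMpos (c+1)
    have p3 := hMpos (c+2)
    have p4 := hMpos a
    have p5 := hMpos (a+1)
    nlinarith [mul_le_mul ih h2 (by positivity) (by positivity)]

include hMpos hM0 hM01 hlc in
lemma Mmono : ∀ k, M k ≤ M (k+1) := by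
  intro k
  induction k with
  | zero => rw [hM0]; exact hM01
  | succ k ih =>
    have h2 : M (k+1) ^ 2 ≤ M k * M (k+2) := by simpa using hlc (k+1) (by omega)
    have p1 := hMpos k
    have p2 := hMpos (k+1)
    have p3 := hMpos (k+2)
    nlinarith

include hMpos hM0 hM01 hlc in
lemma Mmono' : ∀ {j k : ℕ}, j ≤ k → M j ≤ M k := by
  intro j k h
  exact monotone_nat_of_le_succ (Mmono hMpos hM0 hM01 hlc) h

include hMpos hlc in
lemma MAB1 : ∀ a b : ℕ, M (a+1) * M (b+1) ≤ M 1 * M (a+b+1) := by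
  intro a b
  induction a with
  | zero => simp
  | succ a ih =>
    have hr := Mratio hMpos hlc (a+1) (a+b+1) (by omega)
    have p1 := hMpos (a+1)
    have p2 := hMpos (a+b+1)
    have p3 := hMpos (b+1)
    have p4 := hMpos 1
    have p5 := hMpos (a+2)
    have p6 := hMpos (a+b+2)
    have key : M (a+2) * M (a+b+1) * M (b+1) ≤ M 1 * M (a+b+1) * M (a+b+2) := by
      calc M (a+2) * M (a+b+1) * M (b+1) ≤ (M (a+1) * M (a+b+2)) * M (b+1) := by nlinarith
        _ = (M (a+1) * M (b+1)) * M (a+b+2) := by ring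
        _ ≤ (M 1 * M (a+b+1)) * M (a+b+2) := by nlinarith
        _ = M 1 * M (a+b+1) * M (a+b+2) := by ring
    have : M (a+2) * M (b+1) ≤ M 1 * M (a+b+2) := by
      have h := key
      nlinarith
    calc M (a+1+1) * M (b+1) = M (a+2) * M (b+1) := by norm_num
      _ ≤ M 1 * M (a+b+2) := this
      _ = M 1 * M (a+1+b+1) := by ring_nf
end S9M

namespace S9M
variable {M : ℕ → ℝ} (hMpos : ∀ k, 0 < M k) (hM0 : M 0 = 1) (hM01 : 1 ≤ M 1)
  (hlc : ∀ k : ℕ, 1 ≤ k → (M k) ^ 2 ≤ M (k - 1) * M (k + 1))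

include hMpos hlc in
lemma Mprod : ∀ (j : ℕ) (d : Fin j → ℕ), 1 ≤ j →
    ∏ i, M (d i + 1) ≤ M 1 ^ (j-1) * M ((∑ i, d i) + 1) := by
  intro j
  induction j with
  | zero => intro d h; exact absurd h (by omega)
  | succ j ih =>
    intro d _
    rcases Nat.eq_zero_or_pos j with hj | hj
    · subst hj
      rw [Fin.prod_univ_one, Fin.sum_univ_one]
      simp
    · rw [Fin.prod_univ_succ, Fin.sum_univ_succ]
      have hI := ih (fun i => d i.succ) hj
      have hpos : 0 < M (d 0 + 1) := hMpos _
      calc M (d 0 + 1) * ∏ i : Fin j, M (d i.succ + 1)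
          ≤ M (d 0 + 1) * (M 1 ^ (j-1) * M ((∑ i : Fin j, d i.succ) + 1)) :=
            mul_le_mul_of_nonneg_left hI (le_of_lt hpos)
        _ = M 1 ^ (j-1) * (M (d 0 + 1) * M ((∑ i : Fin j, d i.succ) + 1)) := by ring
        _ ≤ M 1 ^ (j-1) * (M 1 * M (d 0 + (∑ i : Fin j, d i.succ) + 1)) := by
            exact mul_le_mul_of_nonneg_left (MAB1 hMpos hlc _ _)
              (pow_nonneg (hMpos 1).le _)
        _ = M 1 ^ (j+1-1) * M (d 0 + (∑ i : Fin j, d i.succ) + 1) := by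
            rw [show j+1-1 = (j-1)+1 from by omega, pow_succ]
            ring
end S9M

namespace S9M
variable {M : ℕ → ℝ} (hMpos : ∀ k, 0 < M k) (hM0 : M 0 = 1) (hM01 : 1 ≤ M 1)
  (hlc : ∀ k : ℕ, 1 ≤ k → (M k) ^ 2 ≤ M (k - 1) * M (k + 1))

include hMpos hM0 hM01 hlc in
lemma Mpart (k : ℕ) (c : OrderedFinpartition k) :
    M c.length * ∏ m, M (c.partSize m) ≤ M 1 ^ k * M k := by
  rcases Nat.eq_zero_or_pos k with hk | hk
  · subst hk
    have h0 : c.length = 0 := Nat.le_zero.mp c.length_le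
    haveI : IsEmpty (Fin c.length) := by rw [h0]; infer_instance
    rw [Finset.univ_eq_empty, Finset.prod_empty, h0, hM0]
    simp
  · have hj : 1 ≤ c.length := c.length_pos hk
    set j := c.length with hjdef
    set d : Fin c.length → ℕ := fun m => c.partSize m - 1 with hd
    have hds : ∀ m, c.partSize m = d m + 1 := fun m => by
      have := c.partSize_pos m
      simp only [hd]
      omega
    have hsum : (∑ m, d m) + j = k := by
      have h1 : ∑ m, c.partSize m = k := by
        have := Fintype.card_congr c.equivSigma
        simpa [Fintype.card_sigma] using this
      have h2 : ∑ m, c.partSize m = (∑ m, d m) + (j : ℕ) := by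
        rw [Finset.sum_congr rfl fun m _ => hds m, Finset.sum_add_distrib]
        simp [hjdef, Finset.card_univ]
      omega
    have hprod : ∏ m, M (c.partSize m) = ∏ m, M (d m + 1) :=
      Finset.prod_congr rfl fun m _ => by rw [hds m]
    have hP := Mprod hMpos hlc j d hj
    have hAB : M j * M ((∑ m, d m) + 1) ≤ M 1 * M k := by
      have := MAB1 hMpos hlc (j-1) (∑ m, d m)
      have hj1 : j - 1 + 1 = j := by omega
      have hj2 : j - 1 + (∑ m, d m) + 1 = k := by omega
      rw [hj1, hj2] at this
      calc M j * M ((∑ m, d m) + 1) = M (j-1+1) * M ((∑ m, d m) + 1) := by rw [hj1]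
        _ ≤ M 1 * M k := by
            have : M (j-1+1) * M ((∑ m, d m)+1) ≤ M 1 * M k := by
              have h := MAB1 hMpos hlc (j-1) (∑ m, d m)
              rw [hj2] at h
              exact h
            exact this
    calc M j * ∏ m, M (c.partSize m) = M j * ∏ m, M (d m + 1) := by rw [hprod]
      _ ≤ M j * (M 1 ^ (j-1) * M ((∑ m, d m) + 1)) :=
          mul_le_mul_of_nonneg_left hP (hMpos j).le
      _ = M 1 ^ (j-1) * (M j * M ((∑ m, d m) + 1)) := by ring
      _ ≤ M 1 ^ (j-1) * (M 1 * M k) :=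
          mul_le_mul_of_nonneg_left hAB (pow_nonneg (hMpos 1).le _)
      _ = M 1 ^ (j-1+1) * M k := by rw [pow_succ]; ring
      _ ≤ M 1 ^ k * M k := by
          refine mul_le_mul_of_nonneg_right ?_ (hMpos k).le
          refine pow_le_pow_right₀ hM01 ?_
          have : j ≤ k := by
            have h2 : ∑ m, c.partSize m = k := by
              have := Fintype.card_congr c.equivSigma
              simpa [Fintype.card_sigma] using this
            calc j = ∑ _m : Fin c.length, 1 := by simp [hjdef, Finset.card_univ]
              _ ≤ ∑ m, c.partSize m := Finset.sum_le_sum fun m _ => c.partSize_pos m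
              _ = k := h2
          omega

end S9M

set_option maxHeartbeats 2000000 in
/-- Gelfand–Shilov estimates are stable under composition with a smooth
diffeomorphism `g` with `g(x) - x → 0` at infinity and global `M`-estimates of order
`≥ 1`, where `M` is a log-convex weight sequence and `L_k ≥ 1`. -/
theorem statement_9 (M : ℕ → ℝ) (hMpos : ∀ k, 0 < M k) (hM0 : M 0 = 1) (hM01 : 1 ≤ M 1)
    (hlc : ∀ k : ℕ, 1 ≤ k → (M k) ^ 2 ≤ M (k - 1) * M (k + 1))
    (L : ℕ → ℝ) (hL : ∀ k, 1 ≤ L k)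
    (n : ℕ) (hn : 1 ≤ n)
    (g ginv : EuclideanSpace ℝ (Fin n) → EuclideanSpace ℝ (Fin n))
    (hg : ContDiff ℝ (⊤ : ℕ∞) g) (hginv : ContDiff ℝ (⊤ : ℕ∞) ginv)
    (hleft : Function.LeftInverse ginv g) (hright : Function.RightInverse ginv g)
    (hdecay : Tendsto (fun x => g x - x) (cocompact (EuclideanSpace ℝ (Fin n))) (nhds 0))
    (hgM : ∃ Cg ρg : ℝ, 0 < Cg ∧ 0 < ρg ∧ ∀ (k : ℕ), 1 ≤ k → ∀ x,
      ‖iteratedFDeriv ℝ k g x‖ ≤ Cg * ρg ^ k * (Nat.factorial k : ℝ) * M k)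
    (f : EuclideanSpace ℝ (Fin n) → EuclideanSpace ℝ (Fin n))
    (hf : ContDiff ℝ (⊤ : ℕ∞) f)
    (hfS : ∃ Cf ρf : ℝ, 0 < Cf ∧ 0 < ρf ∧
      ∀ (x : EuclideanSpace ℝ (Fin n)) (q : ℕ) (α : Fin n → ℕ) (i : Fin n),
        (1 + ‖x‖) ^ q * |pderivMulti α (fun y => f y i) x| ≤
          Cf * ρf ^ (q + msize α) * (Nat.factorial q : ℝ) * (Nat.factorial (msize α) : ℝ) *
            L q * M (msize α)) :
    ∃ C ρ : ℝ, 0 < C ∧ 0 < ρ ∧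
      ∀ (x : EuclideanSpace ℝ (Fin n)) (q : ℕ) (α : Fin n → ℕ) (i : Fin n),
        (1 + ‖x‖) ^ q * |pderivMulti α (fun y => f (g y) i) x| ≤
          C * ρ ^ (q + msize α) * (Nat.factorial q : ℝ) * (Nat.factorial (msize α) : ℝ) *
            L q * M (msize α) := by
  classical
  obtain ⟨Cg, ρg, hCg, hρg, hgbound⟩ := hgM
  obtain ⟨Cf, ρf, hCf, hρf, hfbound⟩ := hfS
  have hgSm : ContDiff ℝ ((⊤ : ℕ∞) : WithTop ℕ∞) g := hg.of_le (by simp)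
  have hfSm : ContDiff ℝ ((⊤ : ℕ∞) : WithTop ℕ∞) f := hf.of_le (by simp)
  -- global bound on ‖g x - x‖
  have hnorm : Tendsto (fun x => ‖g x - x‖) (cocompact (EuclideanSpace ℝ (Fin n))) (nhds 0) := by
    simpa using hdecay.norm
  have hev : ∀ᶠ x in cocompact (EuclideanSpace ℝ (Fin n)), ‖g x - x‖ < 1 :=
    hnorm.eventually (Iio_mem_nhds one_pos)
  obtain ⟨K, hKc, hKsub⟩ := Filter.mem_cocompact.mp hev
  obtain ⟨C0, hC0⟩ := hKc.exists_bound_of_continuousOn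
    ((hg.continuous.sub continuous_id).continuousOn)
  set B : ℝ := max 1 C0 with hBdef
  have hB1 : (1:ℝ) ≤ B := le_max_left _ _
  have hB : ∀ x, ‖g x - x‖ ≤ B := by
    intro x
    by_cases hx : x ∈ K
    · exact (hC0 x hx).trans (le_max_right _ _)
    · exact le_trans (le_of_lt (hKsub hx)) hB1
  have hgrow : ∀ x : EuclideanSpace ℝ (Fin n), 1 + ‖x‖ ≤ (1 + B) * (1 + ‖g x‖) := by
    intro x
    have h1 : ‖x‖ ≤ ‖g x‖ + B := by
      have he : ‖x‖ = ‖g x - (g x - x)‖ := by congr 1; abel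
      rw [he]
      exact (norm_sub_le _ _).trans (by gcongr; exact hB x)
    nlinarith [norm_nonneg (g x), norm_nonneg x]
  -- constants
  set A : ℝ := max 1 ((n:ℝ) * ρf * Cg) with hAdef
  have hA1 : (1:ℝ) ≤ A := le_max_left _ _
  set P : ℝ := max 1 ρf with hPdef
  have hP1 : (1:ℝ) ≤ P := le_max_left _ _
  set Q : ℝ := max 1 ρg with hQdef
  have hQ1 : (1:ℝ) ≤ Q := le_max_left _ _
  have hM1 : (1:ℝ) ≤ M 1 := hM01
  set ρ : ℝ := (1 + B) * P * Q * M 1 * (A + 2) with hρdef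
  have hρpos : 0 < ρ :=
    mul_pos (mul_pos (mul_pos (mul_pos (by linarith : (0:ℝ) < 1 + B)
      (lt_of_lt_of_le one_pos hP1)) (lt_of_lt_of_le one_pos hQ1)) (hMpos 1))
      (by linarith : (0:ℝ) < A + 2)
  refine ⟨Cf, ρ, hCf, hρpos, ?_⟩
  intro x q α i
  set k := msize α with hkdef
  set W : ℝ := (1 + ‖g x‖) ^ q with hWdef
  have hWpos : (0:ℝ) < W := by positivity
  have hh : ContDiff ℝ ((⊤ : ℕ∞) : WithTop ℕ∞) (fun z => f z i) := by
    have h2 : ContDiff ℝ ((⊤ : ℕ∞) : WithTop ℕ∞)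
        ((EuclideanSpace.proj (𝕜 := ℝ) i) ∘ f) :=
      (EuclideanSpace.proj (𝕜 := ℝ) i).contDiff.comp hfSm
    simpa [Function.comp_def, PiLp.proj_apply] using h2
  have hcomp : ContDiff ℝ ((⊤ : ℕ∞) : WithTop ℕ∞) (fun z => f (g z) i) := hh.comp hgSm
  have step1 : |pderivMulti α (fun z => f (g z) i) x| ≤
      ‖iteratedFDeriv ℝ k ((fun z => f z i) ∘ g) x‖ := abs_pderivMulti_le α hcomp x
  have hLq : (1:ℝ) ≤ L q := hL q
  have hLq0 : (0:ℝ) < L q := lt_of_lt_of_le one_pos hLq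
  set D : ℝ := (Cf * (q.factorial : ℝ) * L q * ρf ^ q) * (Q ^ k * (M 1 ^ k * M k)) with hDdef
  have hqf : (0:ℝ) < (q.factorial : ℝ) := by exact_mod_cast q.factorial_pos
  have hD0 : 0 ≤ D := by
    apply mul_nonneg
    · exact mul_nonneg (mul_nonneg (mul_nonneg hCf.le hqf.le) hLq0.le) (pow_nonneg hρf.le _)
    · exact mul_nonneg (pow_nonneg (by linarith) _)
        (mul_nonneg (pow_nonneg (hMpos 1).le _) (hMpos k).le)
  have hterm : ∀ c : OrderedFinpartition k,
      W * (‖iteratedFDeriv ℝ c.length (fun z => f z i) (g x)‖ *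
        ∏ m, ‖iteratedFDeriv ℝ (c.partSize m) g x‖) ≤
      D * (A ^ c.length * ((c.length).factorial : ℝ) *
        ∏ m, (((c.partSize m).factorial : ℝ))) := by
    intro c
    set j := c.length with hjdef
    set Num : ℝ := Cf * ρf ^ (q + j) * (q.factorial : ℝ) * (j.factorial : ℝ) * L q * M j
      with hNum
    have hjf : (0:ℝ) < (j.factorial : ℝ) := by exact_mod_cast j.factorial_pos
    have hNumpos : 0 < Num :=
      mul_pos (mul_pos (mul_pos (mul_pos (mul_pos hCf (pow_pos hρf _)) hqf) hjf) hLq0) (hMpos j)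
    have h1 : ‖iteratedFDeriv ℝ j (fun z => f z i) (g x)‖ ≤ (n:ℝ) ^ j * (Num / W) := by
      apply norm_iteratedFDeriv_le_of_pderiv j hh (g x) (div_nonneg hNumpos.le hWpos.le)
      intro α' hα'
      rw [le_div_iff₀ hWpos]
      have hfb := hfbound (g x) q α' i
      rw [hα'] at hfb
      calc |pderivMulti α' (fun z => f z i) (g x)| * W
          = W * |pderivMulti α' (fun z => f z i) (g x)| := mul_comm _ _
        _ ≤ Num := hfb
    have h2 : ∏ m, ‖iteratedFDeriv ℝ (c.partSize m) g x‖ ≤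
        ∏ m, (Cg * ρg ^ (c.partSize m) * ((c.partSize m).factorial : ℝ) * M (c.partSize m)) :=
      Finset.prod_le_prod (fun m _ => norm_nonneg _)
        (fun m _ => hgbound (c.partSize m) (c.partSize_pos m) x)
    have hprodnn : (0:ℝ) ≤ ∏ m, ‖iteratedFDeriv ℝ (c.partSize m) g x‖ :=
      Finset.prod_nonneg (fun m _ => norm_nonneg _)
    have hexp : ∏ m, (Cg * ρg ^ (c.partSize m) * ((c.partSize m).factorial : ℝ) * M (c.partSize m)) =
        Cg ^ j * ρg ^ k * (∏ m, ((c.partSize m).factorial : ℝ)) * (∏ m, M (c.partSize m)) := by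
      simp only [Finset.prod_mul_distrib]
      rw [Finset.prod_pow_eq_pow_sum, S9.sum_partSize c]
      simp [hjdef, Finset.card_univ]
    have chain : W * (‖iteratedFDeriv ℝ j (fun z => f z i) (g x)‖ *
        ∏ m, ‖iteratedFDeriv ℝ (c.partSize m) g x‖) ≤
        W * (((n:ℝ) ^ j * (Num / W)) *
          (Cg ^ j * ρg ^ k * (∏ m, ((c.partSize m).factorial : ℝ)) * (∏ m, M (c.partSize m)))) := by
      apply mul_le_mul_of_nonneg_left _ hWpos.le
      rw [← hexp]
      exact mul_le_mul h1 h2 hprodnn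
        (mul_nonneg (pow_nonneg (Nat.cast_nonneg n) _) (div_nonneg hNumpos.le hWpos.le))
    have hcancel : W * (((n:ℝ) ^ j * (Num / W)) *
        (Cg ^ j * ρg ^ k * (∏ m, ((c.partSize m).factorial : ℝ)) * (∏ m, M (c.partSize m)))) =
        ((n:ℝ) ^ j * Num) *
          (Cg ^ j * ρg ^ k * (∏ m, ((c.partSize m).factorial : ℝ)) * (∏ m, M (c.partSize m))) := by
      field_simp
    refine chain.trans ?_
    rw [hcancel]
    have i1 : ((n:ℝ) * ρf * Cg) ^ j ≤ A ^ j :=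
      pow_le_pow_left₀ (mul_nonneg (mul_nonneg (Nat.cast_nonneg n) hρf.le) hCg.le)
        (le_max_right _ _) _
    have i2 : ρg ^ k ≤ Q ^ k := pow_le_pow_left₀ hρg.le (le_max_right _ _) _
    have i3 : M j * ∏ m, M (c.partSize m) ≤ M 1 ^ k * M k := S9M.Mpart hMpos hM0 hM01 hlc k c
    have hfacnn : (0:ℝ) ≤ ∏ m, ((c.partSize m).factorial : ℝ) :=
      Finset.prod_nonneg fun m _ => by positivity
    have hMprodnn : (0:ℝ) ≤ ∏ m, M (c.partSize m) :=
      Finset.prod_nonneg fun m _ => (hMpos _).le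
    have big : ((n:ℝ) * ρf * Cg) ^ j * (ρg ^ k * (M j * ∏ m, M (c.partSize m))) ≤
        A ^ j * (Q ^ k * (M 1 ^ k * M k)) := by
      apply mul_le_mul i1 _ _ (pow_nonneg (by linarith) _)
      · exact mul_le_mul i2 i3 (mul_nonneg (hMpos j).le hMprodnn) (pow_nonneg (by linarith) _)
      · exact mul_nonneg (pow_nonneg hρg.le _) (mul_nonneg (hMpos j).le hMprodnn)
    calc ((n:ℝ) ^ j * Num) *
          (Cg ^ j * ρg ^ k * (∏ m, ((c.partSize m).factorial : ℝ)) * (∏ m, M (c.partSize m)))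
        = (Cf * (q.factorial : ℝ) * L q * ρf ^ q) *
            (((n:ℝ) * ρf * Cg) ^ j * (ρg ^ k * (M j * ∏ m, M (c.partSize m)))) *
            ((j.factorial : ℝ) * ∏ m, ((c.partSize m).factorial : ℝ)) := by
          rw [hNum, mul_pow, mul_pow, pow_add]
          ring
      _ ≤ (Cf * (q.factorial : ℝ) * L q * ρf ^ q) *
            (A ^ j * (Q ^ k * (M 1 ^ k * M k))) *
            ((j.factorial : ℝ) * ∏ m, ((c.partSize m).factorial : ℝ)) := by
          apply mul_le_mul_of_nonneg_right _ (mul_nonneg hjf.le hfacnn)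
          exact mul_le_mul_of_nonneg_left big
            (mul_nonneg (mul_nonneg (mul_nonneg hCf.le hqf.le) hLq0.le) (pow_nonneg hρf.le _))
      _ = D * (A ^ j * ((j.factorial : ℝ)) * ∏ m, (((c.partSize m).factorial : ℝ))) := by
          rw [hDdef]; ring
  -- sum over ordered finpartitions
  have step2 : W * ‖iteratedFDeriv ℝ k ((fun z => f z i) ∘ g) x‖ ≤
      D * ((A + 2) ^ k * (k.factorial : ℝ)) := by
    rw [S9.iteratedFDeriv_comp_eq_sum hh hgSm k x]
    calc W * ‖∑ c : OrderedFinpartition k,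
          (ftaylorSeries ℝ (fun z => f z i) (g x)).compAlongOrderedFinpartition
            (ftaylorSeries ℝ g x) c‖
        ≤ W * ∑ c : OrderedFinpartition k,
            ‖(ftaylorSeries ℝ (fun z => f z i) (g x)).compAlongOrderedFinpartition
              (ftaylorSeries ℝ g x) c‖ :=
          mul_le_mul_of_nonneg_left (norm_sum_le _ _) hWpos.le
      _ ≤ W * ∑ c : OrderedFinpartition k,
            (‖iteratedFDeriv ℝ c.length (fun z => f z i) (g x)‖ *
              ∏ m, ‖iteratedFDeriv ℝ (c.partSize m) g x‖) := by
          apply mul_le_mul_of_nonneg_left _ hWpos.le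
          exact Finset.sum_le_sum fun c _ => S9.norm_compAlong _ _ c
      _ = ∑ c : OrderedFinpartition k,
            W * (‖iteratedFDeriv ℝ c.length (fun z => f z i) (g x)‖ *
              ∏ m, ‖iteratedFDeriv ℝ (c.partSize m) g x‖) := Finset.mul_sum _ _ _
      _ ≤ ∑ c : OrderedFinpartition k,
            D * (A ^ c.length * ((c.length).factorial : ℝ) *
              ∏ m, (((c.partSize m).factorial : ℝ))) :=
          Finset.sum_le_sum fun c _ => hterm c
      _ = D * ∑ c : OrderedFinpartition k,
            A ^ c.length * ((c.length).factorial : ℝ) *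
              ∏ m, (((c.partSize m).factorial : ℝ)) := (Finset.mul_sum _ _ _).symm
      _ ≤ D * ((A + 2) ^ k * (k.factorial : ℝ)) :=
          mul_le_mul_of_nonneg_left (S9.comb_bound A hA1 k) hD0
  -- final assembly
  have mul1 : ∀ a b : ℝ, 1 ≤ a → 1 ≤ b → 1 ≤ a * b := fun a b ha hb => by nlinarith
  have hQMA : (1:ℝ) ≤ Q * M 1 * (A + 2) :=
    mul1 _ _ (mul1 _ _ hQ1 hM1) (by linarith)
  have hBP : (1:ℝ) ≤ (1 + B) * P := mul1 _ _ (by linarith) hP1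
  have e1 : (1 + B) * ρf ≤ ρ := by
    have h1 : (1 + B) * ρf ≤ (1 + B) * P :=
      mul_le_mul_of_nonneg_left (le_max_right _ _) (by linarith)
    have h2 : (1 + B) * P ≤ ((1 + B) * P) * (Q * M 1 * (A + 2)) :=
      le_mul_of_one_le_right (by nlinarith) hQMA
    calc (1 + B) * ρf ≤ ((1 + B) * P) * (Q * M 1 * (A + 2)) := h1.trans h2
      _ = ρ := by rw [hρdef]; ring
  have e2 : Q * M 1 * (A + 2) ≤ ρ := by
    have h2 : 1 * (Q * M 1 * (A + 2)) ≤ ((1 + B) * P) * (Q * M 1 * (A + 2)) :=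
      mul_le_mul_of_nonneg_right hBP (le_trans zero_le_one hQMA)
    calc Q * M 1 * (A + 2) = 1 * (Q * M 1 * (A + 2)) := (one_mul _).symm
      _ ≤ ((1 + B) * P) * (Q * M 1 * (A + 2)) := h2
      _ = ρ := by rw [hρdef]; ring
  have hkf : (0:ℝ) < (k.factorial : ℝ) := by exact_mod_cast k.factorial_pos
  calc (1 + ‖x‖) ^ q * |pderivMulti α (fun y => f (g y) i) x|
      ≤ ((1 + B) * (1 + ‖g x‖)) ^ q * ‖iteratedFDeriv ℝ k ((fun z => f z i) ∘ g) x‖ :=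
        mul_le_mul (pow_le_pow_left₀ (by positivity) (hgrow x) q) step1 (abs_nonneg _)
          (pow_nonneg (mul_nonneg (by linarith) (by positivity)) _)
    _ = (1 + B) ^ q * (W * ‖iteratedFDeriv ℝ k ((fun z => f z i) ∘ g) x‖) := by
        rw [hWdef, mul_pow]; ring
    _ ≤ (1 + B) ^ q * (D * ((A + 2) ^ k * (k.factorial : ℝ))) :=
        mul_le_mul_of_nonneg_left step2 (pow_nonneg (by linarith) _)
    _ = (((1 + B) * ρf) ^ q * (Q * M 1 * (A + 2)) ^ k) *
          (Cf * (q.factorial : ℝ) * (k.factorial : ℝ) * L q * M k) := by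
        rw [hDdef, mul_pow, mul_pow, mul_pow]
        ring
    _ ≤ (ρ ^ q * ρ ^ k) * (Cf * (q.factorial : ℝ) * (k.factorial : ℝ) * L q * M k) := by
        apply mul_le_mul_of_nonneg_right
        · exact mul_le_mul (pow_le_pow_left₀ (mul_nonneg (by linarith) hρf.le) e1 q)
            (pow_le_pow_left₀ (le_trans zero_le_one hQMA) e2 k)
            (pow_nonneg (le_trans zero_le_one hQMA) _) (pow_nonneg hρpos.le _)
        · exact mul_nonneg (mul_nonneg (mul_nonneg (mul_nonneg hCf.le hqf.le) hkf.le) hLq0.le)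
            (hMpos k).le
    _ = Cf * ρ ^ (q + k) * (q.factorial : ℝ) * (k.factorial : ℝ) * L q * M k := by
        rw [pow_add]; ring
end

section
/- Let M = (M_k) be a derivation-closed weight sequence, let m ≥ 1, and let 1 ≤ p < q ≤ ∞. Suppose f : ℝᵐ → ℝ is smooth and there exist C, σ > 0 such that ‖∂^α f‖_{L^p(ℝᵐ)} ≤ C·σ^{|α|}·|α|!·M_{|α|} for every multi-index α ∈ ℕᵐ. Then there exist C′, σ′ > 0 such that ‖∂^α f‖_{L^q(ℝᵐ)} ≤ C′·σ′^{|α|}·|α|!·M_{|α|} for every multi-index α ∈ ℕᵐ (where for q = ∞ the norm ‖·‖_{L^∞(ℝᵐ)} is the essential supremum). -/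
open MeasureTheory

open Set
open scoped ENNReal NNReal

section A
variable {n : ℕ}

lemma contDiff_pd {f : EuclideanSpace ℝ (Fin n) → ℝ} (hf : ContDiff ℝ (⊤ : ℕ∞) f) (i : Fin n) :
    ContDiff ℝ (⊤ : ℕ∞) (fun x => fderiv ℝ f x (EuclideanSpace.single i 1)) :=
  (hf.fderiv_right (by simp)).clm_apply contDiff_const

lemma contDiff_pderivList {f : EuclideanSpace ℝ (Fin n) → ℝ} (L : List (Fin n))
    (hf : ContDiff ℝ (⊤ : ℕ∞) f) : ContDiff ℝ (⊤ : ℕ∞) (pderivList L f) := by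
  induction L generalizing f with
  | nil => exact hf
  | cons i t ih => exact ih (contDiff_pd hf i)

lemma pderivList_append (L₁ L₂ : List (Fin n)) (f : EuclideanSpace ℝ (Fin n) → ℝ) :
    pderivList (L₁ ++ L₂) f = pderivList L₂ (pderivList L₁ f) := by
  induction L₁ generalizing f with
  | nil => rfl
  | cons i t ih => show pderivList (t ++ L₂) _ = _; rw [ih]; rfl

lemma pd_comm {f : EuclideanSpace ℝ (Fin n) → ℝ} (hf : ContDiff ℝ (⊤ : ℕ∞) f) (i j : Fin n) :
    (fun x => fderiv ℝ (fun y => fderiv ℝ f y (EuclideanSpace.single i 1)) x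
      (EuclideanSpace.single j 1)) =
    (fun x => fderiv ℝ (fun y => fderiv ℝ f y (EuclideanSpace.single j 1)) x
      (EuclideanSpace.single i 1)) := by
  funext x
  have hd : ∀ z, DifferentiableAt ℝ (fderiv ℝ f) z :=
    fun z => ((hf.fderiv_right (m := 1) (WithTop.coe_le_coe.mpr le_top)).differentiable one_ne_zero).differentiableAt
  have h1 : ∀ (v : EuclideanSpace ℝ (Fin n)),
      fderiv ℝ (fun y => fderiv ℝ f y v) x = (fderiv ℝ (fderiv ℝ f) x).flip v := by
    intro v
    have := fderiv_clm_apply (hd x) (differentiableAt_const v)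
    simpa using this
  have hsymm : IsSymmSndFDerivAt ℝ f x := (hf.contDiffAt).isSymmSndFDerivAt (by simp only [minSmoothness_of_isRCLikeNormedField]; exact WithTop.coe_le_coe.mpr (le_top : (2:ℕ∞) ≤ ⊤))
  rw [h1, h1]
  simpa using (hsymm (EuclideanSpace.single i 1) (EuclideanSpace.single j 1)).symm

lemma pderivList_perm {f : EuclideanSpace ℝ (Fin n) → ℝ} {L₁ L₂ : List (Fin n)}
    (hp : L₁.Perm L₂) (hf : ContDiff ℝ (⊤ : ℕ∞) f) : pderivList L₁ f = pderivList L₂ f := by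
  induction hp generalizing f with
  | nil => rfl
  | cons i t ih => simpa only [pderivList] using ih (contDiff_pd hf i)
  | swap i j t =>
      simp only [pderivList]
      rw [pd_comm hf j i]
  | trans h₁ h₂ ih₁ ih₂ => exact (ih₁ hf).trans (ih₂ hf)
end A

lemma oneDim {u : ℝ → ℝ} (hu : ContDiff ℝ (⊤ : ℕ∞) u) {a τ : ℝ} (hτ : τ ∈ Set.Icc a (a + 1)) :
    (‖u τ‖₊ : ℝ≥0∞) ≤ ∫⁻ t in Set.Icc a (a + 1), ((‖u t‖₊ : ℝ≥0∞) + ‖deriv u t‖₊) := by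
  have hcu : Continuous u := hu.continuous
  have hcd : Continuous (deriv u) := hu.continuous_deriv (by simp)
  set I := Set.Icc a (a + 1) with hI
  have hvol : volume I = 1 := by
    rw [hI, Real.volume_Icc]; norm_num
  set K : ℝ≥0∞ := ∫⁻ t in I, (‖deriv u t‖₊ : ℝ≥0∞) with hK
  have key : ∀ y ∈ I, (‖u τ‖₊ : ℝ≥0∞) ≤ (‖u y‖₊ : ℝ≥0∞) + K := by
    intro y hy
    have hftc : ∫ t in y..τ, deriv u t = u τ - u y :=
      intervalIntegral.integral_deriv_eq_sub
        (fun x _ => (hu.differentiable (by simp) x))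
        (hcd.intervalIntegrable _ _)
    have h1 : (‖u τ‖₊ : ℝ≥0∞) ≤ (‖u y‖₊ : ℝ≥0∞) + ‖u τ - u y‖₊ := by
      have h : ‖u τ‖₊ ≤ ‖u y‖₊ + ‖u τ - u y‖₊ := by
        have h2 : u τ = u y + (u τ - u y) := by ring
        nth_rewrite 1 [h2]; exact nnnorm_add_le _ _
      exact_mod_cast h
    refine h1.trans (add_le_add_right ?_ _)
    rw [← hftc, intervalIntegral.intervalIntegral_eq_integral_uIoc]
    have h2 : (‖(if y ≤ τ then (1:ℝ) else -1) • ∫ t in Set.uIoc y τ, deriv u t‖₊ : ℝ≥0∞)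
        = ‖∫ t in Set.uIoc y τ, deriv u t‖₊ := by
      split <;> simp
    rw [h2]
    refine (MeasureTheory.enorm_integral_le_lintegral_enorm _).trans ?_
    refine lintegral_mono_set ?_
    intro t ht
    rcases Set.mem_uIoc.mp ht with h | h
    · exact ⟨le_trans hy.1 (le_of_lt h.1), le_trans h.2 hτ.2⟩
    · exact ⟨le_trans hτ.1 (le_of_lt h.1), le_trans h.2 hy.2⟩
  have h3 : (‖u τ‖₊ : ℝ≥0∞) = ∫⁻ _ in I, (‖u τ‖₊ : ℝ≥0∞) := by
    rw [MeasureTheory.setLIntegral_const, hvol, mul_one]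
  rw [h3]
  have h4 : ∫⁻ _ in I, ((‖u τ‖₊ : ℝ≥0∞)) ≤ ∫⁻ y in I, ((‖u y‖₊ : ℝ≥0∞) + K) :=
    setLIntegral_mono (by fun_prop) key
  refine h4.trans ?_
  rw [lintegral_add_right _ measurable_const, MeasureTheory.setLIntegral_const, hvol, mul_one,
    ← lintegral_add_right]
  fun_prop

/-! ## Core multi-dimensional estimate -/
section C
variable {m : ℕ}

noncomputable def toE : (Fin m → ℝ) → EuclideanSpace ℝ (Fin m) :=
  (WithLp.equiv 2 (Fin m → ℝ)).symm

lemma continuous_toE : Continuous (toE (m := m)) := PiLp.continuous_toLp _ _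

noncomputable def chi (x : Fin m → ℝ) (i : Fin m) (t : ℝ) : ℝ≥0∞ :=
  (Set.Icc (x i - 1) (x i)).indicator (fun _ => (1:ℝ≥0∞)) t

lemma chi_le_one (x : Fin m → ℝ) (i : Fin m) (t : ℝ) : chi x i t ≤ 1 := by
  unfold chi; unfold Set.indicator; split <;> simp

lemma measurable_chi (x : Fin m → ℝ) (i : Fin m) : Measurable (chi x i) :=
  Measurable.indicator measurable_const measurableSet_Icc

noncomputable def FF (g : EuclideanSpace ℝ (Fin m) → ℝ) (x : Fin m → ℝ) (S : Finset (Fin m)) :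
    (Fin m → ℝ) → ℝ≥0∞ :=
  fun y => (‖pderivList S.toList g (toE y)‖₊ : ℝ≥0∞) * ∏ i, chi x i (y i)

lemma measurable_FF {g : EuclideanSpace ℝ (Fin m) → ℝ} (hg : ContDiff ℝ (⊤ : ℕ∞) g)
    (x : Fin m → ℝ) (S : Finset (Fin m)) : Measurable (FF g x S) := by
  apply Measurable.mul
  · exact (measurable_coe_nnreal_ennreal.comp
      (((contDiff_pderivList S.toList hg).continuous.comp continuous_toE).measurable.nnnorm))
  · exact Finset.measurable_prod _ fun i _ =>
      (measurable_chi x i).comp (measurable_pi_apply i)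

lemma pderivList_insert {g : EuclideanSpace ℝ (Fin m) → ℝ} (hg : ContDiff ℝ (⊤ : ℕ∞) g)
    {S : Finset (Fin m)} {j : Fin m} (hj : j ∉ S) :
    pderivList (insert j S).toList g =
      fun w => fderiv ℝ (pderivList S.toList g) w (EuclideanSpace.single j 1) := by
  have h1 : (insert j S).toList.Perm (S.toList ++ [j]) :=
    (Finset.toList_insert hj).trans (List.perm_append_singleton j S.toList).symm
  rw [pderivList_perm h1 hg, pderivList_append]
  rfl

lemma hasDerivAt_along {h : EuclideanSpace ℝ (Fin m) → ℝ} (hh : ContDiff ℝ (⊤ : ℕ∞) h)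
    (z : Fin m → ℝ) (j : Fin m) (t : ℝ) :
    HasDerivAt (fun s => h (toE (Function.update z j s)))
      (fderiv ℝ h (toE (Function.update z j t)) (EuclideanSpace.single j 1)) t := by
  have hγ : ∀ s : ℝ, toE (Function.update z j s) =
      toE (Function.update z j 0) + s • EuclideanSpace.single j 1 := by
    intro s
    apply PiLp.ext
    intro i
    by_cases hij : i = j
    · subst hij
      simp [toE, Function.update_self, EuclideanSpace.single_apply]
    · simp [toE, Function.update_of_ne hij, EuclideanSpace.single_apply, hij]
  have hd : HasDerivAt (fun s : ℝ => toE (Function.update z j 0) +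
      s • EuclideanSpace.single (𝕜 := ℝ) j (1:ℝ)) (EuclideanSpace.single j 1) t := by
    simpa using (((hasDerivAt_id t).smul_const (EuclideanSpace.single (𝕜 := ℝ) j (1:ℝ)))).const_add
      (toE (Function.update z j 0))
  have hd2 : HasDerivAt (fun s => toE (Function.update z j s))
      (EuclideanSpace.single j 1) t := by
    simpa only [← hγ] using hd
  exact ((hh.differentiable (by simp) _).hasFDerivAt).comp_hasDerivAt t hd2
end C

section C2
variable {m : ℕ}

lemma toE_update_eq (z : Fin m → ℝ) (j : Fin m) :
    (fun s : ℝ => toE (Function.update z j s)) =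
      fun s => toE (Function.update z j 0) + s • EuclideanSpace.single j 1 := by
  funext s
  apply PiLp.ext
  intro i
  by_cases hij : i = j
  · subst hij
    simp [toE, Function.update_self, EuclideanSpace.single_apply]
  · simp [toE, Function.update_of_ne hij, EuclideanSpace.single_apply, hij]

lemma contDiff_along {h : EuclideanSpace ℝ (Fin m) → ℝ} (hh : ContDiff ℝ (⊤ : ℕ∞) h)
    (z : Fin m → ℝ) (j : Fin m) :
    ContDiff ℝ (⊤ : ℕ∞) (fun s : ℝ => h (toE (Function.update z j s))) := by
  have : ContDiff ℝ (⊤ : ℕ∞) (fun s : ℝ => toE (Function.update z j s)) := by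
    rw [toE_update_eq]
    exact contDiff_const.add (contDiff_id.smul contDiff_const)
  exact hh.comp this

lemma lmarginal_add' {s : Finset (Fin m)} {F G : (Fin m → ℝ) → ℝ≥0∞}
    (hF : Measurable F) (x : Fin m → ℝ) :
    (∫⋯∫⁻_s, (fun z => F z + G z) ∂(fun _ => (volume : Measure ℝ))) x =
      (∫⋯∫⁻_s, F ∂(fun _ => (volume : Measure ℝ))) x
        + (∫⋯∫⁻_s, G ∂(fun _ => (volume : Measure ℝ))) x := by
  unfold lmarginal
  exact lintegral_add_left (hF.comp measurable_updateFinset) _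

lemma step_pointwise {g : EuclideanSpace ℝ (Fin m) → ℝ} (hg : ContDiff ℝ (⊤ : ℕ∞) g)
    (x : Fin m → ℝ) {S : Finset (Fin m)} {j : Fin m} (hj : j ∉ S) (z : Fin m → ℝ) :
    FF g x S z ≤ (∫⁻ t, FF g x S (Function.update z j t))
      + (∫⁻ t, FF g x (insert j S) (Function.update z j t)) := by
  set h := pderivList S.toList g with hh_def
  have hh : ContDiff ℝ (⊤ : ℕ∞) h := contDiff_pderivList _ hg
  set u : ℝ → ℝ := fun t => h (toE (Function.update z j t)) with hu_def
  have hu : ContDiff ℝ (⊤ : ℕ∞) u := contDiff_along hh z j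
  have hderiv : ∀ t, deriv u t
      = fderiv ℝ h (toE (Function.update z j t)) (EuclideanSpace.single j 1) :=
    fun t => (hasDerivAt_along hh z j t).deriv
  set R : ℝ≥0∞ := ∏ i ∈ Finset.univ.erase j, chi x i (z i) with hR_def
  have hR1 : R ≤ 1 := Finset.prod_le_one (fun _ _ => zero_le) (fun i _ => chi_le_one x i (z i))
  have hRtop : R ≠ ∞ := (hR1.trans_lt (by norm_num)).ne
  have hprod : ∀ t, (∏ i, chi x i (Function.update z j t i)) = chi x j t * R := by
    intro t
    have he : (fun i => chi x i (Function.update z j t i))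
        = Function.update (fun i => chi x i (z i)) j (chi x j t) := by
      funext i
      by_cases hij : i = j
      · subst hij; simp
      · simp [Function.update_of_ne hij]
    rw [he, Finset.prod_update_of_mem (Finset.mem_univ j),
      Finset.sdiff_singleton_eq_erase]
  have hFS : ∀ t, FF g x S (Function.update z j t) = ((‖u t‖₊ : ℝ≥0∞) * chi x j t) * R := by
    intro t
    rw [FF, hprod t, ← mul_assoc]
  have hFjS : ∀ t, FF g x (insert j S) (Function.update z j t)
      = ((‖deriv u t‖₊ : ℝ≥0∞) * chi x j t) * R := by
    intro t
    rw [FF, hprod t, ← mul_assoc, pderivList_insert hg hj, hderiv t]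
  -- rewrite the two integrals
  have hmeas1 : Measurable fun t => (‖u t‖₊ : ℝ≥0∞) * chi x j t := by
    have h1 := measurable_chi x j
    have h2 : Continuous u := hu.continuous
    fun_prop
  have hmeas2 : Measurable fun t => (‖deriv u t‖₊ : ℝ≥0∞) * chi x j t := by
    have h1 := measurable_chi x j
    have h2 : Continuous (deriv u) := hu.continuous_deriv (by simp)
    fun_prop
  have hI1 : (∫⁻ t, FF g x S (Function.update z j t))
      = (∫⁻ t, (‖u t‖₊ : ℝ≥0∞) * chi x j t) * R := by
    simp_rw [hFS]
    exact lintegral_mul_const' R _ hRtop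
  have hI2 : (∫⁻ t, FF g x (insert j S) (Function.update z j t))
      = (∫⁻ t, (‖deriv u t‖₊ : ℝ≥0∞) * chi x j t) * R := by
    simp_rw [hFjS]
    exact lintegral_mul_const' R _ hRtop
  rw [hI1, hI2, ← add_mul]
  have hLHS : FF g x S z = ((‖u (z j)‖₊ : ℝ≥0∞) * chi x j (z j)) * R := by
    have := hFS (z j)
    rwa [Function.update_eq_self] at this
  rw [hLHS]
  by_cases hzj : z j ∈ Set.Icc (x j - 1) (x j)
  · have hchi1 : chi x j (z j) = 1 := Set.indicator_of_mem hzj _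
    rw [hchi1, mul_one]
    refine mul_le_mul_left ?_ R
    have hsum : (∫⁻ t, (‖u t‖₊ : ℝ≥0∞) * chi x j t) + ∫⁻ t, (‖deriv u t‖₊ : ℝ≥0∞) * chi x j t
        = ∫⁻ t, ((‖u t‖₊ : ℝ≥0∞) + ‖deriv u t‖₊) * chi x j t := by
      rw [← lintegral_add_left hmeas1]
      congr 1
      funext t
      ring
    rw [hsum]
    have hind : ∀ t, ((‖u t‖₊ : ℝ≥0∞) + ‖deriv u t‖₊) * chi x j t
        = (Set.Icc (x j - 1) (x j)).indicator
            (fun t => ((‖u t‖₊ : ℝ≥0∞) + ‖deriv u t‖₊)) t := by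
      intro t
      by_cases ht : t ∈ Set.Icc (x j - 1) (x j)
      · rw [Set.indicator_of_mem ht, chi, Set.indicator_of_mem ht, mul_one]
      · rw [Set.indicator_of_notMem ht, chi, Set.indicator_of_notMem ht, mul_zero]
    simp_rw [hind]
    rw [lintegral_indicator measurableSet_Icc]
    have heq : x j - 1 + 1 = x j := by ring
    have hzj' : z j ∈ Set.Icc (x j - 1) (x j - 1 + 1) := by rw [heq]; exact hzj
    have := oneDim hu hzj'
    rwa [heq] at this
  · have hchi0 : chi x j (z j) = 0 := Set.indicator_of_notMem hzj _
    rw [hchi0, mul_zero, zero_mul]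
    exact zero_le
end C2

section C3
variable {m : ℕ}

lemma core {g : EuclideanSpace ℝ (Fin m) → ℝ} (hg : ContDiff ℝ (⊤ : ℕ∞) g) (x : Fin m → ℝ)
    (s : Finset (Fin m)) :
    (‖g (toE x)‖₊ : ℝ≥0∞) ≤
      ∑ S ∈ s.powerset, (∫⋯∫⁻_s, FF g x S ∂(fun _ => (volume : Measure ℝ))) x := by
  classical
  induction s using Finset.induction_on with
  | empty =>
      rw [Finset.powerset_empty, Finset.sum_singleton, lmarginal_empty]
      apply le_of_eq
      rw [FF]
      have : ∀ i, chi x i (x i) = 1 := by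
        intro i
        exact Set.indicator_of_mem (Set.mem_Icc.mpr ⟨by linarith, le_refl _⟩) _
      simp [this, Finset.toList_empty]
      rfl
  | @insert j s hj ih =>
      refine ih.trans ?_
      rw [Finset.powerset_insert, Finset.sum_union, Finset.sum_image]
      rotate_left
      · intro S hS T hT hST
        have hjS : j ∉ S := fun h => hj (Finset.mem_powerset.mp hS h)
        have hjT : j ∉ T := fun h => hj (Finset.mem_powerset.mp hT h)
        rw [← Finset.erase_insert hjS, ← Finset.erase_insert hjT, hST]
      · rw [Finset.disjoint_left]
        intro S hS hS'
        obtain ⟨T, hT, rfl⟩ := Finset.mem_image.mp hS'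
        exact hj (Finset.mem_powerset.mp hS (Finset.mem_insert_self j T))
      rw [← Finset.sum_add_distrib]
      refine Finset.sum_le_sum ?_
      intro S hS
      have hjS : j ∉ S := fun h => hj (Finset.mem_powerset.mp hS h)
      have hins : ∀ (F : (Fin m → ℝ) → ℝ≥0∞), Measurable F →
          (∫⋯∫⁻_insert j s, F ∂(fun _ => (volume : Measure ℝ)))
            = ∫⋯∫⁻_s, (∫⋯∫⁻_{j}, F ∂(fun _ => (volume : Measure ℝ)))
                ∂(fun _ => (volume : Measure ℝ)) := by
        intro F hF
        rw [Finset.insert_eq, Finset.union_comm,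
          lmarginal_union (fun _ => (volume : Measure ℝ)) F hF
            (Finset.disjoint_singleton_right.mpr hj)]
      rw [hins _ (measurable_FF hg x S), hins _ (measurable_FF hg x (insert j S)),
        ← lmarginal_add' ((measurable_FF hg x S).lmarginal _)]
      refine lmarginal_mono (fun z => ?_) x
      rw [lmarginal_singleton, lmarginal_singleton]
      exact step_pointwise hg x hjS z

lemma intFF {g : EuclideanSpace ℝ (Fin m) → ℝ} (hg : ContDiff ℝ (⊤ : ℕ∞) g) (x : Fin m → ℝ)
    (S : Finset (Fin m)) {p : ℝ} (hp : 1 ≤ p) :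
    ∫⁻ y, FF g x S y ≤
      eLpNorm (pderivList S.toList g) (ENNReal.ofReal p) volume := by
  classical
  set Q : Set (Fin m → ℝ) := Set.univ.pi (fun i => Set.Icc (x i - 1) (x i)) with hQ
  have hQmeas : MeasurableSet Q := MeasurableSet.univ_pi (fun i => measurableSet_Icc)
  have hQvol : volume Q = 1 := by
    rw [hQ, volume_pi_pi]
    have : ∀ i : Fin m, volume (Set.Icc (x i - 1) (x i)) = 1 := by
      intro i; rw [Real.volume_Icc]; norm_num
    simp [this]
  have hcont : Continuous fun y : Fin m → ℝ => pderivList S.toList g (toE y) :=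
    (contDiff_pderivList S.toList hg).continuous.comp continuous_toE
  have hind : ∀ y, FF g x S y
      = Q.indicator (fun y => (‖pderivList S.toList g (toE y)‖₊ : ℝ≥0∞)) y := by
    intro y
    by_cases hy : y ∈ Q
    · rw [Set.indicator_of_mem hy, FF]
      have : ∀ i, chi x i (y i) = 1 := fun i =>
        Set.indicator_of_mem (Set.mem_univ_pi.mp hy i) _
      simp [this]
    · rw [Set.indicator_of_notMem hy, FF]
      obtain ⟨i, hi⟩ := not_forall.mp (fun h => hy (Set.mem_univ_pi.mpr h))
      have : chi x i (y i) = 0 := Set.indicator_of_notMem hi _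
      rw [Finset.prod_eq_zero (Finset.mem_univ i) this, mul_zero]
  calc ∫⁻ y, FF g x S y
      = ∫⁻ y in Q, (‖pderivList S.toList g (toE y)‖₊ : ℝ≥0∞) := by
        simp_rw [hind]; exact lintegral_indicator hQmeas _
    _ = eLpNorm (fun y => pderivList S.toList g (toE y)) 1 (volume.restrict Q) := by
        rw [eLpNorm_one_eq_lintegral_enorm]; simp only [enorm_eq_nnnorm]
    _ ≤ eLpNorm (fun y => pderivList S.toList g (toE y)) (ENNReal.ofReal p)
          (volume.restrict Q) * (volume.restrict Q Set.univ) ^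
            (1 / (1:ℝ≥0∞).toReal - 1 / (ENNReal.ofReal p).toReal) := by
        refine eLpNorm_le_eLpNorm_mul_rpow_measure_univ ?_ hcont.aestronglyMeasurable
        simpa using ENNReal.one_le_ofReal.mpr hp
    _ ≤ eLpNorm (fun y => pderivList S.toList g (toE y)) (ENNReal.ofReal p) volume := by
        rw [Measure.restrict_apply_univ, hQvol, ENNReal.one_rpow, mul_one]
        exact eLpNorm_mono_measure _ Measure.restrict_le_self
    _ = eLpNorm (pderivList S.toList g) (ENNReal.ofReal p) volume := by
        refine eLpNorm_comp_measurePreserving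
          (contDiff_pderivList S.toList hg).continuous.aestronglyMeasurable
          (EuclideanSpace.volume_preserving_symm_measurableEquiv_toLp (Fin m)).symm
end C3

section D
variable {m : ℕ}

lemma sup_bound {g : EuclideanSpace ℝ (Fin m) → ℝ} (hg : ContDiff ℝ (⊤ : ℕ∞) g)
    {p : ℝ} (hp : 1 ≤ p) :
    eLpNorm g ⊤ (volume : Measure (EuclideanSpace ℝ (Fin m))) ≤
      ∑ S ∈ (Finset.univ : Finset (Fin m)).powerset,
        eLpNorm (pderivList S.toList g) (ENNReal.ofReal p) volume := by
  rw [eLpNorm_exponent_top, eLpNormEssSup]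
  refine essSup_le_of_ae_le _ (Filter.Eventually.of_forall fun y => ?_)
  have hxy : y = toE ((WithLp.equiv 2 (Fin m → ℝ)) y) := rfl
  rw [hxy]
  set x : Fin m → ℝ := (WithLp.equiv 2 (Fin m → ℝ)) y with hx
  refine (core hg x Finset.univ).trans ?_
  refine Finset.sum_le_sum fun S _ => ?_
  rw [lmarginal_univ]
  refine le_trans (le_of_eq ?_) (intFF hg x S hp)
  have : (volume : Measure (Fin m → ℝ)) = Measure.pi fun _ => volume := rfl
  rw [this]

lemma interp {α : Type*} [MeasurableSpace α] {μ : Measure α} {g : α → ℝ}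
    {p : ℝ} (hp : 1 ≤ p) {q : ℝ≥0∞} (hpq : ENNReal.ofReal p ≤ q) {B : ℝ≥0∞}
    (hB0 : B ≠ 0) (hBtop : B ≠ ⊤)
    (h1 : eLpNorm g (ENNReal.ofReal p) μ ≤ B) (h2 : eLpNorm g ⊤ μ ≤ B) :
    eLpNorm g q μ ≤ B := by
  by_cases hqtop : q = ⊤
  · subst hqtop; exact h2
  have hp0 : (0:ℝ) < p := by linarith
  have hp'0 : ENNReal.ofReal p ≠ 0 := (ENNReal.ofReal_pos.mpr hp0).ne'
  have hq0 : q ≠ 0 := by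
    intro h
    rw [h] at hpq
    exact hp'0 (le_antisymm hpq zero_le)
  set pr := p with hpr
  set qr := q.toReal with hqr
  have hqr0 : 0 < qr := ENNReal.toReal_pos hq0 hqtop
  have hprqr : pr ≤ qr := by
    have := ENNReal.toReal_mono hqtop hpq
    rwa [ENNReal.toReal_ofReal hp0.le] at this
  rw [eLpNorm_eq_lintegral_rpow_enorm_toReal hq0 hqtop]
  rw [eLpNorm_eq_lintegral_rpow_enorm_toReal hp'0 ENNReal.ofReal_ne_top,
    ENNReal.toReal_ofReal hp0.le] at h1
  rw [eLpNorm_exponent_top] at h2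
  have hae : ∀ᵐ y ∂μ, (‖g y‖₊ : ℝ≥0∞) ≤ B :=
    (ae_le_eLpNormEssSup (f := g) (μ := μ)).mono fun y hy => hy.trans h2
  have hptw : ∀ᵐ y ∂μ, (‖g y‖₊ : ℝ≥0∞) ^ qr ≤ B ^ (qr - pr) * (‖g y‖₊ : ℝ≥0∞) ^ pr := by
    refine hae.mono fun y hy => ?_
    by_cases h0 : (‖g y‖₊ : ℝ≥0∞) = 0
    · rw [h0, ENNReal.zero_rpow_of_pos hqr0]
      exact zero_le
    · have htop : (‖g y‖₊ : ℝ≥0∞) ≠ ⊤ := ENNReal.coe_ne_top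
      calc (‖g y‖₊ : ℝ≥0∞) ^ qr = (‖g y‖₊ : ℝ≥0∞) ^ (qr - pr) * (‖g y‖₊ : ℝ≥0∞) ^ pr := by
            rw [← ENNReal.rpow_add _ _ h0 htop, sub_add_cancel]
        _ ≤ B ^ (qr - pr) * (‖g y‖₊ : ℝ≥0∞) ^ pr :=
            mul_le_mul_left (ENNReal.rpow_le_rpow hy (by linarith)) _
  have hint : ∫⁻ y, (‖g y‖₊ : ℝ≥0∞) ^ qr ∂μ ≤ B ^ (qr - pr) * ∫⁻ y, (‖g y‖₊ : ℝ≥0∞) ^ pr ∂μ := by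
    refine (lintegral_mono_ae hptw).trans ?_
    rw [lintegral_const_mul' _ _ (ENNReal.rpow_ne_top_of_nonneg (by linarith) hBtop)]
  have hip : ∫⁻ y, (‖g y‖₊ : ℝ≥0∞) ^ pr ∂μ ≤ B ^ pr := by
    have := ENNReal.rpow_le_rpow h1 hp0.le
    rwa [← ENNReal.rpow_mul, one_div, inv_mul_cancel₀ hp0.ne', ENNReal.rpow_one] at this
  calc (∫⁻ y, (‖g y‖₊ : ℝ≥0∞) ^ qr ∂μ) ^ (1 / qr)
      ≤ (B ^ (qr - pr) * B ^ pr) ^ (1 / qr) :=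
        ENNReal.rpow_le_rpow (hint.trans (mul_le_mul_right hip _)) (by positivity)
    _ = B := by
        rw [← ENNReal.rpow_add _ _ hB0 hBtop, sub_add_cancel, ← ENNReal.rpow_mul,
          mul_one_div_cancel hqr0.ne', ENNReal.rpow_one]
end D

section E
variable {n : ℕ}

lemma count_canon (γ : Fin n → ℕ) (i : Fin n) :
    List.count i ((List.finRange n).flatMap fun j => List.replicate (γ j) j) = γ i := by
  rw [List.count_flatMap]
  have h1 : ∀ j : Fin n, (List.count i ∘ fun j => List.replicate (γ j) j) j
      = if i = j then γ j else 0 := by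
    intro j
    simp only [Function.comp_apply, List.count_replicate]
    by_cases h : i = j
    · subst h; simp
    · rw [if_neg (by exact fun hc => h (beq_iff_eq.mp hc |>.symm)), if_neg h]
  rw [funext h1, ← Fin.sum_univ_def]
  simp

lemma count_toList (S : Finset (Fin n)) (i : Fin n) :
    S.toList.count i = if i ∈ S then 1 else 0 := by
  by_cases h : i ∈ S
  · rw [if_pos h]
    exact List.count_eq_one_of_mem S.nodup_toList (Finset.mem_toList.mpr h)
  · rw [if_neg h]
    exact List.count_eq_zero_of_not_mem (fun hc => h (Finset.mem_toList.mp hc))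

lemma pderiv_combine {f : EuclideanSpace ℝ (Fin n) → ℝ} (hf : ContDiff ℝ (⊤ : ℕ∞) f)
    (α : Fin n → ℕ) (S : Finset (Fin n)) :
    pderivList S.toList (pderivMulti α f)
      = pderivMulti (fun i => α i + if i ∈ S then 1 else 0) f := by
  rw [pderivMulti, pderivMulti, ← pderivList_append]
  refine pderivList_perm ?_ hf
  rw [List.perm_iff_count]
  intro i
  rw [List.count_append, count_canon, count_canon, count_toList]

lemma msize_combine (α : Fin n → ℕ) (S : Finset (Fin n)) :
    msize (fun i => α i + if i ∈ S then 1 else 0) = msize α + S.card := by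
  unfold msize
  rw [Finset.sum_add_distrib]
  congr 1
  simp [Finset.sum_ite_mem]

lemma fact_bound {m k j : ℕ} (hm : 1 ≤ m) (hj : j ≤ m) :
    Nat.factorial (k + j) ≤ m ^ m * (2 ^ m) ^ k * Nat.factorial k := by
  have h0 : ∀ j' : ℕ, Nat.factorial (k + j') ≤ (k + j') ^ j' * Nat.factorial k := by
    intro j'
    induction j' with
    | zero => simp
    | succ j' ih =>
        have : k + (j' + 1) = (k + j') + 1 := by ring
        rw [this, Nat.factorial_succ]
        calc (k + j' + 1) * Nat.factorial (k + j')
            ≤ (k + j' + 1) * ((k + j') ^ j' * Nat.factorial k) := Nat.mul_le_mul_left _ ih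
          _ ≤ (k + j' + 1) * ((k + j' + 1) ^ j' * Nat.factorial k) := by
              exact Nat.mul_le_mul_left _ (Nat.mul_le_mul_right _
                (Nat.pow_le_pow_left (Nat.le_succ _) _))
          _ = (k + j' + 1) ^ (j' + 1) * Nat.factorial k := by ring
  calc Nat.factorial (k + j) ≤ Nat.factorial (k + m) :=
        Nat.factorial_le (Nat.add_le_add_left hj _)
    _ ≤ (k + m) ^ m * Nat.factorial k := h0 m
    _ ≤ (m * (k + 1)) ^ m * Nat.factorial k := by
        refine Nat.mul_le_mul_right _ (Nat.pow_le_pow_left ?_ _)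
        calc k + m ≤ m * k + m := Nat.add_le_add_right (Nat.le_mul_of_pos_left k hm) _
          _ = m * (k + 1) := by ring
    _ = m ^ m * (k + 1) ^ m * Nat.factorial k := by rw [Nat.mul_pow]
    _ ≤ m ^ m * (2 ^ k) ^ m * Nat.factorial k := by
        refine Nat.mul_le_mul_right _ (Nat.mul_le_mul_left _ (Nat.pow_le_pow_left ?_ _))
        exact Nat.lt_two_pow_self
    _ = m ^ m * (2 ^ m) ^ k * Nat.factorial k := by
        rw [← Nat.pow_mul, ← Nat.pow_mul, Nat.mul_comm k m]

end E

section F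

lemma Mgrow (M : ℕ → ℝ) (hMpos : ∀ k, 0 < M k) {D1 : ℝ} (hD1 : 1 ≤ D1)
    (hstep : ∀ n : ℕ, M (n + 1) ≤ D1 ^ (n + 1) * M n) (k : ℕ) :
    ∀ j : ℕ, M (k + j) ≤ D1 ^ ((k + j) * j) * M k := by
  have hD0 : (0:ℝ) < D1 := lt_of_lt_of_le one_pos hD1
  intro j
  induction j with
  | zero => simp
  | succ j ih =>
      have h1 : M (k + (j + 1)) ≤ D1 ^ (k + j + 1) * M (k + j) := by
        have : k + (j + 1) = (k + j) + 1 := by ring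
        rw [this]; exact hstep _
      have h2 : D1 ^ (k + j + 1) * M (k + j)
          ≤ D1 ^ (k + j + 1) * (D1 ^ ((k + j) * j) * M k) :=
        mul_le_mul_of_nonneg_left ih (by positivity)
      have h3 : D1 ^ (k + j + 1) * (D1 ^ ((k + j) * j) * M k)
          = D1 ^ ((k + j + 1) + (k + j) * j) * M k := by
        rw [pow_add]; ring
      have hexp : (k + j + 1) + (k + j) * j ≤ (k + (j + 1)) * (j + 1) := by nlinarith
      have h4 : D1 ^ ((k + j + 1) + (k + j) * j) * M k
          ≤ D1 ^ ((k + (j + 1)) * (j + 1)) * M k :=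
        mul_le_mul_of_nonneg_right (pow_le_pow_right₀ hD1 hexp) (hMpos k).le
      exact h1.trans (h2.trans (h3.le.trans h4))

lemma real_bound (M : ℕ → ℝ) (hMpos : ∀ k, 0 < M k)
    {D1 : ℝ} (hD1 : 1 ≤ D1) (hstep : ∀ n : ℕ, M (n + 1) ≤ D1 ^ (n + 1) * M n)
    {C σ : ℝ} (hC : 0 < C) (hσ1 : 1 ≤ σ) {m : ℕ} (hm : 1 ≤ m)
    {k j : ℕ} (hj : j ≤ m) :
    C * σ ^ (k + j) * (Nat.factorial (k + j) : ℝ) * M (k + j) ≤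
      (C * σ ^ m * (m : ℝ) ^ m * D1 ^ (m * m)) * (σ * 2 ^ m * D1 ^ m) ^ k
        * (Nat.factorial k : ℝ) * M k := by
  have hσ0 : (0:ℝ) < σ := lt_of_lt_of_le one_pos hσ1
  have hD0 : (0:ℝ) < D1 := lt_of_lt_of_le one_pos hD1
  have h1 : M (k + j) ≤ D1 ^ ((k + m) * m) * M k := by
    refine (Mgrow M hMpos hD1 hstep k j).trans ?_
    exact mul_le_mul_of_nonneg_right
      (pow_le_pow_right₀ hD1 (Nat.mul_le_mul (by omega) hj)) (hMpos k).le
  have h2 : (Nat.factorial (k + j) : ℝ) ≤ (m:ℝ) ^ m * ((2:ℝ) ^ m) ^ k * (Nat.factorial k : ℝ) := by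
    have h := fact_bound (k := k) hm hj
    have hcast : ((Nat.factorial (k+j) : ℕ) : ℝ) ≤ ((m ^ m * (2 ^ m) ^ k * Nat.factorial k : ℕ) : ℝ) :=
      Nat.cast_le.mpr h
    push_cast at hcast
    exact hcast
  have h3 : σ ^ (k + j) ≤ σ ^ m * σ ^ k := by
    rw [← pow_add]
    exact pow_le_pow_right₀ hσ1 (by omega)
  calc C * σ ^ (k + j) * (Nat.factorial (k + j) : ℝ) * M (k + j)
      ≤ C * (σ ^ m * σ ^ k) * ((m:ℝ) ^ m * ((2:ℝ) ^ m) ^ k * (Nat.factorial k : ℝ))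
          * (D1 ^ ((k + m) * m) * M k) := by
        have hf0 : (0:ℝ) ≤ (Nat.factorial (k+j) : ℝ) := Nat.cast_nonneg _
        have hM0' : (0:ℝ) ≤ M (k+j) := (hMpos _).le
        gcongr
    _ = (C * σ ^ m * (m : ℝ) ^ m * D1 ^ (m * m)) * (σ * 2 ^ m * D1 ^ m) ^ k
          * (Nat.factorial k : ℝ) * M k := by
        rw [show (k + m) * m = m * m + m * k by ring, pow_add, pow_mul, mul_pow, mul_pow,
          ← pow_mul D1 m k]
        ring

lemma exists_D1 (M : ℕ → ℝ) (hMpos : ∀ k, 0 < M k) (hM0 : M 0 = 1) (hM01 : 1 ≤ M 1)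
    (hdc : ∃ D : ℝ, ∀ k : ℕ, 1 ≤ k → (M (k + 1) / M k) ^ ((1 : ℝ) / (k : ℝ)) ≤ D) :
    ∃ D1 : ℝ, 1 ≤ D1 ∧ ∀ n : ℕ, M (n + 1) ≤ D1 ^ (n + 1) * M n := by
  obtain ⟨D, hD⟩ := hdc
  set D1 := max (max D 1) (M 1) with hD1def
  have hD1 : 1 ≤ D1 := le_trans (le_max_right D 1) (le_max_left _ _)
  refine ⟨D1, hD1, fun n => ?_⟩
  rcases Nat.eq_zero_or_pos n with rfl | hn
  · rw [hM0, pow_one, mul_one]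
    exact le_max_right _ _
  · set r := M (n + 1) / M n with hr_def
    have hr : 0 < r := div_pos (hMpos _) (hMpos _)
    have heq : (r ^ ((1:ℝ) / (n:ℝ))) ^ (n : ℕ) = r := by
      rw [← Real.rpow_natCast (r ^ ((1:ℝ)/(n:ℝ))) n, ← Real.rpow_mul hr.le,
        one_div, inv_mul_cancel₀ (Nat.cast_ne_zero.mpr hn.ne'), Real.rpow_one]
    have hrn : r ≤ D1 ^ n := by
      rw [← heq]
      refine pow_le_pow_left₀ (Real.rpow_nonneg hr.le _) ?_ n
      exact (hD n hn).trans (le_trans (le_max_left D 1) (le_max_left _ _))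
    have : M (n + 1) = r * M n := (div_mul_cancel₀ _ (hMpos n).ne').symm
    rw [this]
    calc r * M n ≤ D1 ^ n * M n := mul_le_mul_of_nonneg_right hrn (hMpos n).le
      _ ≤ D1 ^ (n + 1) * M n :=
          mul_le_mul_of_nonneg_right (pow_le_pow_right₀ hD1 (Nat.le_succ n)) (hMpos n).le

end F

/-- For a derivation-closed weight sequence `M` and `1 ≤ p < q ≤ ∞`
(with `q : ℝ≥0∞`, so that `q = ∞` gives the essential supremum norm),
`W^{[M],p}`-type estimates imply `W^{[M],q}`-type estimates. -/
theorem statement_11 (M : ℕ → ℝ) (hMpos : ∀ k, 0 < M k) (hM0 : M 0 = 1) (hM01 : 1 ≤ M 1)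
    (hdc : ∃ D : ℝ, ∀ k : ℕ, 1 ≤ k → (M (k + 1) / M k) ^ ((1 : ℝ) / (k : ℝ)) ≤ D)
    (m : ℕ) (hm : 1 ≤ m) (p : ℝ) (hp : 1 ≤ p) (q : ENNReal) (hpq : ENNReal.ofReal p < q)
    (f : EuclideanSpace ℝ (Fin m) → ℝ) (hf : ContDiff ℝ (⊤ : ℕ∞) f)
    (hfp : ∃ C σ : ℝ, 0 < C ∧ 0 < σ ∧ ∀ α : Fin m → ℕ,
      eLpNorm (pderivMulti α f) (ENNReal.ofReal p) volume ≤
        ENNReal.ofReal (C * σ ^ msize α * (Nat.factorial (msize α) : ℝ) * M (msize α))) :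
    ∃ C' σ' : ℝ, 0 < C' ∧ 0 < σ' ∧ ∀ α : Fin m → ℕ,
      eLpNorm (pderivMulti α f) q volume ≤
        ENNReal.ofReal (C' * σ' ^ msize α * (Nat.factorial (msize α) : ℝ) * M (msize α)) := by
  obtain ⟨C, σ, hC, hσ, hbound⟩ := hfp
  obtain ⟨D1, hD1, hstep⟩ := exists_D1 M hMpos hM0 hM01 hdc
  have hD0 : (0:ℝ) < D1 := lt_of_lt_of_le one_pos hD1
  set σ1 : ℝ := max σ 1 with hσ1def
  have hσ1 : 1 ≤ σ1 := le_max_right _ _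
  have hσσ1 : σ ≤ σ1 := le_max_left _ _
  have hσ1pos : (0:ℝ) < σ1 := lt_of_lt_of_le one_pos hσ1
  set C2 : ℝ := C * σ1 ^ m * (m : ℝ) ^ m * D1 ^ (m * m) with hC2def
  set σ2 : ℝ := σ1 * 2 ^ m * D1 ^ m with hσ2def
  have hmpos : (0:ℝ) < (m : ℝ) := by exact_mod_cast hm
  have hC2pos : 0 < C2 := by positivity
  have hσ2pos : 0 < σ2 := by positivity
  set C3 : ℝ := 2 ^ m * C2 with hC3def
  have hC3pos : 0 < C3 := by positivity
  refine ⟨max C C3, max σ σ2, lt_of_lt_of_le hC (le_max_left _ _),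
    lt_of_lt_of_le hσ (le_max_left _ _), fun α => ?_⟩
  set k := msize α with hk
  have hMk := hMpos k
  have hfac : (0:ℝ) < (Nat.factorial k : ℝ) := by exact_mod_cast Nat.factorial_pos k
  have hBpos : 0 < max C C3 * max σ σ2 ^ k * (Nat.factorial k : ℝ) * M k := by
    have h1 : 0 < max C C3 := lt_of_lt_of_le hC (le_max_left _ _)
    have h2 : 0 < max σ σ2 := lt_of_lt_of_le hσ (le_max_left _ _)
    positivity
  set B : ℝ≥0∞ := ENNReal.ofReal (max C C3 * max σ σ2 ^ k * (Nat.factorial k : ℝ) * M k)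
    with hBdef
  have hB0 : B ≠ 0 := (ENNReal.ofReal_pos.mpr hBpos).ne'
  have hBtop : B ≠ ⊤ := ENNReal.ofReal_ne_top
  have hsmooth : ContDiff ℝ (⊤ : ℕ∞) (pderivMulti α f) := contDiff_pderivList _ hf
  -- L^p bound
  have h1 : eLpNorm (pderivMulti α f) (ENNReal.ofReal p) volume ≤ B := by
    refine (hbound α).trans (ENNReal.ofReal_le_ofReal ?_)
    rw [← hk]
    have hc : C ≤ max C C3 := le_max_left _ _
    have hs : σ ^ k ≤ max σ σ2 ^ k := pow_le_pow_left₀ hσ.le (le_max_left _ _) k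
    have h2 : 0 ≤ max σ σ2 := le_trans hσ.le (le_max_left _ _)
    gcongr
  -- L^∞ bound
  have h2 : eLpNorm (pderivMulti α f) ⊤ volume ≤ B := by
    refine (sup_bound hsmooth hp).trans ?_
    have hterm : ∀ S ∈ (Finset.univ : Finset (Fin m)).powerset,
        eLpNorm (pderivList S.toList (pderivMulti α f)) (ENNReal.ofReal p) volume ≤
          ENNReal.ofReal (C2 * σ2 ^ k * (Nat.factorial k : ℝ) * M k) := by
      intro S _
      rw [pderiv_combine hf α S]
      refine (hbound _).trans (ENNReal.ofReal_le_ofReal ?_)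
      rw [msize_combine α S, ← hk]
      set j := S.card with hj
      have hjm : j ≤ m := le_trans (Finset.card_le_univ S) (by simp)
      have hstep1 : C * σ ^ (k + j) * (Nat.factorial (k + j) : ℝ) * M (k + j)
          ≤ C * σ1 ^ (k + j) * (Nat.factorial (k + j) : ℝ) * M (k + j) := by
        have : σ ^ (k + j) ≤ σ1 ^ (k + j) := pow_le_pow_left₀ hσ.le hσσ1 _
        have hMp := (hMpos (k + j)).le
        have hfp' : (0:ℝ) ≤ (Nat.factorial (k + j) : ℝ) := Nat.cast_nonneg _
        gcongr
      exact hstep1.trans (real_bound M hMpos hD1 hstep hC hσ1 hm hjm)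
    refine (Finset.sum_le_card_nsmul _ _ _ hterm).trans ?_
    rw [Finset.card_powerset, Finset.card_univ, Fintype.card_fin]
    rw [nsmul_eq_mul]
    have hcast : ((2 ^ m : ℕ) : ℝ≥0∞) = ENNReal.ofReal ((2:ℝ) ^ m) := by
      rw [← ENNReal.ofReal_natCast]
      congr 1
      push_cast
      ring
    rw [hcast, ← ENNReal.ofReal_mul (by positivity)]
    refine ENNReal.ofReal_le_ofReal ?_
    have heq : (2:ℝ) ^ m * (C2 * σ2 ^ k * (Nat.factorial k : ℝ) * M k)
        = C3 * σ2 ^ k * (Nat.factorial k : ℝ) * M k := by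
      rw [hC3def]; ring
    rw [heq]
    have hc : C3 ≤ max C C3 := le_max_right _ _
    have hs : σ2 ^ k ≤ max σ σ2 ^ k := pow_le_pow_left₀ hσ2pos.le (le_max_right _ _) k
    have h2' : (0:ℝ) ≤ max σ σ2 := le_trans hσ.le (le_max_left _ _)
    gcongr
  exact interp hp hpq.le hB0 hBtop h1 h2
end

section
/- Let 1 ≤ p < ∞ and m ≥ 1, and let f : ℝᵐ → ℝ be smooth with ∂^α f ∈ L^p(ℝᵐ) for every multi-index α ∈ ℕᵐ. Then for every multi-index α, ∂^α f(x) → 0 as |x| → ∞. -/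
open MeasureTheory Filter
open scoped ENNReal NNReal

namespace St12

variable {m : ℕ}

noncomputable def pd (i : Fin m) (G : (Fin m → ℝ) → ℝ) : (Fin m → ℝ) → ℝ :=
  fun x => fderiv ℝ G x (Pi.single i 1)

noncomputable def pdList : List (Fin m) → ((Fin m → ℝ) → ℝ) → (Fin m → ℝ) → ℝ
  | [], G => G
  | i :: l, G => pdList l (pd i G)

lemma pdList_append (l₁ l₂ : List (Fin m)) (G : (Fin m → ℝ) → ℝ) :
    pdList (l₁ ++ l₂) G = pdList l₂ (pdList l₁ G) := by
  induction l₁ generalizing G with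
  | nil => rfl
  | cons i l ih => exact ih _

lemma contDiff_pd (i : Fin m) {G : (Fin m → ℝ) → ℝ} (hG : ContDiff ℝ (⊤ : ℕ∞) G) :
    ContDiff ℝ (⊤ : ℕ∞) (pd i G) :=
  (hG.fderiv_right (by simp)).clm_apply contDiff_const

lemma contDiff_pdList (l : List (Fin m)) {G : (Fin m → ℝ) → ℝ} (hG : ContDiff ℝ (⊤ : ℕ∞) G) :
    ContDiff ℝ (⊤ : ℕ∞) (pdList l G) := by
  induction l generalizing G with
  | nil => exact hG
  | cons i l ih => exact ih (contDiff_pd i hG)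

lemma pd_comm {G : (Fin m → ℝ) → ℝ} (hG : ContDiff ℝ (⊤ : ℕ∞) G) (i j : Fin m) :
    pd i (pd j G) = pd j (pd i G) := by
  funext x
  have hsymm : IsSymmSndFDerivAt ℝ G x := hG.contDiffAt.isSymmSndFDerivAt (by rw [minSmoothness_of_isRCLikeNormedField]; exact WithTop.coe_le_coe.2 le_top)
  have hd : ∀ k l : Fin m,
      pd k (pd l G) x = fderiv ℝ (fderiv ℝ G) x (Pi.single k 1) (Pi.single l 1) := by
    intro k l
    show fderiv ℝ (fun y => fderiv ℝ G y (Pi.single l 1)) x (Pi.single k 1) = _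
    rw [fderiv_clm_apply (((hG.fderiv_right (m := 1) (WithTop.coe_le_coe.2 le_top)).differentiable (by simp)) x)
      (differentiableAt_const _)]
    simp
  rw [hd, hd, hsymm]

lemma pdList_perm {l l' : List (Fin m)} (h : l.Perm l') :
    ∀ G : (Fin m → ℝ) → ℝ, ContDiff ℝ (⊤ : ℕ∞) G → pdList l G = pdList l' G := by
  induction h with
  | nil => intro G _; rfl
  | cons x _ ih => intro G hG; exact ih _ (contDiff_pd x hG)
  | swap x y l => intro G hG; show pdList l (pd x (pd y G)) = pdList l (pd y (pd x G));
                  rw [pd_comm hG]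
  | trans h₁ _ ih₁ ih₂ => intro G hG
                          rw [ih₁ G hG, ih₂ G (by
                            have := contDiff_pdList (l := []) hG; exact hG)]

/-- the canonical list of a multi-index -/
def Lst (γ : Fin m → ℕ) : List (Fin m) :=
  (List.finRange m).flatMap fun i => List.replicate (γ i) i

lemma count_flatMap_replicate_of_not_mem (γ : Fin m → ℕ) (j : Fin m) :
    ∀ l : List (Fin m), j ∉ l →
      ((l.flatMap fun i => List.replicate (γ i) i).count j) = 0 := by
  intro l hl
  induction l with
  | nil => rfl
  | cons a l ih =>
      simp only [List.flatMap_cons, List.count_append]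
      rw [ih (fun h => hl (List.mem_cons_of_mem a h)), List.count_replicate]
      have : a ≠ j := fun h => hl (h ▸ List.mem_cons_self (a := a) (l := l))
      simp [this]

lemma count_flatMap_replicate (γ : Fin m → ℕ) (j : Fin m) :
    ∀ l : List (Fin m), l.Nodup → j ∈ l →
      ((l.flatMap fun i => List.replicate (γ i) i).count j) = γ j := by
  intro l hn hj
  induction l with
  | nil => simp at hj
  | cons a l ih =>
      simp only [List.flatMap_cons, List.count_append]
      rcases List.mem_cons.1 hj with h | h
      · subst h
        rw [count_flatMap_replicate_of_not_mem γ j l (List.nodup_cons.1 hn).1]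
        simp [List.count_replicate]
      · rw [ih hn.of_cons h, List.count_replicate]
        have : a ≠ j := by rintro rfl; exact (List.nodup_cons.1 hn).1 h
        simp [this]

lemma count_Lst (γ : Fin m → ℕ) (j : Fin m) : (Lst γ).count j = γ j :=
  count_flatMap_replicate γ j _ (List.nodup_finRange m) (List.mem_finRange j)

lemma Lst_append_perm (α : Fin m → ℕ) (t : Finset (Fin m)) :
    (Lst α ++ t.toList).Perm (Lst fun i => α i + if i ∈ t then 1 else 0) := by
  rw [List.perm_iff_count]
  intro j
  rw [List.count_append, count_Lst, count_Lst]
  congr 1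
  by_cases hj : j ∈ t
  · simp [hj, List.count_eq_one_of_mem t.nodup_toList (Finset.mem_toList.2 hj)]
  · simp [hj, List.count_eq_zero.2 (fun h => hj (Finset.mem_toList.1 h))]


open ENNReal in
lemma ftc_bound {G : (Fin m → ℝ) → ℝ} (hG : ContDiff ℝ (⊤ : ℕ∞) G) (i : Fin m) (x : Fin m → ℝ) :
    (‖G x‖₊ : ℝ≥0∞) ≤ ∫⁻ t in Set.Icc (x i) (x i + 1),
      ((‖G (Function.update x i t)‖₊ : ℝ≥0∞) + ‖pd i G (Function.update x i t)‖₊) := by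
  set a := x i with ha
  set u : ℝ → (Fin m → ℝ) := fun t => Function.update x i t with hu
  have hu' : ∀ t : ℝ, HasDerivAt u (Pi.single i 1) t := by
    intro t
    have heq : u = fun s => x + (s - a) • (Pi.single i (1:ℝ) : Fin m → ℝ) := by
      funext s j
      by_cases hj : j = i
      · subst hj; simp [hu, ha, Function.update_self]
      · simp [hu, Function.update_of_ne hj, Pi.single_eq_of_ne hj]
    rw [heq]
    simpa using (((hasDerivAt_id t).sub_const a).smul_const (Pi.single i (1:ℝ))).const_add x
  have key : ∀ t : ℝ, HasDerivAt (fun s => G (u s)) (pd i G (u t)) t := by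
    intro t
    exact ((hG.differentiable (by simp) (u t)).hasFDerivAt).comp_hasDerivAt t (hu' t)
  have hcu : Continuous u := by
    rw [continuous_iff_continuousAt]; exact fun t => (hu' t).continuousAt
  have hcG : Continuous fun s => G (u s) := (hG.continuous).comp hcu
  have hcψ : Continuous fun s => pd i G (u s) := ((contDiff_pd i hG).continuous).comp hcu
  set C : ℝ := ∫ s in Set.Icc a (a+1), ‖pd i G (u s)‖ with hC
  have hCnn : 0 ≤ C := integral_nonneg fun s => norm_nonneg _
  have hψint : IntegrableOn (fun s => ‖pd i G (u s)‖) (Set.Icc a (a+1)) :=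
    (hcψ.norm).integrableOn_Icc
  have hpt : ∀ t ∈ Set.Icc a (a+1), ‖G x‖ ≤ ‖G (u t)‖ + C := by
    intro t ht
    have hGx : G x = G (u a) := by simp [hu, ha, Function.update_eq_self]
    have hsub : G (u t) - G (u a) = ∫ s in a..t, pd i G (u s) := by
      rw [intervalIntegral.integral_eq_sub_of_hasDerivAt (fun s _ => key s)
        ((hcψ.intervalIntegrable a t))]
    have h1 : ‖G x‖ ≤ ‖G (u t)‖ + ‖∫ s in a..t, pd i G (u s)‖ := by
      rw [hGx]
      calc ‖G (u a)‖ = ‖G (u t) - (G (u t) - G (u a))‖ := by ring_nf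
        _ ≤ ‖G (u t)‖ + ‖G (u t) - G (u a)‖ := norm_sub_le _ _
        _ = ‖G (u t)‖ + ‖∫ s in a..t, pd i G (u s)‖ := by rw [hsub]
    refine h1.trans (add_le_add le_rfl ?_)
    calc ‖∫ s in a..t, pd i G (u s)‖ ≤ ∫ s in a..t, ‖pd i G (u s)‖ :=
          intervalIntegral.norm_integral_le_integral_norm ht.1
      _ = ∫ s in Set.Ioc a t, ‖pd i G (u s)‖ := intervalIntegral.integral_of_le ht.1
      _ ≤ C := by
          refine setIntegral_mono_set hψint ?_ ?_
          · exact Filter.Eventually.of_forall fun s => norm_nonneg _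
          · exact HasSubset.Subset.eventuallyLE
              ((Set.Ioc_subset_Icc_self).trans (Set.Icc_subset_Icc_right ht.2))
  have hCψ : ENNReal.ofReal C = ∫⁻ s in Set.Icc a (a+1), (‖pd i G (u s)‖₊ : ℝ≥0∞) := by
    rw [hC, ofReal_integral_norm_eq_lintegral_enorm hcψ.integrableOn_Icc]
    simp only [enorm_eq_nnnorm]
  have M1 : Measurable fun t => (‖G (u t)‖₊ : ℝ≥0∞) :=
    hcG.measurable.nnnorm.coe_nnreal_ennreal
  calc (‖G x‖₊ : ℝ≥0∞)
      = ∫⁻ _ in Set.Icc a (a+1), (‖G x‖₊ : ℝ≥0∞) := by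
        rw [setLIntegral_const, Real.volume_Icc]
        simp
    _ ≤ ∫⁻ t in Set.Icc a (a+1), ((‖G (u t)‖₊ : ℝ≥0∞) + ENNReal.ofReal C) := by
        refine setLIntegral_mono (M1.add measurable_const) ?_
        intro t ht
        calc (‖G x‖₊ : ℝ≥0∞) = ENNReal.ofReal ‖G x‖ := by rw [ofReal_norm, enorm_eq_nnnorm]
          _ ≤ ENNReal.ofReal (‖G (u t)‖ + C) := ENNReal.ofReal_le_ofReal (hpt t ht)
          _ = ENNReal.ofReal ‖G (u t)‖ + ENNReal.ofReal C :=
              ENNReal.ofReal_add (norm_nonneg _) hCnn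
          _ = (‖G (u t)‖₊ : ℝ≥0∞) + ENNReal.ofReal C := by rw [ofReal_norm, enorm_eq_nnnorm]
    _ = (∫⁻ t in Set.Icc a (a+1), (‖G (u t)‖₊ : ℝ≥0∞)) + ENNReal.ofReal C := by
        rw [lintegral_add_right _ measurable_const, setLIntegral_const, Real.volume_Icc]
        simp
    _ ≤ _ := by
        rw [hCψ, ← lintegral_add_left M1]

open Finset in
lemma cube_bound (x₀ : Fin m → ℝ) (s : Finset (Fin m)) :
    ∀ G : (Fin m → ℝ) → ℝ, ContDiff ℝ (⊤ : ℕ∞) G → ∀ x : Fin m → ℝ, (∀ j ∈ s, x j = x₀ j) →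
    (‖G x‖₊ : ℝ≥0∞) ≤ ∑ t ∈ s.powerset,
      (∫⋯∫⁻_s, (fun y => (‖pdList t.toList G y‖₊ : ℝ≥0∞))
        ∂(fun i => volume.restrict (Set.Icc (x₀ i) (x₀ i + 1)))) x := by
  classical
  set μ : (i : Fin m) → Measure ℝ := fun i => volume.restrict (Set.Icc (x₀ i) (x₀ i + 1))
    with hμ
  induction s using Finset.induction with
  | empty =>
      intro G hG x hx
      simp [pdList, Finset.powerset_empty]
  | insert i s hi ih =>
      intro G hG x hx
      have hmeas : ∀ (t : Finset (Fin m)) (H : (Fin m → ℝ) → ℝ), ContDiff ℝ (⊤ : ℕ∞) H →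
          Measurable fun y => (‖pdList t.toList H y‖₊ : ℝ≥0∞) := fun t H hH =>
        ((contDiff_pdList t.toList hH).continuous).measurable.nnnorm.coe_nnreal_ennreal
      have hxi : x i = x₀ i := hx i (mem_insert_self i s)
      have hupd : ∀ t : ℝ, ∀ j ∈ s, Function.update x i t j = x₀ j := by
        intro t j hj
        rw [Function.update_of_ne (by rintro rfl; exact hi hj)]
        exact hx j (mem_insert_of_mem hj)
      calc (‖G x‖₊ : ℝ≥0∞)
          ≤ ∫⁻ t in Set.Icc (x i) (x i + 1),
              ((‖G (Function.update x i t)‖₊ : ℝ≥0∞)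
                + ‖pd i G (Function.update x i t)‖₊) := ftc_bound hG i x
        _ = ∫⁻ t, ((‖G (Function.update x i t)‖₊ : ℝ≥0∞)
                + ‖pd i G (Function.update x i t)‖₊) ∂(μ i) := by rw [hμ, hxi]
        _ ≤ ∫⁻ t,
              ((∑ t' ∈ s.powerset, (∫⋯∫⁻_s, (fun y => (‖pdList t'.toList G y‖₊ : ℝ≥0∞)) ∂μ)
                  (Function.update x i t))
              + ∑ t' ∈ s.powerset, (∫⋯∫⁻_s, (fun y => (‖pdList t'.toList (pd i G) y‖₊ : ℝ≥0∞)) ∂μ)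
                  (Function.update x i t)) ∂(μ i) := by
            refine lintegral_mono fun t => add_le_add ?_ ?_
            · exact ih G hG (Function.update x i t) (hupd t)
            · exact ih (pd i G) (contDiff_pd i hG) (Function.update x i t) (hupd t)
        _ = (∑ t' ∈ s.powerset, ∫⁻ t, (∫⋯∫⁻_s, (fun y => (‖pdList t'.toList G y‖₊ : ℝ≥0∞)) ∂μ)
                  (Function.update x i t) ∂(μ i))
            + ∑ t' ∈ s.powerset, ∫⁻ t, (∫⋯∫⁻_s, (fun y => (‖pdList t'.toList (pd i G) y‖₊ : ℝ≥0∞)) ∂μ)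
                  (Function.update x i t) ∂(μ i) := by
            rw [lintegral_add_left, lintegral_finset_sum, lintegral_finset_sum]
            · intro t' _
              exact ((hmeas t' (pd i G) (contDiff_pd i hG)).lmarginal μ).comp (measurable_update x)
            · intro t' _
              exact ((hmeas t' G hG).lmarginal μ).comp (measurable_update x)
            · exact Finset.measurable_sum _ fun t' _ =>
                ((hmeas t' G hG).lmarginal μ).comp (measurable_update x)
        _ = (∑ t' ∈ s.powerset, (∫⋯∫⁻_insert i s, (fun y => (‖pdList t'.toList G y‖₊ : ℝ≥0∞)) ∂μ) x)
            + ∑ t' ∈ s.powerset, (∫⋯∫⁻_insert i s, (fun y => (‖pdList ((insert i t').toList) G y‖₊ : ℝ≥0∞)) ∂μ) x := by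
            congr 1
            · exact Finset.sum_congr rfl fun t' _ =>
                (lmarginal_insert _ (hmeas t' G hG) hi x).symm
            · refine Finset.sum_congr rfl fun t' ht' => ?_
              have hit' : i ∉ t' := fun h => hi (Finset.mem_powerset.1 ht' h)
              have hperm : pdList ((insert i t').toList) G = pdList t'.toList (pd i G) :=
                pdList_perm (Finset.toList_insert hit') G hG
              rw [hperm]
              exact (lmarginal_insert _ (hmeas t' (pd i G) (contDiff_pd i hG)) hi x).symm
        _ = ∑ t ∈ (insert i s).powerset,
              (∫⋯∫⁻_insert i s, (fun y => (‖pdList t.toList G y‖₊ : ℝ≥0∞)) ∂μ) x := by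
            have hinj : ∀ t₁ ∈ s.powerset, ∀ t₂ ∈ s.powerset,
                insert i t₁ = insert i t₂ → t₁ = t₂ := by
              intro t₁ ht₁ t₂ ht₂ h
              have h₁ : i ∉ t₁ := fun h' => hi (Finset.mem_powerset.1 ht₁ h')
              have h₂ : i ∉ t₂ := fun h' => hi (Finset.mem_powerset.1 ht₂ h')
              rw [← Finset.erase_insert h₁, ← Finset.erase_insert h₂, h]
            have hdisj : Disjoint s.powerset (s.powerset.image (insert i)) := by
              rw [Finset.disjoint_right]
              rintro t ht h
              obtain ⟨t', ht', rfl⟩ := Finset.mem_image.1 ht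
              exact hi (Finset.mem_powerset.1 h (Finset.mem_insert_self i t'))
            rw [Finset.powerset_insert, Finset.sum_union hdisj, Finset.sum_image hinj]

lemma pi_restrict (a : Fin m → ℝ) :
    Measure.pi (fun i => volume.restrict (Set.Icc (a i) (a i + 1)))
      = volume.restrict (Set.pi Set.univ fun i => Set.Icc (a i) (a i + 1)) := by
  apply Measure.pi_eq
  intro s hs
  rw [Measure.restrict_apply (MeasurableSet.univ_pi hs), ← Set.pi_inter_distrib,
    volume_pi_pi]
  exact Finset.prod_congr rfl fun i _ =>
    (Measure.restrict_apply (hs i)).symm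

/-- tail of finite lintegral over translated cubes tends to 0 -/
lemma tail_tendsto {h : (Fin m → ℝ) → ℝ≥0∞} (hmeas : Measurable h)
    (hfin : ∫⁻ y, h y < ⊤) :
    Tendsto (fun x : Fin m → ℝ => ∫⁻ y in Set.pi Set.univ fun i => Set.Icc (x i) (x i + 1), h y)
      (cocompact (Fin m → ℝ)) (nhds 0) := by
  set ν : Measure (Fin m → ℝ) := volume.withDensity h with hν
  have hνfin : IsFiniteMeasure ν := by
    constructor
    rw [hν, withDensity_apply _ MeasurableSet.univ, setLIntegral_univ]
    exact hfin
  rw [ENNReal.tendsto_nhds_zero]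
  intro ε hε
  -- choose R with ν (closedBall 0 R)ᶜ ≤ ε
  have hmono : Monotone fun n : ℕ => Metric.closedBall (0 : Fin m → ℝ) n := fun a b hab =>
    Metric.closedBall_subset_closedBall (by exact_mod_cast hab)
  have hUnion : ⋃ n : ℕ, Metric.closedBall (0 : Fin m → ℝ) n = Set.univ := by
    ext y
    simp only [Set.mem_iUnion, Metric.mem_closedBall, Set.mem_univ, iff_true]
    obtain ⟨n, hn⟩ := exists_nat_ge (dist y 0)
    exact ⟨n, hn⟩
  have hlim : Tendsto (fun n : ℕ => ν (Metric.closedBall 0 n)) atTop (nhds (ν Set.univ)) := by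
    rw [← hUnion]
    exact tendsto_measure_iUnion_atTop hmono
  have : Tendsto (fun n : ℕ => ν Set.univ - ν (Metric.closedBall 0 n)) atTop (nhds 0) := by
    have := ENNReal.Tendsto.sub (a := ν Set.univ) (b := ν Set.univ) tendsto_const_nhds hlim
      (Or.inl (measure_ne_top ν _))
    simpa using this
  obtain ⟨n, hn⟩ := ((ENNReal.tendsto_nhds_zero.1 this) ε hε).exists
  have hcompl : ν (Metric.closedBall (0 : Fin m → ℝ) n)ᶜ ≤ ε := by
    rw [measure_compl measurableSet_closedBall (measure_ne_top ν _)]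
    exact hn
  filter_upwards [tendsto_norm_cocompact_atTop.eventually_gt_atTop ((n : ℝ) + 1)] with x hx
  have hsub : (Set.pi Set.univ fun i => Set.Icc (x i) (x i + 1)) ⊆
      (Metric.closedBall (0 : Fin m → ℝ) n)ᶜ := by
    intro y hy
    simp only [Set.mem_compl_iff, Metric.mem_closedBall, not_le]
    have hdist : dist y x ≤ 1 := by
      rw [dist_pi_le_iff (by norm_num : (0:ℝ) ≤ 1)]
      intro i
      have := hy i (Set.mem_univ i)
      rw [Real.dist_eq, abs_le]
      constructor <;> [linarith [this.1]; linarith [this.2]]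
    have h1 : ‖x‖ ≤ ‖y‖ + dist y x := by
      have := norm_sub_norm_le x y
      rw [← dist_eq_norm] at this
      rw [dist_comm y x]
      linarith
    have h2 : (n : ℝ) < ‖y‖ := by linarith
    calc (n : ℝ) < ‖y‖ := h2
      _ = dist y 0 := by rw [dist_zero_right]
  calc ∫⁻ y in (Set.pi Set.univ fun i => Set.Icc (x i) (x i + 1)), h y
      = ν (Set.pi Set.univ fun i => Set.Icc (x i) (x i + 1)) := by
        rw [hν, withDensity_apply _ (MeasurableSet.univ_pi fun i => measurableSet_Icc)]
    _ ≤ ν (Metric.closedBall (0 : Fin m → ℝ) n)ᶜ := measure_mono hsub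
    _ ≤ ε := hcompl

lemma core (p : ℝ) (hp : 1 ≤ p) {G : (Fin m → ℝ) → ℝ} (hG : ContDiff ℝ (⊤ : ℕ∞) G)
    (hL : ∀ t : Finset (Fin m), MemLp (pdList t.toList G) (ENNReal.ofReal p) volume) :
    Tendsto G (cocompact (Fin m → ℝ)) (nhds 0) := by
  classical
  have hp0 : 0 < p := lt_of_lt_of_le one_pos hp
  set q : ℝ≥0∞ := ENNReal.ofReal p with hq
  have hq0 : q ≠ 0 := by
    rw [hq, Ne, ENNReal.ofReal_eq_zero]; push_neg; linarith
  have hqtop : q ≠ ⊤ := ENNReal.ofReal_ne_top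
  have hqtoReal : q.toReal = p := ENNReal.toReal_ofReal hp0.le
  have hq1 : (1 : ℝ≥0∞) ≤ q := by
    rw [hq, ← ENNReal.ofReal_one]; exact ENNReal.ofReal_le_ofReal hp
  have hcont : ∀ t : Finset (Fin m), Continuous (pdList t.toList G) := fun t =>
    (contDiff_pdList t.toList hG).continuous
  have hfin : ∀ t : Finset (Fin m),
      ∫⁻ y, (‖pdList t.toList G y‖₊ : ℝ≥0∞) ^ p < ⊤ := by
    intro t
    have h1 := lintegral_rpow_enorm_lt_top_of_eLpNorm_lt_top hq0 hqtop (hL t).eLpNorm_lt_top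
    simp only [hqtoReal, enorm_eq_nnnorm] at h1; exact h1
  set box : (Fin m → ℝ) → Set (Fin m → ℝ) :=
    fun x => Set.pi Set.univ fun i => Set.Icc (x i) (x i + 1) with hbox_def
  have hboxmeas : ∀ x, MeasurableSet (box x) :=
    fun x => MeasurableSet.univ_pi fun i => measurableSet_Icc
  have hboxvol : ∀ x, volume (box x) = 1 := by
    intro x
    rw [hbox_def]
    rw [volume_pi_pi]
    simp [Real.volume_Icc]
  have key : ∀ x : Fin m → ℝ, (‖G x‖₊ : ℝ≥0∞) ≤
      ∑ t ∈ (Finset.univ : Finset (Fin m)).powerset,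
        (∫⁻ y in box x, (‖pdList t.toList G y‖₊ : ℝ≥0∞) ^ p) ^ (1/p) := by
    intro x
    refine (cube_bound x Finset.univ G hG x (fun j _ => rfl)).trans ?_
    refine Finset.sum_le_sum fun t _ => ?_
    have e1 : (∫⋯∫⁻_Finset.univ, (fun y => (‖pdList t.toList G y‖₊ : ℝ≥0∞))
          ∂(fun i => volume.restrict (Set.Icc (x i) (x i + 1)))) x
        = ∫⁻ y in box x, (‖pdList t.toList G y‖₊ : ℝ≥0∞) := by
      rw [lmarginal_univ, pi_restrict]
    rw [e1]
    set ρ : Measure (Fin m → ℝ) := volume.restrict (box x) with hρ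
    have hρuniv : ρ Set.univ = 1 := by
      rw [hρ, Measure.restrict_apply_univ]; exact hboxvol x
    have h2 : eLpNorm (pdList t.toList G) 1 ρ ≤ eLpNorm (pdList t.toList G) q ρ := by
      have := eLpNorm_le_eLpNorm_mul_rpow_measure_univ (μ := ρ) hq1
        (hcont t).aestronglyMeasurable
      rwa [hρuniv, ENNReal.one_rpow, mul_one] at this
    rw [eLpNorm_one_eq_lintegral_enorm, eLpNorm_eq_lintegral_rpow_enorm_toReal hq0 hqtop,
      hqtoReal] at h2
    simp only [enorm_eq_nnnorm] at h2
    exact h2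
  have hterm : ∀ t : Finset (Fin m), Tendsto
      (fun x => (∫⁻ y in box x, (‖pdList t.toList G y‖₊ : ℝ≥0∞) ^ p) ^ (1/p))
      (cocompact (Fin m → ℝ)) (nhds 0) := by
    intro t
    have hmeas : Measurable fun y => (‖pdList t.toList G y‖₊ : ℝ≥0∞) ^ p :=
      ((hcont t).measurable.nnnorm.coe_nnreal_ennreal).pow_const p
    have htail := tail_tendsto hmeas (hfin t)
    rw [ENNReal.tendsto_nhds_zero] at htail ⊢
    intro ε hε
    have hεp : 0 < ε ^ p := ENNReal.rpow_pos_of_nonneg hε hp0.le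
    filter_upwards [htail (ε ^ p) hεp] with x hx
    calc (∫⁻ y in box x, (‖pdList t.toList G y‖₊ : ℝ≥0∞) ^ p) ^ (1/p)
        ≤ (ε ^ p) ^ (1/p) := ENNReal.rpow_le_rpow hx (by positivity)
      _ = ε := by rw [← ENNReal.rpow_mul, mul_one_div_cancel hp0.ne', ENNReal.rpow_one]
  have hsum : Tendsto (fun x => ∑ t ∈ (Finset.univ : Finset (Fin m)).powerset,
      (∫⁻ y in box x, (‖pdList t.toList G y‖₊ : ℝ≥0∞) ^ p) ^ (1/p))
      (cocompact (Fin m → ℝ)) (nhds 0) := by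
    have := tendsto_finset_sum ((Finset.univ : Finset (Fin m)).powerset)
      (fun t _ => hterm t)
    simpa using this
  have hnn : Tendsto (fun x => (‖G x‖₊ : ℝ≥0∞)) (cocompact (Fin m → ℝ)) (nhds 0) :=
    tendsto_of_tendsto_of_tendsto_of_le_of_le tendsto_const_nhds hsum
      (fun x => bot_le) key
  rw [← ENNReal.coe_zero, ENNReal.tendsto_coe] at hnn
  rw [tendsto_zero_iff_norm_tendsto_zero]
  have : ∀ x, ‖G x‖ = ((‖G x‖₊ : ℝ≥0) : ℝ) := fun x => (coe_nnnorm _).symm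
  simp only [this]
  exact (NNReal.tendsto_coe).2 hnn


lemma contDiff_comp_symm {f : EuclideanSpace ℝ (Fin m) → ℝ} (hf : ContDiff ℝ (⊤ : ℕ∞) f) :
    ContDiff ℝ (⊤ : ℕ∞) (f ∘ (EuclideanSpace.equiv (Fin m) ℝ).symm) :=
  hf.comp (EuclideanSpace.equiv (Fin m) ℝ).symm.contDiff

lemma contDiff_pderiv_single {f : EuclideanSpace ℝ (Fin m) → ℝ} (hf : ContDiff ℝ (⊤ : ℕ∞) f)
    (i : Fin m) : ContDiff ℝ (⊤ : ℕ∞) (fun x => fderiv ℝ f x (EuclideanSpace.single i 1)) :=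
  (hf.fderiv_right (by simp)).clm_apply contDiff_const

lemma pd_transfer {f : EuclideanSpace ℝ (Fin m) → ℝ} (hf : ContDiff ℝ (⊤ : ℕ∞) f) (i : Fin m) :
    (fun x => fderiv ℝ f x (EuclideanSpace.single i 1))
      = (pd i (f ∘ (EuclideanSpace.equiv (Fin m) ℝ).symm)) ∘ (EuclideanSpace.equiv (Fin m) ℝ) := by
  set e := EuclideanSpace.equiv (Fin m) ℝ with he
  funext x
  show fderiv ℝ f x (EuclideanSpace.single i 1)
      = fderiv ℝ (f ∘ e.symm) (e x) (Pi.single i 1)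
  rw [fderiv_comp (e x) (hf.differentiable (by simp) _) (e.symm.differentiableAt)]
  rw [e.symm.fderiv]
  simp only [ContinuousLinearMap.coe_comp', Function.comp_apply,
    ContinuousLinearEquiv.coe_coe, ContinuousLinearEquiv.symm_apply_apply]
  rfl

lemma pderivList_transfer (l : List (Fin m)) :
    ∀ f : EuclideanSpace ℝ (Fin m) → ℝ, ContDiff ℝ (⊤ : ℕ∞) f →
      pderivList l f
        = (pdList l (f ∘ (EuclideanSpace.equiv (Fin m) ℝ).symm))
            ∘ (EuclideanSpace.equiv (Fin m) ℝ) := by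
  induction l with
  | nil =>
      intro f hf
      funext x
      show f x = f ((EuclideanSpace.equiv (Fin m) ℝ).symm ((EuclideanSpace.equiv (Fin m) ℝ) x))
      rw [ContinuousLinearEquiv.symm_apply_apply]
  | cons i l ih =>
      intro f hf
      show pderivList l (fun x => fderiv ℝ f x (EuclideanSpace.single i 1)) = _
      rw [ih _ (contDiff_pderiv_single hf i)]
      congr 1
      show pdList l ((fun x => fderiv ℝ f x (EuclideanSpace.single i 1))
          ∘ (EuclideanSpace.equiv (Fin m) ℝ).symm) = _
      rw [pd_transfer hf i]
      have hcomp : ((pd i (f ∘ (EuclideanSpace.equiv (Fin m) ℝ).symm))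
            ∘ (EuclideanSpace.equiv (Fin m) ℝ)) ∘ (EuclideanSpace.equiv (Fin m) ℝ).symm
          = pd i (f ∘ (EuclideanSpace.equiv (Fin m) ℝ).symm) := by
        funext y
        simp only [Function.comp_apply, ContinuousLinearEquiv.apply_symm_apply]
      rw [hcomp]
      rfl

end St12

open St12 in
/-- If `f : ℝᵐ → ℝ` is smooth with all partial derivatives in `L^p`,
then every partial derivative tends to `0` at infinity. -/
theorem statement_12 (p : ℝ) (hp : 1 ≤ p) (m : ℕ) (hm : 1 ≤ m)
    (f : EuclideanSpace ℝ (Fin m) → ℝ) (hf : ContDiff ℝ (⊤ : ℕ∞) f)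
    (hLp : ∀ α : Fin m → ℕ, MeasureTheory.MemLp (pderivMulti α f) (ENNReal.ofReal p)) :
    ∀ α : Fin m → ℕ,
      Tendsto (pderivMulti α f) (cocompact (EuclideanSpace ℝ (Fin m))) (nhds 0) := by
  intro α
  classical
  set e : EuclideanSpace ℝ (Fin m) ≃L[ℝ] (Fin m → ℝ) := EuclideanSpace.equiv (Fin m) ℝ with he
  set G : (Fin m → ℝ) → ℝ := f ∘ e.symm with hGdef
  have hGsm : ContDiff ℝ (⊤ : ℕ∞) G := contDiff_comp_symm hf
  have hkey : ∀ l : List (Fin m), pderivList l f = pdList l G ∘ e := fun l =>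
    pderivList_transfer l f hf
  have hMulti : pderivMulti α f = (pdList (Lst α) G) ∘ e := hkey (Lst α)
  have hG1 : ContDiff ℝ (⊤ : ℕ∞) (pdList (Lst α) G) := contDiff_pdList _ hGsm
  have hL1 : ∀ t : Finset (Fin m),
      MemLp (pdList t.toList (pdList (Lst α) G)) (ENNReal.ofReal p) volume := by
    intro t
    have h1 : pdList t.toList (pdList (Lst α) G) = pdList (Lst α ++ t.toList) G :=
      (pdList_append _ _ _).symm
    have h2 : pdList (Lst α ++ t.toList) G
        = pdList (Lst fun i => α i + if i ∈ t then 1 else 0) G :=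
      pdList_perm (Lst_append_perm α t) G hGsm
    set γ : Fin m → ℕ := fun i => α i + if i ∈ t then 1 else 0 with hγ
    have h4 : pderivMulti γ f = pdList (Lst γ) G ∘ e := hkey (Lst γ)
    have h3 : pdList (Lst γ) G
        = (pderivMulti γ f) ∘ (⇑(MeasurableEquiv.toLp 2 (Fin m → ℝ))) := by
      funext y
      rw [Function.comp_apply, h4, Function.comp_apply]
      congr 1
    rw [h1, h2, h3]
    have hmp : MeasurePreserving (⇑(MeasurableEquiv.toLp 2 (Fin m → ℝ)))
        (volume : Measure (Fin m → ℝ)) volume :=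
      (EuclideanSpace.volume_preserving_symm_measurableEquiv_toLp (Fin m)).symm
    have hsm : AEStronglyMeasurable (pderivMulti γ f)
        (volume : Measure (EuclideanSpace ℝ (Fin m))) := by
      have : Continuous (pderivMulti γ f) := by
        rw [h4]
        exact ((contDiff_pdList _ hGsm).continuous).comp e.continuous
      exact this.aestronglyMeasurable
    refine (memLp_map_measure_iff ?_ hmp.measurable.aemeasurable).1 ?_
    · rw [hmp.map_eq]; exact hsm
    · rw [hmp.map_eq]; exact hLp γ
  have hT : Tendsto (pdList (Lst α) G) (cocompact (Fin m → ℝ)) (nhds 0) :=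
    core p hp hG1 hL1
  rw [hMulti]
  have hcoc : Tendsto (⇑e) (cocompact (EuclideanSpace ℝ (Fin m))) (cocompact (Fin m → ℝ)) :=
    e.toHomeomorph.isClosedEmbedding.tendsto_cocompact
  exact hT.comp hcoc
end

section
/- Let M = (M_k) be a sequence of positive reals, let E, F be Banach spaces, let U ⊆ E be open, and for ρ > 0 set ‖h‖_{U,ρ} := sup{ ‖h^{(k)}(x)‖/(ρ^k·k!·M_k) : k ∈ ℕ, x ∈ U } for smooth h : U → F. Let σ > 0, σ₁ := 2σ, σ₂ > σ₁, and ε > 0. Then there exists δ > 0 such that for all smooth f, g : U → F with ‖f‖_{U,σ} ≤ 1, ‖g‖_{U,σ} ≤ 1, and ‖g−f‖_{U,σ₂} ≤ δ, one has ‖g−f‖_{U,σ₁} ≤ ε. -/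
/-- the key estimate for compact regularity of the inductive limits:
given `σ > 0`, `σ₁ = 2σ`, `σ₂ > σ₁`, `ε > 0`, there is `δ > 0` such that for all smooth
`f, g` on `U` with `‖f‖_{U,σ} ≤ 1`, `‖g‖_{U,σ} ≤ 1` and `‖g - f‖_{U,σ₂} ≤ δ`, one has
`‖g - f‖_{U,σ₁} ≤ ε`, where `‖h‖_{U,ρ} ≤ c` is expressed by the pointwise bounds
`‖h^(k)(x)‖ ≤ c·ρ^k·k!·M_k` for all `k` and `x ∈ U`. -/
theorem statement_13 {E F : Type*}
    [NormedAddCommGroup E] [NormedSpace ℝ E]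
    [NormedAddCommGroup F] [NormedSpace ℝ F]
    (M : ℕ → ℝ) (hMpos : ∀ k, 0 < M k)
    (U : Set E) (hU : IsOpen U)
    (σ σ₁ σ₂ ε : ℝ) (hσ : 0 < σ) (hσ₁ : σ₁ = 2 * σ) (hσ₂ : σ₁ < σ₂) (hε : 0 < ε) :
    ∃ δ : ℝ, 0 < δ ∧
      ∀ f g : E → F, ContDiffOn ℝ (⊤ : ℕ∞) f U → ContDiffOn ℝ (⊤ : ℕ∞) g U →
        (∀ (k : ℕ), ∀ x ∈ U,
          ‖iteratedFDerivWithin ℝ k f U x‖ ≤ σ ^ k * (Nat.factorial k : ℝ) * M k) →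
        (∀ (k : ℕ), ∀ x ∈ U,
          ‖iteratedFDerivWithin ℝ k g U x‖ ≤ σ ^ k * (Nat.factorial k : ℝ) * M k) →
        (∀ (k : ℕ), ∀ x ∈ U,
          ‖iteratedFDerivWithin ℝ k (g - f) U x‖ ≤ δ * σ₂ ^ k * (Nat.factorial k : ℝ) * M k) →
        (∀ (k : ℕ), ∀ x ∈ U,
          ‖iteratedFDerivWithin ℝ k (g - f) U x‖ ≤ ε * σ₁ ^ k * (Nat.factorial k : ℝ) * M k) := by
  have hσ₁pos : 0 < σ₁ := by rw [hσ₁]; positivity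
  have hσ₂pos : 0 < σ₂ := hσ₁pos.trans hσ₂
  -- choose N with 2/ε < 2^N
  obtain ⟨N, hN⟩ := pow_unbounded_of_one_lt (2 / ε) (by norm_num : (1:ℝ) < 2)
  refine ⟨ε * (σ₁ / σ₂) ^ N, by positivity, ?_⟩
  intro f g hf hg hfb hgb hsub k x hx
  have hratio : 0 < σ₁ / σ₂ := by positivity
  have hratio1 : σ₁ / σ₂ ≤ 1 := le_of_lt ((div_lt_one hσ₂pos).2 hσ₂)
  have hMk := (hMpos k).le
  have hfact : (0:ℝ) ≤ (Nat.factorial k : ℝ) := by positivity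
  by_cases hk : k ≤ N
  · -- use the δ bound
    have h1 := hsub k x hx
    refine h1.trans ?_
    have : (σ₁ / σ₂) ^ N ≤ (σ₁ / σ₂) ^ k :=
      pow_le_pow_of_le_one hratio.le hratio1 hk
    have h2 : ε * (σ₁ / σ₂) ^ N * σ₂ ^ k ≤ ε * σ₁ ^ k := by
      calc ε * (σ₁ / σ₂) ^ N * σ₂ ^ k ≤ ε * (σ₁ / σ₂) ^ k * σ₂ ^ k := by
            apply mul_le_mul_of_nonneg_right _ (by positivity)
            exact mul_le_mul_of_nonneg_left this hε.le
        _ = ε * σ₁ ^ k := by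
            rw [div_pow, mul_assoc, div_mul_cancel₀]
            positivity
      
    exact mul_le_mul_of_nonneg_right (mul_le_mul_of_nonneg_right h2 hfact) hMk
  · -- large k: use the bounds on f and g
    push_neg at hk
    have hsplit : iteratedFDerivWithin ℝ k (g - f) U x =
        iteratedFDerivWithin ℝ k g U x - iteratedFDerivWithin ℝ k f U x := by
      rw [sub_eq_add_neg, iteratedFDerivWithin_add_apply ((hg.of_le (by exact_mod_cast le_top)) x hx)
        ((by exact (hf.of_le (by exact_mod_cast le_top)).neg : ContDiffOn ℝ k (-f) U) x hx) hU.uniqueDiffOn hx,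
        iteratedFDerivWithin_neg_apply hU.uniqueDiffOn hx, ← sub_eq_add_neg]
    have hb : ‖iteratedFDerivWithin ℝ k (g - f) U x‖ ≤ 2 * (σ ^ k * (Nat.factorial k : ℝ) * M k) := by
      rw [hsplit]
      calc ‖iteratedFDerivWithin ℝ k g U x - iteratedFDerivWithin ℝ k f U x‖
          ≤ ‖iteratedFDerivWithin ℝ k g U x‖ + ‖iteratedFDerivWithin ℝ k f U x‖ := norm_sub_le _ _
        _ ≤ 2 * (σ ^ k * (Nat.factorial k : ℝ) * M k) := by
            have := hfb k x hx; have := hgb k x hx; linarith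
    refine hb.trans ?_
    have h2k : (2:ℝ) ≤ ε * 2 ^ k := by
      have : (2:ℝ) ^ N ≤ 2 ^ k := pow_le_pow_right₀ (by norm_num) hk.le
      have h3 : 2 / ε < 2 ^ k := lt_of_lt_of_le hN this
      rw [div_lt_iff₀ hε] at h3
      nlinarith
    have : σ₁ ^ k = 2 ^ k * σ ^ k := by rw [hσ₁, mul_pow]
    rw [this]
    calc 2 * (σ ^ k * (Nat.factorial k : ℝ) * M k)
        ≤ (ε * 2 ^ k) * (σ ^ k * (Nat.factorial k : ℝ) * M k) := by
          apply mul_le_mul_of_nonneg_right h2k (by positivity)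
      _ = ε * (2 ^ k * σ ^ k) * (Nat.factorial k : ℝ) * M k := by ring
end

section
/- Let φ₀, φ₁ : ℝ → ℝ be smooth functions with φ₀′(x) > 0 and φ₁′(x) > 0 for all x, such that φᵢ′ − 1 ∈ L¹(ℝ) and lim_{x→−∞}(φᵢ(x) − x) = 0 = lim_{x→+∞}(φᵢ(x) − x) for i = 0, 1. Set γᵢ := 2(√(φᵢ′) − 1), and for t ∈ ℝ set γ_t := (1−t)·γ₀ + t·γ₁ and φ(t, x) := x + (1/4)·∫_{−∞}^{x} (γ_t(y)² + 4·γ_t(y)) dy. Then for every t ∈ ℝ, lim_{x→+∞} (φ(t, x) − x) = (t² − t)·∫_ℝ (√(φ₀′(y)) − √(φ₁′(y)))² dy. -/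
open Filter MeasureTheory

/-- size of the shift at `+∞` of the Hunter–Saxton geodesic
`φ(t) = R⁻¹((1-t)·R(φ₀) + t·R(φ₁))` joining two diffeomorphisms `φ₀, φ₁` of `ℝ` with
`φᵢ' > 0`, `φᵢ' - 1 ∈ L¹` and `φᵢ(x) - x → 0` at `±∞`; here `R(φ) = 2(√(φ') - 1)` and
`R⁻¹(γ)(x) = x + (1/4)∫_{-∞}^x (γ² + 4γ)`. The shift equals
`(t² - t)·‖√(φ₀') - √(φ₁')‖_{L²}²`. -/
theorem statement_19 (φ₀ φ₁ : ℝ → ℝ) (h0 : ContDiff ℝ (⊤ : ℕ∞) φ₀) (h1 : ContDiff ℝ (⊤ : ℕ∞) φ₁)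
    (hd0 : ∀ x, 0 < deriv φ₀ x) (hd1 : ∀ x, 0 < deriv φ₁ x)
    (hi0 : MeasureTheory.Integrable (fun x => deriv φ₀ x - 1))
    (hi1 : MeasureTheory.Integrable (fun x => deriv φ₁ x - 1))
    (hlim0m : Tendsto (fun x => φ₀ x - x) atBot (nhds 0))
    (hlim0p : Tendsto (fun x => φ₀ x - x) atTop (nhds 0))
    (hlim1m : Tendsto (fun x => φ₁ x - x) atBot (nhds 0))
    (hlim1p : Tendsto (fun x => φ₁ x - x) atTop (nhds 0)) :
    ∀ t : ℝ,
      Tendsto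
        (fun x : ℝ =>
          (x + (1 / 4) * ∫ y in Set.Iic x,
              (((1 - t) * (2 * (Real.sqrt (deriv φ₀ y) - 1)) +
                  t * (2 * (Real.sqrt (deriv φ₁ y) - 1))) ^ 2 +
                4 * ((1 - t) * (2 * (Real.sqrt (deriv φ₀ y) - 1)) +
                  t * (2 * (Real.sqrt (deriv φ₁ y) - 1))))) - x)
        atTop
        (nhds ((t ^ 2 - t) *
          ∫ y : ℝ, (Real.sqrt (deriv φ₀ y) - Real.sqrt (deriv φ₁ y)) ^ 2)) := by
  intro t
  set f₀ : ℝ → ℝ := fun y => deriv φ₀ y - 1 with hf₀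
  set f₁ : ℝ → ℝ := fun y => deriv φ₁ y - 1 with hf₁
  set g : ℝ → ℝ := fun y => (Real.sqrt (deriv φ₀ y) - Real.sqrt (deriv φ₁ y)) ^ 2 with hg
  -- continuity of derivatives
  have hc0 : Continuous (deriv φ₀) := h0.continuous_deriv (by simp)
  have hc1 : Continuous (deriv φ₁) := h1.continuous_deriv (by simp)
  have hgc : Continuous g := by
    exact ((Real.continuous_sqrt.comp hc0).sub (Real.continuous_sqrt.comp hc1)).pow 2
  -- integrability of g
  have hgi : Integrable g := by
    refine Integrable.mono' ((hi0.abs.const_mul 2).add (hi1.abs.const_mul 2))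
      hgc.aestronglyMeasurable (Filter.Eventually.of_forall fun y => ?_)
    have key : ∀ c : ℝ, 0 < c → (Real.sqrt c - 1) ^ 2 ≤ |c - 1| := by
      intro c hc
      have hs : 0 ≤ Real.sqrt c := Real.sqrt_nonneg c
      have h2 : |Real.sqrt c - 1| ≤ Real.sqrt c + 1 :=
        abs_le.mpr ⟨by linarith, by linarith⟩
      calc (Real.sqrt c - 1) ^ 2 = |Real.sqrt c - 1| ^ 2 := (sq_abs _).symm
        _ ≤ |Real.sqrt c - 1| * (Real.sqrt c + 1) := by
            rw [sq]; exact mul_le_mul_of_nonneg_left h2 (abs_nonneg _)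
        _ = |(Real.sqrt c - 1) * (Real.sqrt c + 1)| := by
            rw [abs_mul, abs_of_nonneg (by linarith : (0:ℝ) ≤ Real.sqrt c + 1)]
        _ = |c - 1| := by
            have h := Real.sq_sqrt hc.le
            congr 1
            linear_combination h
    have hA := key (deriv φ₀ y) (hd0 y)
    have hB := key (deriv φ₁ y) (hd1 y)
    have : g y ≤ 2 * (Real.sqrt (deriv φ₀ y) - 1) ^ 2 + 2 * (Real.sqrt (deriv φ₁ y) - 1) ^ 2 := by
      simp only [hg]; nlinarith [sq_nonneg (Real.sqrt (deriv φ₀ y) + Real.sqrt (deriv φ₁ y) - 2)]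
    have hgnn : 0 ≤ g y := sq_nonneg _
    rw [Real.norm_eq_abs, abs_of_nonneg hgnn]
    simp only [hf₀, hf₁]
    calc g y ≤ 2 * |deriv φ₀ y - 1| + 2 * |deriv φ₁ y - 1| := by nlinarith
      _ = 2 * |f₀ y| + 2 * |f₁ y| := rfl
  -- rewrite the set integral
  have hint : ∀ x : ℝ,
      (∫ y in Set.Iic x,
        (((1 - t) * (2 * (Real.sqrt (deriv φ₀ y) - 1)) +
            t * (2 * (Real.sqrt (deriv φ₁ y) - 1))) ^ 2 +
          4 * ((1 - t) * (2 * (Real.sqrt (deriv φ₀ y) - 1)) +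
            t * (2 * (Real.sqrt (deriv φ₁ y) - 1)))))
      = 4 * ((1 - t) * (∫ y in Set.Iic x, f₀ y) + t * (∫ y in Set.Iic x, f₁ y)
          + (t ^ 2 - t) * ∫ y in Set.Iic x, g y) := by
    intro x
    have hcongr : ∀ y : ℝ,
        (((1 - t) * (2 * (Real.sqrt (deriv φ₀ y) - 1)) +
            t * (2 * (Real.sqrt (deriv φ₁ y) - 1))) ^ 2 +
          4 * ((1 - t) * (2 * (Real.sqrt (deriv φ₀ y) - 1)) +
            t * (2 * (Real.sqrt (deriv φ₁ y) - 1))))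
        = 4 * ((1 - t) * f₀ y + t * f₁ y + (t ^ 2 - t) * g y) := by
      intro y
      have hA : Real.sqrt (deriv φ₀ y) ^ 2 = deriv φ₀ y := Real.sq_sqrt (hd0 y).le
      have hB : Real.sqrt (deriv φ₁ y) ^ 2 = deriv φ₁ y := Real.sq_sqrt (hd1 y).le
      simp only [hf₀, hf₁, hg]
      set A := Real.sqrt (deriv φ₀ y) with hAdef
      set B := Real.sqrt (deriv φ₁ y) with hBdef
      rw [← hA, ← hB]
      ring
    rw [MeasureTheory.integral_congr_ae (Filter.Eventually.of_forall fun y => hcongr y)]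
    rw [MeasureTheory.integral_const_mul]
    congr 1
    have hA : Integrable (fun a => (1 - t) * f₀ a) (volume.restrict (Set.Iic x)) :=
      hi0.restrict.const_mul _
    have hB : Integrable (fun a => t * f₁ a) (volume.restrict (Set.Iic x)) :=
      hi1.restrict.const_mul _
    have hC : Integrable (fun a => (t ^ 2 - t) * g a) (volume.restrict (Set.Iic x)) :=
      hgi.restrict.const_mul _
    have hAB : Integrable (fun a => (1 - t) * f₀ a + t * f₁ a)
        (volume.restrict (Set.Iic x)) := hA.add hB
    rw [MeasureTheory.integral_add hAB hC, MeasureTheory.integral_add hA hB,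
      MeasureTheory.integral_const_mul, MeasureTheory.integral_const_mul,
      MeasureTheory.integral_const_mul]
  -- limits of the three pieces
  have hFTC : ∀ (φ : ℝ → ℝ), ContDiff ℝ (⊤ : ℕ∞) φ → Integrable (fun y => deriv φ y - 1) →
      Tendsto (fun x => φ x - x) atBot (nhds 0) →
      ∀ x : ℝ, (∫ y in Set.Iic x, (deriv φ y - 1)) = φ x - x := by
    intro φ hφ hiφ hlm x
    have hder : ∀ y ∈ Set.Iic x, HasDerivAt (fun z => φ z - z) (deriv φ y - 1) y := by
      intro y _
      exact ((hφ.differentiable (by simp) y).hasDerivAt).sub (hasDerivAt_id y)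
    have h := MeasureTheory.integral_Iic_of_hasDerivAt_of_tendsto'
      (f := fun z => φ z - z) (f' := fun y => deriv φ y - 1) hder hiφ.integrableOn hlm
    rw [h]
    ring
  have hT0 : Tendsto (fun x => ∫ y in Set.Iic x, f₀ y) atTop (nhds 0) := by
    have : (fun x => ∫ y in Set.Iic x, f₀ y) = fun x => φ₀ x - x := by
      funext x; exact hFTC φ₀ h0 hi0 hlim0m x
    rw [this]; exact hlim0p
  have hT1 : Tendsto (fun x => ∫ y in Set.Iic x, f₁ y) atTop (nhds 0) := by
    have : (fun x => ∫ y in Set.Iic x, f₁ y) = fun x => φ₁ x - x := by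
      funext x; exact hFTC φ₁ h1 hi1 hlim1m x
    rw [this]; exact hlim1p
  have hTg : Tendsto (fun x => ∫ y in Set.Iic x, g y) atTop (nhds (∫ y : ℝ, g y)) := by
    have hcov : (⋃ x : ℝ, Set.Iic x) = Set.univ := by
      ext y; simp only [Set.mem_iUnion, Set.mem_Iic, Set.mem_univ, iff_true]
      exact ⟨y, le_rfl⟩
    have := MeasureTheory.tendsto_setIntegral_of_monotone (μ := volume) (f := g)
      (s := fun x : ℝ => Set.Iic x) (fun x => measurableSet_Iic)
      (fun a b hab => Set.Iic_subset_Iic.mpr hab) (by rw [hcov]; exact hgi.integrableOn)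
    rwa [hcov, MeasureTheory.setIntegral_univ] at this
  -- assemble
  have hmain : Tendsto (fun x => (1 - t) * (∫ y in Set.Iic x, f₀ y)
      + t * (∫ y in Set.Iic x, f₁ y) + (t ^ 2 - t) * ∫ y in Set.Iic x, g y) atTop
      (nhds ((t ^ 2 - t) * ∫ y : ℝ, g y)) := by
    have := ((hT0.const_mul (1 - t)).add (hT1.const_mul t)).add (hTg.const_mul (t ^ 2 - t))
    simpa using this
  refine hmain.congr fun x => ?_
  rw [hint x]
  ring
end
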